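/- arXiv:2107.10819 — 4 statements merged into one kernel-verified Lean document; each statement's English description precedes it below -/
import Mathlib

section
/- Let A be a finite nonempty set of positive integers and let x ∈ A. Then the number of SPILs of A in which x or −x occurs as the first entry of one of the signed lists equals the number of SPILs of (A∖{x}) ∪ {0}. (Equivalently, there is a bijection between these two finite sets.) -/
open scoped BigOperators

noncomputable section

/-- A signed list on the finite set `A` of positive integers: a nonempty finite sequence of
nonzero integers whose absolute values are pairwise distinct and lie in `A`, and whose last
entry is positive. -/
def IsSignedList (A : Finset ℕ) (l : List ℤ) : Prop :=
  l ≠ [] ∧ (∀ x ∈ l, x ≠ 0 ∧ x.natAbs ∈ A) ∧ (l.map Int.natAbs).Nodup ∧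
    0 < l.getLastD 0

/-- `P` is a signed partition into lists (SPIL) of the finite set `A` of positive integers. -/
def IsSPIL (A : Finset ℕ) (P : Finset (List ℤ)) : Prop :=
  (∀ l ∈ P, IsSignedList A l) ∧
  (∀ l ∈ P, ∀ l' ∈ P, l ≠ l' →
    Disjoint (l.map Int.natAbs).toFinset (l'.map Int.natAbs).toFinset) ∧
  P.biUnion (fun l => (l.map Int.natAbs).toFinset) = A

/-- `|SPIL(ℓ)|`: the number of signed partitions into lists of `{1, …, ℓ}`. -/
def spilCount (ℓ : ℕ) : ℕ := Set.ncard {P : Finset (List ℤ) | IsSPIL (Finset.Icc 1 ℓ) P}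

/-- A signed list on a finite set `A` of nonnegative integers (thought of as `A' ∪ {0}`):
a nonempty finite sequence of integers whose absolute values are pairwise distinct and lie
in `A`, whose last entry is nonnegative, and in which `0`, if it occurs, is the last entry. -/
def IsSignedList0 (A : Finset ℕ) (l : List ℤ) : Prop :=
  l ≠ [] ∧ (∀ x ∈ l, x.natAbs ∈ A) ∧ (l.map Int.natAbs).Nodup ∧
    0 ≤ l.getLastD (-1) ∧ ((0 : ℤ) ∈ l → l.getLastD (-1) = 0)

/-- `P` is a signed partition into lists of the finite set `A` (meant to contain `0`). -/
def IsSPIL0 (A : Finset ℕ) (P : Finset (List ℤ)) : Prop :=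
  (∀ l ∈ P, IsSignedList0 A l) ∧
  (∀ l ∈ P, ∀ l' ∈ P, l ≠ l' →
    Disjoint (l.map Int.natAbs).toFinset (l'.map Int.natAbs).toFinset) ∧
  P.biUnion (fun l => (l.map Int.natAbs).toFinset) = A

/-- `|SPIL(ℓ ∪ {0})|`: the number of signed partitions into lists of `{0, 1, …, ℓ}`. -/
def spil0Count (ℓ : ℕ) : ℕ :=
  Set.ncard {P : Finset (List ℤ) | IsSPIL0 (Finset.range (ℓ + 1)) P}

def sTr (l : List ℤ) : List ℤ :=
  if l.tail = [] then [0]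
  else l.tail.dropLast ++ [l.headI.sign * l.tail.getLastD 0, 0]

def sItr (x : ℕ) (m : List ℤ) : List ℤ :=
  if m.dropLast = [] then [(x : ℤ)]
  else (m.dropLast.getLastD 0).sign * x ::
    (m.dropLast.dropLast ++ [((m.dropLast.getLastD 0).natAbs : ℤ)])

lemma sTr_singleton (a : ℤ) : sTr [a] = [0] := by simp [sTr]

lemma sTr_cc (a c : ℤ) (s : List ℤ) :
    sTr (a :: (s ++ [c])) = s ++ [a.sign * c, 0] := by
  simp [sTr, List.dropLast_concat, List.getLastD_concat]

lemma sItr_zero (x : ℕ) : sItr x [(0:ℤ)] = [(x : ℤ)] := by simp [sItr]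

lemma sItr_cc (x : ℕ) (b : ℤ) (u : List ℤ) :
    sItr x ((u ++ [b]) ++ [(0:ℤ)]) = b.sign * x :: (u ++ [(b.natAbs : ℤ)]) := by
  simp [sItr, List.dropLast_concat, List.getLastD_concat]

lemma sign_cases (a : ℤ) (h : a ≠ 0) : a.sign = 1 ∨ a.sign = -1 := by
  rcases lt_trichotomy a 0 with h1 | h1 | h1
  · exact Or.inr (Int.sign_eq_neg_one_of_neg h1)
  · exact absurd h1 h
  · exact Or.inl (Int.sign_eq_one_of_pos h1)

lemma natAbs_sign_mul (a b : ℤ) (h : a ≠ 0) : (a.sign * b).natAbs = b.natAbs := by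
  rw [Int.natAbs_mul]
  rcases sign_cases a h with h1 | h1 <;> simp [h1]

lemma sTr_good (A : Finset ℕ) (x : ℕ) (l : List ℤ) (hl : IsSignedList A l)
    (hhead : l.head? = some (x : ℤ) ∨ l.head? = some (-(x : ℤ))) :
    IsSignedList0 (insert 0 (A.erase x)) (sTr l) ∧
    (0 : ℤ) ∈ sTr l ∧
    (∀ y ∈ (sTr l).map Int.natAbs, y = 0 ∨ y ∈ l.map Int.natAbs) ∧
    (∀ y ∈ l.map Int.natAbs, y ≠ x → y ∈ (sTr l).map Int.natAbs) ∧
    sItr x (sTr l) = l := by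
  obtain ⟨hne, hmem, hnodup, hlast⟩ := hl
  obtain ⟨a, t, rfl⟩ := List.exists_cons_of_ne_nil hne
  have ha0 : a ≠ 0 := (hmem a (by simp)).1
  have haabs : a.natAbs = x := by
    rcases hhead with h | h <;> simp_all
  rcases t.eq_nil_or_concat with rfl | ⟨s, c, hsc⟩
  · -- l = [a]
    have hax : a = (x : ℤ) := by
      have : (0:ℤ) < a := by simpa using hlast
      rw [← haabs]; exact (Int.natAbs_of_nonneg this.le).symm
    rw [sTr_singleton]
    refine ⟨⟨by simp, by simp, by simp, by simp, by simp⟩, by simp, ?_, ?_, ?_⟩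
    · intro y hy; simp_all
    · intro y hy hyx; simp_all
    · rw [sItr_zero, hax]
  · rw [List.concat_eq_append] at hsc
    subst hsc
    have hc : (0:ℤ) < c := by
      have : (a :: (s ++ [c])).getLastD 0 = c := by
        rw [show a :: (s ++ [c]) = (a :: s) ++ [c] by simp]
        exact List.getLastD_concat
      rwa [this] at hlast
    have hc0 : c ≠ 0 := hc.ne'
    rw [sTr_cc]
    -- abs list of sTr l
    have habs : (s ++ [a.sign * c, 0]).map Int.natAbs
        = (s.map Int.natAbs ++ [c.natAbs]) ++ [0] := by
      simp [natAbs_sign_mul a c ha0]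
    have hlabs : (a :: (s ++ [c])).map Int.natAbs
        = x :: (s.map Int.natAbs ++ [c.natAbs]) := by simp [haabs]
    have hnd : (x :: (s.map Int.natAbs ++ [c.natAbs])).Nodup := by
      rwa [hlabs] at hnodup
    have hxnot : x ∉ s.map Int.natAbs ++ [c.natAbs] := (List.nodup_cons.mp hnd).1
    have hnd' : (s.map Int.natAbs ++ [c.natAbs]).Nodup := (List.nodup_cons.mp hnd).2
    have hz : ∀ y ∈ s.map Int.natAbs ++ [c.natAbs], y ≠ 0 := by
      intro y hy
      rcases List.mem_append.mp hy with hy | hy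
      · obtain ⟨z, hz, rfl⟩ := List.mem_map.mp hy
        have := (hmem z (by simp [hz])).1
        simpa [Int.natAbs_eq_zero] using this
      · simp at hy; subst hy
        simpa [Int.natAbs_eq_zero] using hc0
    have hzA : ∀ y ∈ s.map Int.natAbs ++ [c.natAbs], y ∈ A := by
      intro y hy
      rcases List.mem_append.mp hy with hy | hy
      · obtain ⟨z, hz, rfl⟩ := List.mem_map.mp hy
        exact (hmem z (by simp [hz])).2
      · simp at hy; subst hy
        exact (hmem c (by simp)).2
    refine ⟨⟨by simp, ?_, ?_, ?_, ?_⟩, by simp, ?_, ?_, ?_⟩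
    · -- membership
      intro y hy
      have : y.natAbs ∈ (s ++ [a.sign * c, 0]).map Int.natAbs := List.mem_map_of_mem hy
      rw [habs] at this
      rcases List.mem_append.mp this with h | h
      · have hyx : y.natAbs ≠ x := fun h' => hxnot (h' ▸ h)
        exact Finset.mem_insert_of_mem (Finset.mem_erase.mpr ⟨hyx, hzA _ h⟩)
      · simp at h; simp [h]
    · -- nodup
      rw [habs]
      refine List.Nodup.append hnd' (by simp) ?_
      intro y h1 h2
      simp at h2; subst h2
      exact hz _ h1 rfl
    · -- getLastD ≥ 0
      rw [show s ++ [a.sign * c, 0] = (s ++ [a.sign * c]) ++ [0] by simp,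
        List.getLastD_concat]
    · intro _
      rw [show s ++ [a.sign * c, 0] = (s ++ [a.sign * c]) ++ [0] by simp,
        List.getLastD_concat]
    · -- forward containment
      intro y hy
      rw [habs] at hy
      rcases List.mem_append.mp hy with h | h
      · right; rw [hlabs]; exact List.mem_cons_of_mem _ h
      · left; simpa using h
    · -- backward
      intro y hy hyx
      rw [hlabs] at hy
      rcases List.mem_cons.mp hy with rfl | hy
      · exact absurd rfl hyx
      · rw [habs]; exact List.mem_append.mpr (Or.inl hy)
    · -- round trip
      rw [show s ++ [a.sign * c, 0] = (s ++ [a.sign * c]) ++ [0] by simp,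
        sItr_cc]
      have hb0 : a.sign * c ≠ 0 := by
        rcases sign_cases a ha0 with h | h <;> simp [h, hc0]
      have h1 : (a.sign * c).sign = a.sign := by
        rw [Int.sign_mul, Int.sign_eq_one_of_pos hc, mul_one, Int.sign_sign]
      have h2 : ((a.sign * c).natAbs : ℤ) = c := by
        rw [natAbs_sign_mul a c ha0, Int.natAbs_of_nonneg hc.le]
      rw [h1, h2, ← haabs, Int.sign_mul_natAbs]

lemma sItr_good (A : Finset ℕ) (x : ℕ) (hx : x ∈ A) (hx0 : 0 < x) (m : List ℤ)
    (hm : IsSignedList0 (insert 0 (A.erase x)) m) (h0 : (0 : ℤ) ∈ m) :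
    IsSignedList A (sItr x m) ∧
    x ∈ (sItr x m).map Int.natAbs ∧
    ((sItr x m).head? = some (x : ℤ) ∨ (sItr x m).head? = some (-(x : ℤ))) ∧
    (∀ y ∈ m.map Int.natAbs, y ≠ 0 → y ∈ (sItr x m).map Int.natAbs) ∧
    (∀ y ∈ (sItr x m).map Int.natAbs, y = x ∨ y ∈ m.map Int.natAbs) ∧
    sTr (sItr x m) = m := by
  obtain ⟨hne, hmem, hnodup, hlastge, hlastz⟩ := hm
  have hxz : (x : ℤ) ≠ 0 := by exact_mod_cast hx0.ne'
  -- m ends with 0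
  obtain ⟨w, e, hwe⟩ := m.eq_nil_or_concat.resolve_left hne
  rw [List.concat_eq_append] at hwe
  subst hwe
  have he : e = 0 := by
    have h1 := hlastz h0
    rwa [List.getLastD_concat] at h1
  subst he
  -- entries of w are nonzero
  have hwabs : (w ++ [(0:ℤ)]).map Int.natAbs = w.map Int.natAbs ++ [0] := by simp
  have hwz : ∀ y ∈ w, y ≠ 0 := by
    intro y hy hy0
    subst hy0
    rw [hwabs] at hnodup
    have := (List.nodup_append'.mp hnodup).2.2
    exact this (List.mem_map.mpr ⟨0, hy, rfl⟩) (by simp)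
  have hwA : ∀ y ∈ w, y.natAbs ∈ A ∧ y.natAbs ≠ x := by
    intro y hy
    have h1 := hmem y (by simp [hy])
    rcases Finset.mem_insert.mp h1 with h | h
    · exact absurd (Int.natAbs_eq_zero.mp h) (hwz y hy)
    · exact ⟨(Finset.mem_erase.mp h).2, (Finset.mem_erase.mp h).1⟩
  rcases w.eq_nil_or_concat with rfl | ⟨u, b, hub⟩
  · -- m = [0]
    simp only [List.nil_append] at h0 hne hmem hnodup hlastge hlastz ⊢
    rw [sItr_zero]
    refine ⟨⟨by simp, ?_, by simp, by simp; exact_mod_cast hx0⟩, by simp, by simp, ?_, ?_, ?_⟩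
    · intro y hy; simp at hy; subst hy; exact ⟨hxz, by simpa using hx⟩
    · intro y hy hy0; simp at hy; exact absurd hy hy0
    · intro y hy; simp at hy; simp [hy]
    · rw [sTr_singleton]
  · rw [List.concat_eq_append] at hub
    subst hub
    have hb0 : b ≠ 0 := hwz b (by simp)
    rw [sItr_cc]
    have hhd : (b.sign * (x:ℤ)).natAbs = x := by rw [natAbs_sign_mul b _ hb0]; simp
    have hhd0 : b.sign * (x:ℤ) ≠ 0 := by
      rcases sign_cases b hb0 with h | h <;> simp [h, hxz, hx0.ne']
    have habs : (b.sign * (x:ℤ) :: (u ++ [(b.natAbs : ℤ)])).map Int.natAbs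
        = x :: (u.map Int.natAbs ++ [b.natAbs]) := by
      simp [hhd, Int.natAbs_abs]
    have hmabs : ((u ++ [b]) ++ [(0:ℤ)]).map Int.natAbs
        = (u.map Int.natAbs ++ [b.natAbs]) ++ [0] := by simp
    have hnd : (u.map Int.natAbs ++ [b.natAbs]).Nodup := by
      rw [hmabs] at hnodup
      exact (List.nodup_append'.mp hnodup).1
    have hxnot : x ∉ u.map Int.natAbs ++ [b.natAbs] := by
      intro hmemx
      have : ∃ y ∈ u ++ [b], y.natAbs = x := by
        rcases List.mem_append.mp hmemx with h | h
        · obtain ⟨z, hz1, hz2⟩ := List.mem_map.mp h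
          exact ⟨z, by simp [hz1], hz2⟩
        · simp at h; exact ⟨b, by simp, h.symm⟩
      obtain ⟨y, hy1, hy2⟩ := this
      exact (hwA y hy1).2 hy2
    refine ⟨⟨by simp, ?_, ?_, ?_⟩, ?_, ?_, ?_, ?_, ?_⟩
    · -- entries nonzero & in A
      intro y hy
      rcases List.mem_cons.mp hy with rfl | hy
      · exact ⟨hhd0, by rw [hhd]; exact hx⟩
      · rcases List.mem_append.mp hy with h | h
        · exact ⟨hwz y (by simp [h]), ((hwA y (by simp [h])).1)⟩
        · simp at h; subst h
          refine ⟨by simpa [Int.natAbs_eq_zero] using hb0, ?_⟩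
          simpa [Int.natAbs_abs] using (hwA b (by simp)).1
    · -- nodup
      rw [habs]
      exact List.nodup_cons.mpr ⟨hxnot, hnd⟩
    · -- last positive
      rw [show b.sign * (x:ℤ) :: (u ++ [(b.natAbs : ℤ)])
          = (b.sign * (x:ℤ) :: u) ++ [(b.natAbs : ℤ)] by simp,
        List.getLastD_concat]
      exact_mod_cast Int.natAbs_pos.mpr hb0
    · -- x in abs
      rw [habs]; simp
    · -- head
      rcases sign_cases b hb0 with h | h
      · left; simp [h]
      · right; simp [h]
    · -- y ∈ abs m, y ≠ 0 → y ∈ abs sItr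
      intro y hy hy0
      rw [hmabs] at hy
      rcases List.mem_append.mp hy with h | h
      · rw [habs]; exact List.mem_cons_of_mem _ h
      · simp at h; exact absurd h hy0
    · -- y ∈ abs sItr → y = x ∨ y ∈ abs m
      intro y hy
      rw [habs] at hy
      rcases List.mem_cons.mp hy with rfl | h
      · exact Or.inl rfl
      · right; rw [hmabs]; exact List.mem_append.mpr (Or.inl h)
    · -- round trip
      rw [sTr_cc]
      have h1 : (b.sign * (x:ℤ)).sign = b.sign := by
        rw [Int.sign_mul, Int.sign_sign,
          Int.sign_eq_one_of_pos (a := (x:ℤ)) (by exact_mod_cast hx0), mul_one]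
      rw [h1, Int.sign_mul_natAbs]
      simp

lemma nonspecial_good (A : Finset ℕ) (x : ℕ) (l : List ℤ) (hl : IsSignedList A l)
    (hxl : x ∉ l.map Int.natAbs) : IsSignedList0 (insert 0 (A.erase x)) l := by
  obtain ⟨hne, hmem, hnodup, hlast⟩ := hl
  obtain ⟨w, c, hwc⟩ := l.eq_nil_or_concat.resolve_left hne
  rw [List.concat_eq_append] at hwc
  refine ⟨hne, ?_, hnodup, ?_, ?_⟩
  · intro y hy
    refine Finset.mem_insert_of_mem (Finset.mem_erase.mpr ⟨?_, (hmem y hy).2⟩)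
    intro h
    exact hxl (h ▸ List.mem_map_of_mem (f := Int.natAbs) hy)
  · subst hwc
    rw [List.getLastD_concat]
    have := hlast
    rw [List.getLastD_concat] at this
    exact this.le
  · intro h0
    exact absurd rfl (hmem 0 h0).1

lemma nonzero_good (A : Finset ℕ) (x : ℕ) (m : List ℤ)
    (hm : IsSignedList0 (insert 0 (A.erase x)) m) (h0 : (0 : ℤ) ∉ m) :
    IsSignedList A m := by
  obtain ⟨hne, hmem, hnodup, hlastge, _⟩ := hm
  obtain ⟨w, c, hwc⟩ := m.eq_nil_or_concat.resolve_left hne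
  rw [List.concat_eq_append] at hwc
  have hz : ∀ y ∈ m, y ≠ 0 := fun y hy h => h0 (h ▸ hy)
  refine ⟨hne, ?_, hnodup, ?_⟩
  · intro y hy
    refine ⟨hz y hy, ?_⟩
    rcases Finset.mem_insert.mp (hmem y hy) with h | h
    · exact absurd (Int.natAbs_eq_zero.mp h) (hz y hy)
    · exact (Finset.mem_erase.mp h).2
  · subst hwc
    rw [List.getLastD_concat]
    rw [List.getLastD_concat] at hlastge
    exact lt_of_le_of_ne hlastge (fun h => hz c (by simp) h.symm)

def sF (x : ℕ) (l : List ℤ) : List ℤ :=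
  if l.head? = some (x : ℤ) ∨ l.head? = some (-(x : ℤ)) then sTr l else l

def sG (x : ℕ) (m : List ℤ) : List ℤ :=
  if (0 : ℤ) ∈ m then sItr x m else m

/-- For a finite nonempty set `A` of positive integers and `x ∈ A`,
the number of SPILs of `A` in which `x` or `-x` occurs as the first entry of one of the
signed lists equals the number of SPILs of `(A \ {x}) ∪ {0}`. -/
theorem statement3 (A : Finset ℕ) (hA : A.Nonempty) (hpos : ∀ a ∈ A, 0 < a)
    (x : ℕ) (hx : x ∈ A) :
    Set.ncard {P : Finset (List ℤ) | IsSPIL A P ∧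
        ∃ l ∈ P, l.head? = some (x : ℤ) ∨ l.head? = some (-(x : ℤ))} =
      Set.ncard {P : Finset (List ℤ) | IsSPIL0 (insert 0 (A.erase x)) P} := by
  classical
  have hx0 : 0 < x := hpos x hx
  have hxz : (x : ℤ) ≠ 0 := by exact_mod_cast hx0.ne'
  have hxA' : x ∉ insert 0 (A.erase x) := by simp [hx0.ne']
  set S := {P : Finset (List ℤ) | IsSPIL A P ∧
      ∃ l ∈ P, l.head? = some (x : ℤ) ∨ l.head? = some (-(x : ℤ))} with hSdef
  set T := {P : Finset (List ℤ) | IsSPIL0 (insert 0 (A.erase x)) P} with hTdef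
  -- generic facts
  have hx_in : ∀ l : List ℤ, (l.head? = some (x:ℤ) ∨ l.head? = some (-(x:ℤ))) →
      x ∈ l.map Int.natAbs := by
    intro l hs
    rcases hs with h | h
    · have : (x:ℤ) ∈ l := List.mem_of_mem_head? (Option.mem_def.mpr h)
      exact List.mem_map.mpr ⟨(x:ℤ), this, by simp⟩
    · have : (-(x:ℤ)) ∈ l := List.mem_of_mem_head? (Option.mem_def.mpr h)
      exact List.mem_map.mpr ⟨(-(x:ℤ)), this, by simp⟩
  -- MapsTo forward
  have hmapsF : Set.MapsTo (fun P : Finset (List ℤ) => P.image (sF x)) S T := by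
    intro P hP
    obtain ⟨⟨hall, hdisj, hun⟩, l₀, hl₀P, hl₀s⟩ := hP
    have h0_notin : ∀ l ∈ P, (0:ℤ) ∉ l := fun l hl h => ((hall l hl).2.1 0 h).1 rfl
    have huniq : ∀ l ∈ P, (l.head? = some (x:ℤ) ∨ l.head? = some (-(x:ℤ))) → l = l₀ := by
      intro l hl hs
      by_contra hne
      exact Finset.disjoint_left.mp (hdisj l hl l₀ hl₀P hne)
        (List.mem_toFinset.mpr (hx_in l hs)) (List.mem_toFinset.mpr (hx_in l₀ hl₀s))
    have hx_notin : ∀ l ∈ P, ¬(l.head? = some (x:ℤ) ∨ l.head? = some (-(x:ℤ))) →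
        x ∉ l.map Int.natAbs := by
      intro l hl hns hmemx
      have hne : l ≠ l₀ := fun h => hns (h ▸ hl₀s)
      exact Finset.disjoint_left.mp (hdisj l hl l₀ hl₀P hne)
        (List.mem_toFinset.mpr hmemx) (List.mem_toFinset.mpr (hx_in l₀ hl₀s))
    have hall0 : ∀ m ∈ P.image (sF x), IsSignedList0 (insert 0 (A.erase x)) m := by
      intro m hm
      obtain ⟨l, hlP, rfl⟩ := Finset.mem_image.mp hm
      by_cases hs : (l.head? = some (x:ℤ) ∨ l.head? = some (-(x:ℤ)))
      · rw [sF, if_pos hs]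
        exact (sTr_good A x l (hall l hlP) hs).1
      · rw [sF, if_neg hs]
        exact nonspecial_good A x l (hall l hlP) (hx_notin l hlP hs)
    have char : ∀ l ∈ P, ∀ y, y ∈ (sF x l).map Int.natAbs →
        y ∈ l.map Int.natAbs ∨ (y = 0 ∧ (l.head? = some (x:ℤ) ∨ l.head? = some (-(x:ℤ)))) := by
      intro l hl y hy
      by_cases hs : (l.head? = some (x:ℤ) ∨ l.head? = some (-(x:ℤ)))
      · rw [sF, if_pos hs] at hy
        rcases (sTr_good A x l (hall l hl) hs).2.2.1 y hy with h | h
        · exact Or.inr ⟨h, hs⟩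
        · exact Or.inl h
      · rw [sF, if_neg hs] at hy
        exact Or.inl hy
    have hzero_notin_abs : ∀ l ∈ P, (0:ℕ) ∉ l.map Int.natAbs := by
      intro l hl h
      obtain ⟨z, hz, hz0⟩ := List.mem_map.mp h
      exact h0_notin l hl (Int.natAbs_eq_zero.mp hz0 ▸ hz)
    refine ⟨hall0, ?_, ?_⟩
    · -- disjointness
      intro m hm m' hm' hmm'
      obtain ⟨l, hlP, rfl⟩ := Finset.mem_image.mp hm
      obtain ⟨l', hl'P, rfl⟩ := Finset.mem_image.mp hm'
      have hll' : l ≠ l' := fun h => hmm' (h ▸ rfl)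
      rw [Finset.disjoint_left]
      intro y hy hy'
      rw [List.mem_toFinset] at hy hy'
      rcases char l hlP y hy with h1 | ⟨rfl, hs⟩
      · rcases char l' hl'P y hy' with h2 | ⟨rfl, hs'⟩
        · exact Finset.disjoint_left.mp (hdisj l hlP l' hl'P hll')
            (List.mem_toFinset.mpr h1) (List.mem_toFinset.mpr h2)
        · exact hzero_notin_abs l hlP h1
      · rcases char l' hl'P 0 hy' with h2 | ⟨_, hs'⟩
        · exact hzero_notin_abs l' hl'P h2
        · exact hll' ((huniq l hlP hs).trans (huniq l' hl'P hs').symm)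
    · -- biUnion
      ext y
      simp only [Finset.mem_biUnion, List.mem_toFinset]
      constructor
      · rintro ⟨m, hm, hy⟩
        obtain ⟨z, hz, rfl⟩ := List.mem_map.mp hy
        exact (hall0 m hm).2.1 z hz
      · intro hyA'
        rcases Finset.mem_insert.mp hyA' with rfl | hy
        · refine ⟨sF x l₀, Finset.mem_image_of_mem _ hl₀P, ?_⟩
          rw [sF, if_pos hl₀s]
          exact List.mem_map.mpr ⟨0, (sTr_good A x l₀ (hall l₀ hl₀P) hl₀s).2.1, rfl⟩
        · obtain ⟨hyx, hyA⟩ := Finset.mem_erase.mp hy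
          have : y ∈ P.biUnion (fun l => (l.map Int.natAbs).toFinset) := hun ▸ hyA
          obtain ⟨l, hlP, hyl⟩ := Finset.mem_biUnion.mp this
          rw [List.mem_toFinset] at hyl
          refine ⟨sF x l, Finset.mem_image_of_mem _ hlP, ?_⟩
          by_cases hs : (l.head? = some (x:ℤ) ∨ l.head? = some (-(x:ℤ)))
          · rw [sF, if_pos hs]
            exact (sTr_good A x l (hall l hlP) hs).2.2.2.1 y hyl hyx
          · rw [sF, if_neg hs]
            exact hyl
  -- MapsTo backward
  have hmapsG : Set.MapsTo (fun P : Finset (List ℤ) => P.image (sG x)) T S := by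
    intro Q hQ
    obtain ⟨hall, hdisj, hun⟩ := hQ
    obtain ⟨m₀, hm₀Q, hm₀0⟩ : ∃ m ∈ Q, (0:ℤ) ∈ m := by
      have h0A' : (0:ℕ) ∈ Q.biUnion (fun l => (l.map Int.natAbs).toFinset) := by
        rw [hun]; simp
      obtain ⟨m, hm, h⟩ := Finset.mem_biUnion.mp h0A'
      rw [List.mem_toFinset] at h
      obtain ⟨z, hz, hz0⟩ := List.mem_map.mp h
      exact ⟨m, hm, Int.natAbs_eq_zero.mp hz0 ▸ hz⟩
    have huniq0 : ∀ m ∈ Q, (0:ℤ) ∈ m → m = m₀ := by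
      intro m hm h0
      by_contra hne
      exact Finset.disjoint_left.mp (hdisj m hm m₀ hm₀Q hne)
        (List.mem_toFinset.mpr (List.mem_map.mpr ⟨0, h0, rfl⟩))
        (List.mem_toFinset.mpr (List.mem_map.mpr ⟨0, hm₀0, rfl⟩))
    have habs' : ∀ m ∈ Q, x ∉ m.map Int.natAbs := by
      intro m hm h
      obtain ⟨z, hz, hz0⟩ := List.mem_map.mp h
      exact hxA' (hz0 ▸ (hall m hm).2.1 z hz)
    have hall' : ∀ m' ∈ Q.image (sG x), IsSignedList A m' := by
      intro m' hm'
      obtain ⟨m, hm, rfl⟩ := Finset.mem_image.mp hm'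
      by_cases h0 : (0:ℤ) ∈ m
      · rw [sG, if_pos h0]
        exact (sItr_good A x hx hx0 m (hall m hm) h0).1
      · rw [sG, if_neg h0]
        exact nonzero_good A x m (hall m hm) h0
    have char : ∀ m ∈ Q, ∀ y, y ∈ (sG x m).map Int.natAbs →
        y ∈ m.map Int.natAbs ∨ (y = x ∧ (0:ℤ) ∈ m) := by
      intro m hm y hy
      by_cases h0 : (0:ℤ) ∈ m
      · rw [sG, if_pos h0] at hy
        rcases (sItr_good A x hx hx0 m (hall m hm) h0).2.2.2.2.1 y hy with h | h
        · exact Or.inr ⟨h, h0⟩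
        · exact Or.inl h
      · rw [sG, if_neg h0] at hy
        exact Or.inl hy
    refine ⟨⟨hall', ?_, ?_⟩, ?_⟩
    · -- disjointness
      intro m hm m' hm' hmm'
      obtain ⟨l, hlQ, rfl⟩ := Finset.mem_image.mp hm
      obtain ⟨l', hl'Q, rfl⟩ := Finset.mem_image.mp hm'
      have hll' : l ≠ l' := fun h => hmm' (h ▸ rfl)
      rw [Finset.disjoint_left]
      intro y hy hy'
      rw [List.mem_toFinset] at hy hy'
      rcases char l hlQ y hy with h1 | ⟨hyx1, h0⟩
      · rcases char l' hl'Q y hy' with h2 | ⟨hyx2, h0'⟩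
        · exact Finset.disjoint_left.mp (hdisj l hlQ l' hl'Q hll')
            (List.mem_toFinset.mpr h1) (List.mem_toFinset.mpr h2)
        · exact habs' l hlQ (hyx2 ▸ h1)
      · rcases char l' hl'Q y hy' with h2 | ⟨_, h0'⟩
        · exact habs' l' hl'Q (hyx1 ▸ h2)
        · exact hll' ((huniq0 l hlQ h0).trans (huniq0 l' hl'Q h0').symm)
    · -- biUnion
      ext y
      simp only [Finset.mem_biUnion, List.mem_toFinset]
      constructor
      · rintro ⟨m, hm, hy⟩
        obtain ⟨z, hz, rfl⟩ := List.mem_map.mp hy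
        exact ((hall' m hm).2.1 z hz).2
      · intro hyA
        by_cases hyx : y = x
        · refine ⟨sG x m₀, Finset.mem_image_of_mem _ hm₀Q, ?_⟩
          rw [hyx, sG, if_pos hm₀0]
          exact (sItr_good A x hx hx0 m₀ (hall m₀ hm₀Q) hm₀0).2.1
        · have hy0 : y ≠ 0 := (hpos y hyA).ne'
          have hyA' : y ∈ Q.biUnion (fun l => (l.map Int.natAbs).toFinset) := by
            rw [hun]
            exact Finset.mem_insert_of_mem (Finset.mem_erase.mpr ⟨hyx, hyA⟩)
          obtain ⟨m, hmQ, hym⟩ := Finset.mem_biUnion.mp hyA'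
          rw [List.mem_toFinset] at hym
          refine ⟨sG x m, Finset.mem_image_of_mem _ hmQ, ?_⟩
          by_cases h0 : (0:ℤ) ∈ m
          · rw [sG, if_pos h0]
            exact (sItr_good A x hx hx0 m (hall m hmQ) h0).2.2.2.1 y hym hy0
          · rw [sG, if_neg h0]
            exact hym
    · -- existence of special list
      refine ⟨sG x m₀, Finset.mem_image_of_mem _ hm₀Q, ?_⟩
      rw [sG, if_pos hm₀0]
      exact (sItr_good A x hx hx0 m₀ (hall m₀ hm₀Q) hm₀0).2.2.1
  -- left inverse
  have hGF : Set.LeftInvOn (fun P : Finset (List ℤ) => P.image (sG x))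
      (fun P : Finset (List ℤ) => P.image (sF x)) S := by
    intro P hP
    obtain ⟨⟨hall, hdisj, hun⟩, l₀, hl₀P, hl₀s⟩ := hP
    simp only
    rw [Finset.image_image]
    have hfix : ∀ l ∈ P, (sG x ∘ sF x) l = l := by
      intro l hlP
      simp only [Function.comp_apply]
      by_cases hs : (l.head? = some (x:ℤ) ∨ l.head? = some (-(x:ℤ)))
      · obtain ⟨_, h0, _, _, hrt⟩ := sTr_good A x l (hall l hlP) hs
        rw [sF, if_pos hs, sG, if_pos h0]
        exact hrt
      · have h0 : (0:ℤ) ∉ l := fun h => ((hall l hlP).2.1 0 h).1 rfl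
        rw [sF, if_neg hs, sG, if_neg h0]
    calc P.image (sG x ∘ sF x) = P.image id := Finset.image_congr (fun l hl => hfix l hl)
      _ = P := Finset.image_id
  -- right inverse
  have hFG : Set.RightInvOn (fun P : Finset (List ℤ) => P.image (sG x))
      (fun P : Finset (List ℤ) => P.image (sF x)) T := by
    intro Q hQ
    obtain ⟨hall, hdisj, hun⟩ := hQ
    simp only
    rw [Finset.image_image]
    have hfix : ∀ m ∈ Q, (sF x ∘ sG x) m = m := by
      intro m hmQ
      simp only [Function.comp_apply]
      by_cases h0 : (0:ℤ) ∈ m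
      · obtain ⟨_, _, hhead, _, _, hrt⟩ := sItr_good A x hx hx0 m (hall m hmQ) h0
        rw [sG, if_pos h0, sF, if_pos hhead]
        exact hrt
      · have hs : ¬(m.head? = some (x:ℤ) ∨ m.head? = some (-(x:ℤ))) := by
          intro hs
          have hxm := hx_in m hs
          obtain ⟨z, hz, hz0⟩ := List.mem_map.mp hxm
          exact hxA' (hz0 ▸ (hall m hmQ).2.1 z hz)
        rw [sG, if_neg h0, sF, if_neg hs]
    calc Q.image (sF x ∘ sG x) = Q.image id := Finset.image_congr (fun m hm => hfix m hm)
      _ = Q := Finset.image_id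
  have hbij : Set.BijOn (fun P : Finset (List ℤ) => P.image (sF x)) S T :=
    Set.InvOn.bijOn ⟨hGF, hFG⟩ hmapsF hmapsG
  rw [← hbij.image_eq, Set.ncard_image_of_injOn hbij.injOn]

end
end

section
/- Define f : ℕ → ℚ by f(0) = 1 and f(n) = |PIL(n)| for n ≥ 1. Then in the ring ℚ[[X]] of formal power series, ∑_{n≥0} (f(n)/n!)·Xⁿ = exp(X·(1−X)^{−1}), where (1−X)^{−1} is the inverse of the unit 1−X in ℚ[[X]] and exp(u) denotes the substitution of the power series u (which has zero constant term) into the exponential series ∑_{k≥0} X^k/k!. -/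
open scoped BigOperators

noncomputable section
open Finset PowerSeries
attribute [local instance] Classical.propDecidable


/-- `P` is a partition of the finite set `A` into (nonempty, duplicate-free) lists:
every element of `A` appears exactly once in exactly one of the lists of `P`. -/
def IsPIL (A : Finset ℕ) (P : Finset (List ℕ)) : Prop :=
  (∀ l ∈ P, l.Nodup ∧ l ≠ []) ∧
  (∀ l ∈ P, ∀ l' ∈ P, l ≠ l' → Disjoint l.toFinset l'.toFinset) ∧
  P.biUnion (fun l => l.toFinset) = A

/-- `|PIL(n)|`: the number of partitions of `{1, …, n}` into lists. -/
def pilCount (n : ℕ) : ℕ := Set.ncard {P : Finset (List ℕ) | IsPIL (Finset.Icc 1 n) P}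

/-- Substitution of a power series `u` with zero constant term into the exponential series
`∑ X^k / k!` (coefficientwise: the `n`-th coefficient is `∑_{k ≤ n} coeff n (u^k) / k!`,
which agrees with the substitution since `coeff n (u^k) = 0` for `k > n`). -/
def expSubst (u : PowerSeries ℚ) : PowerSeries ℚ :=
  PowerSeries.mk fun n =>
    ∑ k ∈ Finset.range (n + 1), (PowerSeries.coeff (R := ℚ) n (u ^ k)) / (k.factorial : ℚ)

/-- `f(0) = 1` and `f(n) = |PIL(n)|` for `n ≥ 1`, as a rational sequence. -/
def fPIL : ℕ → ℚ := fun n => if n = 0 then 1 else (pilCount n : ℚ)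


def listsOn (T : Finset ℕ) : Finset (List ℕ) := (T.sort (· ≤ ·)).permutations.toFinset

lemma mem_listsOn {T : Finset ℕ} {l : List ℕ} :
    l ∈ listsOn T ↔ l.Nodup ∧ l.toFinset = T := by
  rw [listsOn, List.mem_toFinset, List.mem_permutations]
  constructor
  · intro h
    refine ⟨h.symm.nodup (T.sort_nodup _), ?_⟩
    rw [List.toFinset_eq_of_perm _ _ h, Finset.sort_toFinset]
  · rintro ⟨h1, h2⟩
    exact List.perm_of_nodup_nodup_toFinset_eq h1 (T.sort_nodup _)
      (by rw [h2, Finset.sort_toFinset])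

lemma card_listsOn (T : Finset ℕ) : (listsOn T).card = T.card.factorial := by
  rw [listsOn, List.toFinset_card_of_nodup (List.nodup_permutations _ (T.sort_nodup _)),
    List.length_permutations, Finset.length_sort]

def pilFinset (A : Finset ℕ) : Finset (Finset (List ℕ)) :=
  (A.powerset.biUnion listsOn).powerset.filter (fun P => IsPIL A P)

lemma mem_pilFinset {A : Finset ℕ} {P : Finset (List ℕ)} :
    P ∈ pilFinset A ↔ IsPIL A P := by
  rw [pilFinset, Finset.mem_filter, Finset.mem_powerset]
  constructor
  · exact fun h => h.2
  · intro h
    refine ⟨fun l hl => ?_, h⟩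
    rcases h with ⟨h1, h2, h3⟩
    rw [Finset.mem_biUnion]
    refine ⟨l.toFinset, ?_, ?_⟩
    · rw [Finset.mem_powerset, ← h3]
      exact fun x hx => Finset.mem_biUnion.2 ⟨l, hl, hx⟩
    · exact mem_listsOn.2 ⟨(h1 l hl).1, rfl⟩

lemma ncard_pil (A : Finset ℕ) :
    Set.ncard {P : Finset (List ℕ) | IsPIL A P} = (pilFinset A).card := by
  have : {P : Finset (List ℕ) | IsPIL A P} = ↑(pilFinset A) := by
    ext P; simp [mem_pilFinset]
  rw [this, Set.ncard_coe_finset]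

lemma pilFinset_empty : pilFinset ∅ = {∅} := by
  ext P
  rw [mem_pilFinset, Finset.mem_singleton]
  constructor
  · rintro ⟨h1, h2, h3⟩
    by_contra hne
    rcases Finset.nonempty_of_ne_empty hne with ⟨l, hl⟩
    rcases (h1 l hl) with ⟨hn, hne'⟩
    rcases List.exists_mem_of_ne_nil l hne' with ⟨x, hx⟩
    have : x ∈ P.biUnion (fun l => l.toFinset) := Finset.mem_biUnion.2 ⟨l, hl, List.mem_toFinset.2 hx⟩
    rw [h3] at this
    exact absurd this (Finset.notMem_empty x)
  · rintro rfl
    exact ⟨by simp, by simp, by simp⟩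

lemma toFinset_map' (f : ℕ → ℕ) (l : List ℕ) :
    (l.map f).toFinset = l.toFinset.image f := by
  ext x; simp

lemma map_inj_on_lists {f : ℕ → ℕ} {A : Finset ℕ} (hinj : Set.InjOn f ↑A) :
    ∀ l l' : List ℕ, (∀ x ∈ l, x ∈ A) → (∀ x ∈ l', x ∈ A) →
      l.map f = l'.map f → l = l' := by
  intro l
  induction l with
  | nil => intro l' _ _ h; simpa using (List.map_eq_nil_iff.1 h.symm)
  | cons a t ih =>
    intro l' hl hl' h
    cases l' with
    | nil => simp at h
    | cons a' t' =>
      simp only [List.map_cons, List.cons.injEq] at h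
      have ha : a = a' := hinj (by simpa using hl a (by simp)) (by simpa using hl' a' (by simp)) h.1
      have := ih t' (fun x hx => hl x (by simp [hx])) (fun x hx => hl' x (by simp [hx])) h.2
      simp [ha, this]

lemma mem_of_mem_pil {A : Finset ℕ} {P : Finset (List ℕ)} (h : IsPIL A P)
    {l : List ℕ} (hl : l ∈ P) : ∀ x ∈ l, x ∈ A := by
  intro x hx
  rw [← h.2.2]
  exact Finset.mem_biUnion.2 ⟨l, hl, List.mem_toFinset.2 hx⟩

lemma isPIL_image {A : Finset ℕ} {P : Finset (List ℕ)} (h : IsPIL A P)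
    {f : ℕ → ℕ} (hinj : Set.InjOn f ↑A) :
    IsPIL (A.image f) (P.image (List.map f)) := by
  obtain ⟨h1, h2, h3⟩ := h
  refine ⟨?_, ?_, ?_⟩
  · intro l hl
    rcases Finset.mem_image.1 hl with ⟨l₀, hl₀, rfl⟩
    constructor
    · exact (h1 l₀ hl₀).1.map_on (fun x hx y hy hxy =>
        hinj (mem_of_mem_pil ⟨h1, h2, h3⟩ hl₀ x hx) (mem_of_mem_pil ⟨h1, h2, h3⟩ hl₀ y hy) hxy)
    · simpa using (h1 l₀ hl₀).2
  · intro l hl l' hl' hne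
    rcases Finset.mem_image.1 hl with ⟨l₀, hl₀, rfl⟩
    rcases Finset.mem_image.1 hl' with ⟨l₁, hl₁, rfl⟩
    have hne₀ : l₀ ≠ l₁ := fun e => hne (by rw [e])
    have hd := h2 l₀ hl₀ l₁ hl₁ hne₀
    rw [Finset.disjoint_left]
    intro x hx hx'
    rw [toFinset_map', Finset.mem_image] at hx hx'
    rcases hx with ⟨u, hu, rfl⟩
    rcases hx' with ⟨v, hv, hvu⟩
    have : v = u := hinj (mem_of_mem_pil ⟨h1, h2, h3⟩ hl₁ v (List.mem_toFinset.1 hv))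
      (mem_of_mem_pil ⟨h1, h2, h3⟩ hl₀ u (List.mem_toFinset.1 hu)) hvu
    subst this
    exact (Finset.disjoint_left.1 hd hu) hv
  · ext y
    simp only [Finset.mem_biUnion, Finset.mem_image, toFinset_map']
    constructor
    · rintro ⟨l, ⟨l₀, hl₀, rfl⟩, hy⟩
      rw [toFinset_map'] at hy
      rcases Finset.mem_image.1 hy with ⟨x, hx, rfl⟩
      exact ⟨x, by rw [← h3]; exact Finset.mem_biUnion.2 ⟨l₀, hl₀, hx⟩, rfl⟩
    · rintro ⟨x, hx, rfl⟩
      rw [← h3] at hx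
      rcases Finset.mem_biUnion.1 hx with ⟨l₀, hl₀, hxl₀⟩
      exact ⟨l₀.map f, ⟨l₀, hl₀, rfl⟩, by rw [toFinset_map']; exact Finset.mem_image.2 ⟨x, hxl₀, rfl⟩⟩

lemma card_pilFinset_le {A B : Finset ℕ} (f : ℕ → ℕ) (hinj : Set.InjOn f ↑A)
    (him : A.image f = B) : (pilFinset A).card ≤ (pilFinset B).card := by
  apply Finset.card_le_card_of_injOn (fun P => P.image (List.map f))
  · intro P hP
    simp only [Finset.mem_coe, mem_pilFinset] at hP ⊢
    rw [← him]
    exact isPIL_image hP hinj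
  · intro P hP Q hQ hPQ
    rw [Finset.mem_coe, mem_pilFinset] at hP hQ
    have hPQ : P.image (List.map f) = Q.image (List.map f) := hPQ
    ext l
    constructor
    · intro hl
      have : l.map f ∈ Q.image (List.map f) := by
        rw [← hPQ]; exact Finset.mem_image_of_mem _ hl
      rcases Finset.mem_image.1 this with ⟨l', hl', he⟩
      have : l' = l := map_inj_on_lists hinj l' l (mem_of_mem_pil hQ hl')
        (mem_of_mem_pil hP hl) he
      rwa [← this]
    · intro hl
      have : l.map f ∈ P.image (List.map f) := by
        rw [hPQ]; exact Finset.mem_image_of_mem _ hl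
      rcases Finset.mem_image.1 this with ⟨l', hl', he⟩
      have : l' = l := map_inj_on_lists hinj l' l (mem_of_mem_pil hP hl')
        (mem_of_mem_pil hQ hl) he
      rwa [← this]

lemma card_pilFinset_congr {A B : Finset ℕ} (h : A.card = B.card) :
    (pilFinset A).card = (pilFinset B).card := by
  have key : ∀ (A B : Finset ℕ), A.card = B.card →
      (pilFinset A).card ≤ (pilFinset B).card := by
    intro A B h
    let e := Finset.equivOfCardEq h
    refine card_pilFinset_le (fun x => if hx : x ∈ A then (e ⟨x, hx⟩ : ℕ) else 0) ?_ ?_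
    · intro x hx y hy hxy
      simp only [Finset.mem_coe] at hx hy
      simp only [dif_pos hx, dif_pos hy] at hxy
      have := e.injective (Subtype.coe_injective hxy)
      exact congrArg Subtype.val this
    · ext b
      simp only [Finset.mem_image]
      constructor
      · rintro ⟨a, ha, rfl⟩
        rw [dif_pos ha]
        exact (e ⟨a, ha⟩).2
      · intro hb
        refine ⟨e.symm ⟨b, hb⟩, (e.symm ⟨b, hb⟩).2, ?_⟩
        rw [dif_pos (e.symm ⟨b, hb⟩).2]
        simp
  exact le_antisymm (key A B h) (key B A h.symm)

lemma toFinset_subset_of_pil {B : Finset ℕ} {Q : Finset (List ℕ)} (hQ : IsPIL B Q)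
    {l : List ℕ} (hl : l ∈ Q) : l.toFinset ⊆ B :=
  fun x hx => mem_of_mem_pil hQ hl x (List.mem_toFinset.1 hx)

lemma pilFinset_insert {A : Finset ℕ} {a : ℕ} (ha : a ∉ A) :
    pilFinset (insert a A) = A.powerset.biUnion (fun S =>
      ((listsOn (insert a S)) ×ˢ pilFinset (A \ S)).image (fun p => insert p.1 p.2)) := by
  ext P
  rw [mem_pilFinset, Finset.mem_biUnion]
  constructor
  · intro h
    have hmem := h.2.2
    have haP : a ∈ P.biUnion (fun l => l.toFinset) := by
      rw [hmem]; exact Finset.mem_insert_self a A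
    rcases Finset.mem_biUnion.1 haP with ⟨l₀, hl₀, hal₀⟩
    set S := l₀.toFinset.erase a with hS
    have hSA : S ⊆ A := by
      intro x hx
      have hxa : x ≠ a := Finset.ne_of_mem_erase hx
      have : x ∈ insert a A := toFinset_subset_of_pil h hl₀ (Finset.mem_of_mem_erase hx)
      exact (Finset.mem_insert.1 this).resolve_left hxa
    have htf : l₀.toFinset = insert a S := (Finset.insert_erase hal₀).symm
    refine ⟨S, Finset.mem_powerset.2 hSA, ?_⟩
    rw [Finset.mem_image]
    refine ⟨(l₀, P.erase l₀), ?_, ?_⟩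
    · rw [Finset.mem_product]
      constructor
      · exact mem_listsOn.2 ⟨(h.1 l₀ hl₀).1, htf⟩
      · rw [mem_pilFinset]
        refine ⟨fun l hl => h.1 l (Finset.mem_of_mem_erase hl), ?_, ?_⟩
        · intro l hl l' hl' hne
          exact h.2.1 l (Finset.mem_of_mem_erase hl) l' (Finset.mem_of_mem_erase hl') hne
        · ext x
          simp only [Finset.mem_biUnion, Finset.mem_sdiff]
          constructor
          · rintro ⟨l, hl, hxl⟩
            have hlP : l ∈ P := Finset.mem_of_mem_erase hl
            have hlne : l ≠ l₀ := Finset.ne_of_mem_erase hl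
            have hd := h.2.1 l hlP l₀ hl₀ hlne
            have hxl₀ : x ∉ l₀.toFinset := fun hc => Finset.disjoint_left.1 hd hxl hc
            have hxA : x ∈ insert a A := toFinset_subset_of_pil h hlP hxl
            have hxa : x ≠ a := fun e => hxl₀ (e ▸ hal₀)
            refine ⟨(Finset.mem_insert.1 hxA).resolve_left hxa, ?_⟩
            exact fun hc => hxl₀ (Finset.mem_of_mem_erase hc)
          · rintro ⟨hxA, hxS⟩
            have hx : x ∈ P.biUnion (fun l => l.toFinset) := by
              rw [hmem]; exact Finset.mem_insert_of_mem hxA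
            rcases Finset.mem_biUnion.1 hx with ⟨l, hl, hxl⟩
            have hlne : l ≠ l₀ := by
              rintro rfl
              exact hxS (Finset.mem_erase.2 ⟨fun e => ha (e ▸ hxA), hxl⟩)
            exact ⟨l, Finset.mem_erase.2 ⟨hlne, hl⟩, hxl⟩
    · exact Finset.insert_erase hl₀
  · rintro ⟨S, hS, hP⟩
    rw [Finset.mem_powerset] at hS
    rw [Finset.mem_image] at hP
    rcases hP with ⟨⟨l, Q⟩, hlQ, rfl⟩
    rw [Finset.mem_product] at hlQ
    obtain ⟨hl, hQ⟩ := hlQ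
    rw [mem_listsOn] at hl
    rw [mem_pilFinset] at hQ
    have haS : a ∉ S := fun hc => ha (hS hc)
    have hlne : l ≠ [] := by
      intro e
      have : a ∈ l.toFinset := hl.2 ▸ Finset.mem_insert_self a S
      rw [e] at this; simp at this
    have hQsub : ∀ l' ∈ Q, l'.toFinset ⊆ A \ S := fun l' hl' => toFinset_subset_of_pil hQ hl'
    have hlQmem : l ∉ Q := by
      intro hc
      have : a ∈ A \ S := hQsub l hc (hl.2 ▸ Finset.mem_insert_self a S)
      exact ha (Finset.mem_sdiff.1 this).1
    have hdisj : ∀ l' ∈ Q, Disjoint l.toFinset l'.toFinset := by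
      intro l' hl'
      rw [hl.2, Finset.disjoint_left]
      intro x hx hx'
      have hx'' := hQsub l' hl' hx'
      rw [Finset.mem_sdiff] at hx''
      rcases Finset.mem_insert.1 hx with rfl | hxS
      · exact ha hx''.1
      · exact hx''.2 hxS
    refine ⟨?_, ?_, ?_⟩
    · intro l' hl'
      rcases Finset.mem_insert.1 hl' with rfl | h'
      · exact ⟨hl.1, hlne⟩
      · exact hQ.1 l' h'
    · intro l₁ h₁ l₂ h₂ hne
      rcases Finset.mem_insert.1 h₁ with rfl | h₁' <;> rcases Finset.mem_insert.1 h₂ with rfl | h₂'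
      · exact absurd rfl hne
      · exact hdisj l₂ h₂'
      · exact (hdisj l₁ h₁').symm
      · exact hQ.2.1 l₁ h₁' l₂ h₂' hne
    · rw [Finset.biUnion_insert, hQ.2.2, hl.2]
      ext x
      simp only [Finset.mem_union, Finset.mem_insert, Finset.mem_sdiff]
      constructor
      · rintro (⟨rfl | hxS⟩ | ⟨hxA, _⟩)
        · exact Or.inl rfl
        · exact Or.inr (hS hxS)
        · exact Or.inr hxA
      · rintro (rfl | hxA)
        · exact Or.inl (Or.inl rfl)
        · by_cases hxS : x ∈ S
          · exact Or.inl (Or.inr hxS)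
          · exact Or.inr ⟨hxA, hxS⟩

lemma card_pilFinset_insert {A : Finset ℕ} {a : ℕ} (ha : a ∉ A) :
    (pilFinset (insert a A)).card
      = ∑ S ∈ A.powerset, (S.card + 1).factorial * (pilFinset (A \ S)).card := by
  rw [pilFinset_insert ha]
  have key : ∀ S ∈ A.powerset, ∀ (l : List ℕ) (Q : Finset (List ℕ)),
      l ∈ listsOn (insert a S) → Q ∈ pilFinset (A \ S) → l ∉ Q ∧ a ∈ l.toFinset := by
    intro S hS l Q hl hQ
    rw [Finset.mem_powerset] at hS
    rw [mem_listsOn] at hl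
    rw [mem_pilFinset] at hQ
    have hal : a ∈ l.toFinset := hl.2 ▸ Finset.mem_insert_self a S
    refine ⟨fun hc => ?_, hal⟩
    have : a ∈ A \ S := toFinset_subset_of_pil hQ hc hal
    exact ha (Finset.mem_sdiff.1 this).1
  rw [Finset.card_biUnion]
  · refine Finset.sum_congr rfl ?_
    intro S hS
    have haS : a ∉ S := fun hc => ha (Finset.mem_powerset.1 hS hc)
    rw [Finset.card_image_of_injOn, Finset.card_product, card_listsOn,
      Finset.card_insert_of_notMem haS]
    rintro ⟨l, Q⟩ hlQ ⟨l', Q'⟩ hlQ' he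
    simp only [Finset.mem_coe, Finset.mem_product] at hlQ hlQ'
    obtain ⟨h1, h2⟩ := key S hS l Q hlQ.1 hlQ.2
    obtain ⟨h1', h2'⟩ := key S hS l' Q' hlQ'.1 hlQ'.2
    simp only at he
    have hll : l = l' := by
      by_contra hne
      have hl'mem : l' ∈ insert l Q := by rw [he]; exact Finset.mem_insert_self _ _
      have : l' ∈ Q := (Finset.mem_insert.1 hl'mem).resolve_left (fun e => hne e.symm)
      have : a ∈ A \ S := toFinset_subset_of_pil (mem_pilFinset.1 hlQ.2) this h2'
      exact ha (Finset.mem_sdiff.1 this).1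
    subst hll
    have hQQ : Q = Q' := by
      have := congrArg (fun T => Finset.erase T l) he
      simpa [Finset.erase_insert_eq_erase, Finset.erase_eq_of_notMem h1,
        Finset.erase_eq_of_notMem h1'] using this
    rw [hQQ]
  · intro S hS S' hS' hne
    simp only [Finset.disjoint_left]
    intro P hP hP'
    rcases Finset.mem_image.1 hP with ⟨⟨l, Q⟩, hlQ, he⟩
    rcases Finset.mem_image.1 hP' with ⟨⟨l', Q'⟩, hlQ', he'⟩
    rw [Finset.mem_product] at hlQ hlQ'
    obtain ⟨h1, h2⟩ := key S hS l Q hlQ.1 hlQ.2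
    obtain ⟨h1', h2'⟩ := key S' hS' l' Q' hlQ'.1 hlQ'.2
    simp only at he he'
    have hll : l = l' := by
      by_contra hcne
      have hl'mem : l' ∈ insert l Q := by rw [he, ← he']; exact Finset.mem_insert_self _ _
      have : l' ∈ Q := (Finset.mem_insert.1 hl'mem).resolve_left (fun e => hcne e.symm)
      have : a ∈ A \ S := toFinset_subset_of_pil (mem_pilFinset.1 hlQ.2) this h2'
      exact ha (Finset.mem_sdiff.1 this).1
    apply hne
    have ht : l.toFinset = insert a S := (mem_listsOn.1 hlQ.1).2
    have ht' : l'.toFinset = insert a S' := (mem_listsOn.1 hlQ'.1).2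
    have haS : a ∉ S := fun hc => ha (Finset.mem_powerset.1 hS hc)
    have haS' : a ∉ S' := fun hc => ha (Finset.mem_powerset.1 hS' hc)
    have : insert a S = insert a S' := by rw [← ht, ← ht', hll]
    have := congrArg (fun T => Finset.erase T a) this
    simpa [Finset.erase_insert haS, Finset.erase_insert haS'] using this

def pilL (n : ℕ) : ℕ := (pilFinset (Finset.Icc 1 n)).card

lemma pilL_zero : pilL 0 = 1 := by
  rw [pilL]
  rw [show Finset.Icc 1 0 = ∅ from Finset.Icc_eq_empty (by omega)]
  rw [pilFinset_empty]
  simp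

lemma card_pilFinset_eq_pilL (A : Finset ℕ) : (pilFinset A).card = pilL A.card := by
  rw [pilL]
  exact card_pilFinset_congr (by rw [Nat.card_Icc]; omega)

lemma pilL_succ (n : ℕ) :
    pilL (n + 1) = ∑ s ∈ Finset.range (n + 1),
      n.choose s * ((s + 1).factorial * pilL (n - s)) := by
  have hins : Finset.Icc 1 (n + 1) = insert (n + 1) (Finset.Icc 1 n) := by
    ext x
    simp only [Finset.mem_Icc, Finset.mem_insert]
    omega
  have hnot : (n + 1) ∉ Finset.Icc 1 n := by simp
  rw [pilL, hins, card_pilFinset_insert hnot]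
  have hstep : ∀ S ∈ (Finset.Icc 1 n).powerset,
      (S.card + 1).factorial * (pilFinset (Finset.Icc 1 n \ S)).card
        = (S.card + 1).factorial * pilL (n - S.card) := by
    intro S hS
    rw [Finset.mem_powerset] at hS
    rw [card_pilFinset_eq_pilL, Finset.card_sdiff_of_subset hS, Nat.card_Icc]
    norm_num
  rw [Finset.sum_congr rfl hstep, Finset.sum_powerset]
  rw [Nat.card_Icc]
  simp only [Nat.add_sub_cancel]
  refine Finset.sum_congr rfl ?_
  intro s hs
  rw [Finset.sum_congr rfl (fun S hS => by
    rw [(Finset.mem_powersetCard.1 hS).2]), Finset.sum_const, Finset.card_powersetCard,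
    Nat.card_Icc, smul_eq_mul]
  congr 1

lemma pilCount_eq_pilL (n : ℕ) : pilCount n = pilL n := ncard_pil _


lemma oneSubX_unit : constantCoeff (R := ℚ) (1 - X) ≠ 0 := by
  simp

lemma coeff_u (n : ℕ) :
    coeff (R := ℚ) n (X * (1 - X)⁻¹ : ℚ⟦X⟧) = if n = 0 then 0 else 1 := by
  have key : (1 - X : ℚ⟦X⟧) * (PowerSeries.mk fun n => if n = 0 then (0:ℚ) else 1) = X := by
    ext m
    rw [sub_mul, one_mul, map_sub]
    cases m with
    | zero => simp
    | succ m =>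
      rw [coeff_succ_X_mul, coeff_mk, coeff_mk, coeff_X]
      cases m with
      | zero => norm_num
      | succ m => norm_num
  have h2 := congrArg (fun z => (1 - X : ℚ⟦X⟧)⁻¹ * z) key
  rw [← mul_assoc, PowerSeries.inv_mul_cancel _ oneSubX_unit, one_mul] at h2
  rw [mul_comm, ← h2, coeff_mk]

lemma constantCoeff_u : constantCoeff (R := ℚ) (X * (1 - X)⁻¹ : ℚ⟦X⟧) = 0 := by
  rw [← coeff_zero_eq_constantCoeff, coeff_u]; simp

lemma coeff_pow_eq_zero {f : ℚ⟦X⟧} (hf : constantCoeff (R := ℚ) f = 0) :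
    ∀ (k n : ℕ), n < k → coeff (R := ℚ) n (f ^ k) = 0 := by
  intro k
  induction k with
  | zero => intro n hn; omega
  | succ k ih =>
    intro n hn
    rw [pow_succ, coeff_mul]
    apply Finset.sum_eq_zero
    rintro ⟨i, j⟩ hij
    rw [Finset.HasAntidiagonal.mem_antidiagonal] at hij
    rcases Nat.eq_zero_or_pos j with rfl | hj
    · rw [← coeff_zero_eq_constantCoeff] at hf
      rw [hf, mul_zero]
    · have : i < k := by omega
      rw [ih i this, zero_mul]

lemma deriv_u : (d⁄dX ℚ) (X * (1 - X)⁻¹ : ℚ⟦X⟧) = PowerSeries.mk fun n => (n + 1 : ℚ) := by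
  ext n
  rw [coeff_derivative, coeff_u, coeff_mk]
  simp

lemma deriv_expSubst :
    (d⁄dX ℚ) (expSubst (X * (1 - X)⁻¹)) =
      (d⁄dX ℚ) (X * (1 - X)⁻¹ : ℚ⟦X⟧) * expSubst (X * (1 - X)⁻¹) := by
  set u : ℚ⟦X⟧ := X * (1 - X)⁻¹ with hu
  set v : ℚ⟦X⟧ := (d⁄dX ℚ) u with hv
  have hu0 : constantCoeff (R := ℚ) u = 0 := constantCoeff_u
  ext n
  have hL : coeff (R := ℚ) n ((d⁄dX ℚ) (expSubst u))
      = ∑ k ∈ Finset.range (n + 1), coeff (R := ℚ) n (u ^ k * v) / (k.factorial : ℚ) := by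
    rw [coeff_derivative, expSubst, coeff_mk, Finset.sum_mul, Finset.sum_range_succ']
    have h0 : coeff (R := ℚ) (n + 1) (u ^ 0) / ((0:ℕ).factorial : ℚ) * ((n:ℚ) + 1) = 0 := by
      simp [coeff_one]
    rw [h0, add_zero]
    refine Finset.sum_congr rfl ?_
    intro k hk
    have hder : coeff (R := ℚ) (n + 1) (u ^ (k + 1)) * ((n:ℚ) + 1)
        = coeff (R := ℚ) n ((d⁄dX ℚ) (u ^ (k + 1))) := by
      rw [coeff_derivative]
    have hlbz : (d⁄dX ℚ) (u ^ (k + 1)) = (k + 1) • (u ^ k * v) := by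
      rw [Derivation.leibniz_pow]
      simp only [Nat.add_sub_cancel, smul_eq_mul]
      rfl
    rw [div_mul_eq_mul_div, hder, hlbz, map_nsmul, nsmul_eq_mul,
      Nat.factorial_succ]
    push_cast
    have hkf : ((k.factorial : ℚ)) ≠ 0 := by positivity
    field_simp
  have hR : coeff (R := ℚ) n (v * expSubst u)
      = ∑ k ∈ Finset.range (n + 1), coeff (R := ℚ) n (u ^ k * v) / (k.factorial : ℚ) := by
    rw [coeff_mul]
    have hext : ∀ p ∈ Finset.HasAntidiagonal.antidiagonal n,
        coeff (R := ℚ) p.1 v * coeff (R := ℚ) p.2 (expSubst u)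
          = ∑ k ∈ Finset.range (n + 1), coeff (R := ℚ) p.1 v * (coeff (R := ℚ) p.2 (u ^ k) / (k.factorial : ℚ)) := by
      rintro ⟨i, j⟩ hij
      rw [Finset.HasAntidiagonal.mem_antidiagonal] at hij
      simp only [expSubst, coeff_mk]
      rw [Finset.mul_sum]
      apply Finset.sum_subset
      · apply Finset.range_subset_range.2; omega
      · intro k hk hk'
        rw [Finset.mem_range] at hk hk'
        have : j < k := by omega
        rw [coeff_pow_eq_zero hu0 k j this]
        simp
    rw [Finset.sum_congr rfl hext, Finset.sum_comm]
    refine Finset.sum_congr rfl ?_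
    intro k hk
    rw [mul_comm (u ^ k) v, coeff_mul, Finset.sum_div]
    refine Finset.sum_congr rfl ?_
    intro p hp
    rw [mul_div_assoc]
  rw [hL, hR]

lemma expSubst_const : coeff (R := ℚ) 0 (expSubst (X * (1 - X)⁻¹)) = 1 := by
  simp [expSubst]

lemma deriv_eq_unique {F G v : ℚ⟦X⟧} (h0 : coeff (R := ℚ) 0 F = coeff (R := ℚ) 0 G)
    (hF : (d⁄dX ℚ) F = v * F) (hG : (d⁄dX ℚ) G = v * G) : F = G := by
  ext n
  induction n using Nat.strong_induction_on with
  | _ n ih =>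
    cases n with
    | zero => exact h0
    | succ m =>
      have hFc := congrArg (coeff (R := ℚ) m) hF
      have hGc := congrArg (coeff (R := ℚ) m) hG
      rw [coeff_derivative, coeff_mul] at hFc hGc
      have hsum : ∑ p ∈ Finset.HasAntidiagonal.antidiagonal m, coeff (R := ℚ) p.1 v * coeff (R := ℚ) p.2 F
          = ∑ p ∈ Finset.HasAntidiagonal.antidiagonal m, coeff (R := ℚ) p.1 v * coeff (R := ℚ) p.2 G := by
        refine Finset.sum_congr rfl ?_
        rintro ⟨i, j⟩ hij
        rw [Finset.HasAntidiagonal.mem_antidiagonal] at hij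
        rw [ih j (by omega)]
      have hm : ((m:ℚ) + 1) ≠ 0 := by positivity
      have := hFc.trans (hsum.trans hGc.symm)
      exact mul_right_cancel₀ hm this

lemma fPIL_eq_pilL (n : ℕ) : fPIL n = (pilL n : ℚ) := by
  unfold fPIL
  split
  · next h => subst h; rw [pilL_zero]; norm_num
  · rw [pilCount_eq_pilL]

lemma key_recurrence (n : ℕ) :
    fPIL (n + 1) / (n.factorial : ℚ)
      = ∑ p ∈ Finset.HasAntidiagonal.antidiagonal n, ((p.1 : ℚ) + 1) * (fPIL p.2 / (p.2.factorial : ℚ)) := by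
  rw [Finset.Nat.sum_antidiagonal_eq_sum_range_succ_mk]
  rw [fPIL_eq_pilL, pilL_succ, Nat.cast_sum, Finset.sum_div]
  refine Finset.sum_congr rfl ?_
  intro s hs
  rw [Finset.mem_range] at hs
  have hs' : s ≤ n := by omega
  rw [fPIL_eq_pilL]
  have hfact : n.choose s * (s + 1).factorial * (n - s).factorial = (s + 1) * n.factorial := by
    have h := Nat.choose_mul_factorial_mul_factorial hs'
    calc n.choose s * (s + 1).factorial * (n - s).factorial
        = (s + 1) * (n.choose s * s.factorial * (n - s).factorial) := by
          rw [Nat.factorial_succ]; ring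
      _ = (s + 1) * n.factorial := by rw [h]
  have h1 : (n.factorial : ℚ) ≠ 0 := by positivity
  have h2 : ((n - s).factorial : ℚ) ≠ 0 := by positivity
  have hq : (n.choose s : ℚ) * ((s + 1).factorial : ℚ) * ((n - s).factorial : ℚ)
      = ((s : ℚ) + 1) * (n.factorial : ℚ) := by exact_mod_cast hfact
  push_cast
  field_simp
  nlinarith [hq, sq_nonneg ((pilL (n-s) : ℚ))]

theorem egf_deriv :
    (d⁄dX ℚ) (PowerSeries.mk fun n => fPIL n / (n.factorial : ℚ))
      = (d⁄dX ℚ) (X * (1 - X)⁻¹ : ℚ⟦X⟧) * (PowerSeries.mk fun n => fPIL n / (n.factorial : ℚ)) := by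
  ext n
  rw [coeff_derivative, coeff_mk, coeff_mul]
  have hv : ∀ i : ℕ, coeff (R := ℚ) i ((d⁄dX ℚ) (X * (1 - X)⁻¹ : ℚ⟦X⟧)) = (i : ℚ) + 1 := by
    intro i; rw [deriv_u, coeff_mk]
  have hL : fPIL (n + 1) / ((n + 1).factorial : ℚ) * ((n : ℚ) + 1)
      = fPIL (n + 1) / (n.factorial : ℚ) := by
    have hfs : ((n + 1).factorial : ℚ) = ((n : ℚ) + 1) * (n.factorial : ℚ) := by
      rw [Nat.factorial_succ]; push_cast; ring
    rw [hfs]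
    have h1 : (n.factorial : ℚ) ≠ 0 := by positivity
    have h2 : ((n : ℚ) + 1) ≠ 0 := by positivity
    field_simp
  rw [hL, key_recurrence]
  refine Finset.sum_congr rfl ?_
  rintro ⟨i, j⟩ _
  rw [hv, coeff_mk]

/-- The exponential generating function of `f` is `exp(X/(1-X))`. -/
theorem statement5 :
    (PowerSeries.mk fun n => fPIL n / (n.factorial : ℚ)) =
      expSubst (PowerSeries.X * (1 - PowerSeries.X)⁻¹) := by
  apply deriv_eq_unique (v := (d⁄dX ℚ) (PowerSeries.X * (1 - PowerSeries.X)⁻¹ : ℚ⟦X⟧))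
  · rw [coeff_mk, expSubst_const]
    simp [fPIL]
  · exact egf_deriv
  · exact deriv_expSubst

end
end

section
/- Define b : ℕ → ℕ by b(n) = |SPIL(n∪{0})| for n ≥ 0 (so b(0) = 1). Then for every n ≥ 1, b(n+1) + 4·n²·b(n−1) = (3 + 4n)·b(n). -/
open scoped BigOperators

noncomputable section

/-- `b(n) = |SPIL(n ∪ {0})|` (so `b(0) = 1`). -/
def bSPIL0 : ℕ → ℕ := fun n => spil0Count n

namespace SPIL
open List

abbrev absL (l : List ℤ) : List ℕ := l.map Int.natAbs

def rmvA (t : ℕ) (l : List ℤ) : List ℤ := l.filter (fun x => x.natAbs ≠ t)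

def insB (w : ℤ) (s : ℕ) : List ℤ → List ℤ
  | [] => []
  | x :: xs => if x.natAbs = s then w :: x :: xs else x :: insB w s xs

lemma rmvA_eq_self {t : ℕ} {l : List ℤ} (h : t ∉ absL l) : rmvA t l = l := by
  apply List.filter_eq_self.2
  intro x hx
  simp only [decide_eq_true_eq, ne_eq]
  intro e; exact h (by simpa [absL, e] using List.mem_map_of_mem (f := Int.natAbs) hx)

lemma insB_eq_self {w : ℤ} {s : ℕ} {l : List ℤ} (h : s ∉ absL l) : insB w s l = l := by
  induction l with
  | nil => rfl
  | cons x xs ih =>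
      simp only [absL, List.map_cons, List.mem_cons, not_or] at h
      rw [insB, if_neg (fun e => h.1 e.symm), ih h.2]

lemma insB_append {w z : ℤ} {s : ℕ} {l₁ l₂ : List ℤ} (h : s ∉ absL l₁) (hz : z.natAbs = s) :
    insB w s (l₁ ++ z :: l₂) = l₁ ++ w :: z :: l₂ := by
  induction l₁ with
  | nil => simp [insB, hz]
  | cons x xs ih =>
      simp only [absL, List.map_cons, List.mem_cons, not_or] at h
      rw [List.cons_append, insB, if_neg (fun e => h.1 e.symm), ih h.2, List.cons_append]

lemma rmvA_append {w : ℤ} {t : ℕ} {l₁ l₂ : List ℤ} (h1 : t ∉ absL l₁) (hw : w.natAbs = t)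
    (h2 : t ∉ absL l₂) : rmvA t (l₁ ++ w :: l₂) = l₁ ++ l₂ := by
  have e3 : rmvA t (w :: l₂) = rmvA t l₂ := by
    simp [rmvA, List.filter_cons, hw]
  calc rmvA t (l₁ ++ w :: l₂) = rmvA t l₁ ++ rmvA t (w :: l₂) := List.filter_append _ _
    _ = l₁ ++ l₂ := by rw [rmvA_eq_self h1, e3, rmvA_eq_self h2]

lemma getLastD_append_cons (l₁ l₂ : List ℤ) (x : ℤ) (d : ℤ) :
    (l₁ ++ x :: l₂).getLastD d = l₂.getLastD x := by
  induction l₁ generalizing d with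
  | nil => rw [List.nil_append, List.getLastD_cons]
  | cons y ys ih => rw [List.cons_append, List.getLastD_cons]; exact ih y

lemma uniq_entry {l : List ℤ} (h : (absL l).Nodup) {x y : ℤ} (hx : x ∈ l) (hy : y ∈ l)
    (hxy : x.natAbs = y.natAbs) : x = y := by
  induction l with
  | nil => simp at hx
  | cons a tl ih =>
      simp only [absL, List.map_cons, List.nodup_cons] at h
      rcases List.mem_cons.1 hx with rfl | hx' <;> rcases List.mem_cons.1 hy with rfl | hy'
      · rfl
      · exact absurd (hxy ▸ List.mem_map_of_mem (f := Int.natAbs) hy') h.1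
      · exact absurd (hxy ▸ List.mem_map_of_mem (f := Int.natAbs) hx') h.1
      · exact ih h.2 hx' hy'

lemma uniq_split {a b a' b' : List ℤ} {w w' : ℤ}
    (h : (absL (a ++ w :: b)).Nodup) (he : a ++ w :: b = a' ++ w' :: b')
    (hw : w.natAbs = w'.natAbs) : a = a' ∧ w = w' ∧ b = b' := by
  induction a generalizing a' with
  | nil =>
      cases a' with
      | nil => simp_all
      | cons x a'' =>
          exfalso
          simp only [List.nil_append] at he
          have hx : w = x := by simpa using congrArg (List.headI) he
          have hb : b = a'' ++ w' :: b' := by simpa [hx] using congrArg List.tail he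
          simp only [List.nil_append, absL, List.map_cons, List.nodup_cons] at h
          exact h.1 (by rw [hb, hw]; simp)
  | cons x a ih =>
      cases a' with
      | nil =>
          exfalso
          simp only [List.nil_append] at he
          have hx : x = w' := by simpa using congrArg (List.headI) he
          have hb : a ++ w :: b = b' := by simpa using congrArg List.tail he
          simp only [absL, List.cons_append, List.map_cons, List.nodup_cons] at h
          exact h.1 (by rw [hx, ← hw]; simp)
      | cons y a'' =>
          simp only [List.cons_append] at he
          have hxy : x = y := by simpa using congrArg List.headI he
          have ht : a ++ w :: b = a'' ++ w' :: b' := by simpa using congrArg List.tail he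
          simp only [absL, List.cons_append, List.map_cons, List.nodup_cons] at h
          obtain ⟨h1, h2, h3⟩ := ih h.2 ht
          exact ⟨by rw [hxy, h1], h2, h3⟩


def NSP (A : Finset ℕ) : ℕ := Set.ncard {P : Finset (List ℤ) | IsSPIL0 A P}

lemma block_unique {A : Finset ℕ} {P : Finset (List ℤ)} (hP : IsSPIL0 A P)
    {l l' : List ℤ} (hl : l ∈ P) (hl' : l' ∈ P) {v : ℕ}
    (h : v ∈ absL l) (h' : v ∈ absL l') : l = l' := by
  by_contra hne
  have hd := hP.2.1 l hl l' hl' hne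
  exact (Finset.disjoint_left.1 hd (List.mem_toFinset.2 h)) (List.mem_toFinset.2 h')

lemma exists_block {A : Finset ℕ} {P : Finset (List ℤ)} (hP : IsSPIL0 A P)
    {v : ℕ} (hv : v ∈ A) : ∃ l ∈ P, v ∈ absL l := by
  rw [← hP.2.2] at hv
  simpa using Finset.mem_biUnion.1 hv

lemma mono_list {A B : Finset ℕ} {l : List ℤ} (hAB : A ⊆ B) (h : IsSignedList0 A l) :
    IsSignedList0 B l :=
  ⟨h.1, fun x hx => hAB (h.2.1 x hx), h.2.2.1, h.2.2.2.1, h.2.2.2.2⟩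

lemma finite_spil (A : Finset ℕ) : {P : Finset (List ℤ) | IsSPIL0 A P}.Finite := by
  classical
  set E : Finset ℤ := A.image (fun v : ℕ => (v : ℤ)) ∪ A.image (fun v : ℕ => -(v : ℤ)) with hE
  have hfinE : Finite {x : ℤ // x ∈ E} := inferInstance
  have hLfin : {L : List {x : ℤ // x ∈ E} | L.length ≤ A.card}.Finite :=
    List.finite_length_le _ _
  have hS : {l : List ℤ | l.length ≤ A.card ∧ ∀ x ∈ l, x ∈ E}.Finite := by
    apply Set.Finite.subset (hLfin.image (List.map Subtype.val))
    rintro l ⟨hlen, hmem⟩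
    refine ⟨l.pmap (fun x h => (⟨x, h⟩ : {x : ℤ // x ∈ E})) hmem, by simpa using hlen, ?_⟩
    simp [List.map_pmap]
  apply Set.Finite.subset (hS.toFinset.powerset.finite_toSet)
  intro P hP
  simp only [Finset.coe_powerset, Set.mem_preimage, Set.mem_powerset_iff, Finset.coe_subset]
  intro l hl
  simp only [Set.Finite.mem_toFinset, Set.mem_setOf_eq]
  have hv := (hP.1 l hl)
  constructor
  · have hnd : (absL l).Nodup := hv.2.2.1
    have hsub : (absL l).toFinset ⊆ A := by
      intro v hvv
      obtain ⟨x, hx, rfl⟩ := List.mem_map.1 (List.mem_toFinset.1 hvv)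
      exact hv.2.1 x hx
    calc l.length = (absL l).toFinset.card := by
          rw [List.toFinset_card_of_nodup hnd]; simp [absL]
      _ ≤ A.card := Finset.card_le_card hsub
  · intro x hx
    have : x.natAbs ∈ A := hv.2.1 x hx
    rcases Int.natAbs_eq x with h | h
    · apply Finset.mem_union_left
      rw [h]
      exact Finset.mem_image_of_mem _ this
    · apply Finset.mem_union_right
      rw [h]
      exact Finset.mem_image_of_mem _ this

lemma ncard_of_bijOn {α β : Type*} {g : α → β} {s : Set α} {t : Set β}
    (h : Set.BijOn g s t) : t.ncard = s.ncard := by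
  rw [← h.image_eq]; exact Set.ncard_image_of_injOn h.injOn

lemma ncard_prod {α β : Type*} (s : Set α) (t : Set β) :
    (s ×ˢ t).ncard = s.ncard * t.ncard := by
  rw [← Nat.card_coe_set_eq, ← Nat.card_coe_set_eq, ← Nat.card_coe_set_eq,
    ← Nat.card_prod]
  exact Nat.card_congr (Equiv.Set.prod s t)


def relZ (f : ℕ → ℕ) (x : ℤ) : ℤ := if x < 0 then -(f x.natAbs : ℤ) else (f x.natAbs : ℤ)

lemma natAbs_relZ (f : ℕ → ℕ) (x : ℤ) : (relZ f x).natAbs = f x.natAbs := by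
  unfold relZ; split_ifs <;> simp

lemma relZ_of_nonneg (f : ℕ → ℕ) {x : ℤ} (hx : 0 ≤ x) : relZ f x = (f x.natAbs : ℤ) := by
  unfold relZ; rw [if_neg (by omega)]

lemma getLastD_map (φ : ℤ → ℤ) (x : ℤ) (l : List ℤ) (d d' : ℤ) :
    ((x :: l).map φ).getLastD d = φ ((x :: l).getLastD d') := by
  induction l generalizing x with
  | nil => simp
  | cons y t ih =>
      rw [List.map_cons, List.getLastD_cons, List.getLastD_cons]
      exact ih y

lemma relZ_comp {A : Finset ℕ} {f g : ℕ → ℕ} {x : ℤ} (hx : x.natAbs ∈ A)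
    (hfg : ∀ v ∈ A, g (f v) = v) (hz : x < 0 → f x.natAbs ≠ 0) :
    relZ g (relZ f x) = x := by
  rcases lt_or_ge x 0 with hneg | hpos
  · have h1 : relZ f x = -(f x.natAbs : ℤ) := if_pos hneg
    have hfx : f x.natAbs ≠ 0 := hz hneg
    have h2 : relZ f x < 0 := by rw [h1]; omega
    rw [relZ, if_pos h2, h1]
    simp only [Int.natAbs_neg, Int.natAbs_natCast]
    rw [hfg _ hx]
    omega
  · rw [relZ_of_nonneg f hpos, relZ_of_nonneg g (by positivity)]
    simp only [Int.natAbs_natCast]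
    rw [hfg _ hx]
    omega

lemma relZ_inj {A : Finset ℕ} {f : ℕ → ℕ} (hinj : Set.InjOn f ↑A)
    (hz : ∀ v ∈ A, f v = 0 → v = 0) {x x' : ℤ} (hx : x.natAbs ∈ A) (hx' : x'.natAbs ∈ A)
    (h : relZ f x = relZ f x') : x = x' := by
  have habs : x.natAbs = x'.natAbs := hinj hx hx' (by
    rw [← natAbs_relZ f x, ← natAbs_relZ f x', h])
  rcases lt_or_ge x 0 with h1 | h1 <;> rcases lt_or_ge x' 0 with h2 | h2
  · omega
  · exfalso
    rw [relZ, if_pos h1, relZ_of_nonneg f h2, habs] at h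
    have h3 : f x'.natAbs = 0 := by omega
    have : x'.natAbs = 0 := hz _ hx' h3
    omega
  · exfalso
    rw [relZ_of_nonneg f h1, relZ, if_pos h2, habs] at h
    have h3 : f x'.natAbs = 0 := by omega
    have : x'.natAbs = 0 := hz _ hx' h3
    omega
  · omega

lemma map_relZ_inj_list {A : Finset ℕ} {f : ℕ → ℕ} (hinj : Set.InjOn f ↑A)
    (hz : ∀ v ∈ A, f v = 0 → v = 0) :
    ∀ {l l' : List ℤ}, (∀ x ∈ l, x.natAbs ∈ A) → (∀ x ∈ l', x.natAbs ∈ A) →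
      l.map (relZ f) = l'.map (relZ f) → l = l' := by
  intro l
  induction l with
  | nil => intro l' _ _ h; simpa using (List.map_eq_nil_iff.1 h.symm).symm
  | cons x xs ih =>
      intro l' hl hl' h
      cases l' with
      | nil => simp at h
      | cons y ys =>
          simp only [List.map_cons, List.cons.injEq] at h
          have hxy : x = y := relZ_inj hinj hz (hl x (by simp)) (hl' y (by simp)) h.1
          have hys : xs = ys :=
            ih (fun a ha => hl a (by simp [ha])) (fun a ha => hl' a (by simp [ha])) h.2
          rw [hxy, hys]

lemma image_eq_self {α : Type*} [DecidableEq α] {P : Finset α} {h : α → α}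
    (hh : ∀ l ∈ P, h l = l) : P.image h = P := by
  rw [Finset.image_congr (g := id) (fun l hl => hh l hl), Finset.image_id]

lemma map_list_valid {A B : Finset ℕ} {f : ℕ → ℕ} (hf : ∀ v ∈ A, f v ∈ B)
    (hinj : Set.InjOn f ↑A)
    {l : List ℤ} (hlast0 : ∀ x ∈ l, f x.natAbs = 0 → l.getLastD (-1) = x ∧ 0 ≤ x)
    (h : IsSignedList0 A l) : IsSignedList0 B (l.map (relZ f)) := by
  obtain ⟨hne, hmem, hnd, hlast, h0⟩ := h
  have habs : (l.map (relZ f)).map Int.natAbs = (l.map Int.natAbs).map f := by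
    simp [List.map_map, Function.comp_def, natAbs_relZ]
  obtain ⟨x₀, ls, rfl⟩ := List.exists_cons_of_ne_nil hne
  refine ⟨by simp, ?_, ?_, ?_, ?_⟩
  · intro x hx
    obtain ⟨y, hy, rfl⟩ := List.mem_map.1 hx
    rw [natAbs_relZ]
    exact hf _ (hmem y hy)
  · rw [habs]
    refine List.Nodup.map_on ?_ hnd
    intro a ha b hb hab
    obtain ⟨xa, hxa, rfl⟩ := List.mem_map.1 ha
    obtain ⟨xb, hxb, rfl⟩ := List.mem_map.1 hb
    exact hinj (hmem xa hxa) (hmem xb hxb) hab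
  · rw [getLastD_map (relZ f) x₀ ls (-1) (-1), relZ_of_nonneg f hlast]
    positivity
  · intro hz0
    obtain ⟨x, hx, hx0⟩ := List.mem_map.1 hz0
    have hfabs : f x.natAbs = 0 := by
      rw [← natAbs_relZ f x, hx0]; rfl
    obtain ⟨hlx, hxnn⟩ := hlast0 x hx hfabs
    rw [getLastD_map (relZ f) x₀ ls (-1) (-1), hlx, relZ_of_nonneg f hxnn]
    simp [hfabs]

lemma map_P_valid {A B : Finset ℕ} {f : ℕ → ℕ} (himg : A.image f = B)
    (hinj : Set.InjOn f ↑A) {P : Finset (List ℤ)} (hP : IsSPIL0 A P)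
    (hlast0 : ∀ l ∈ P, ∀ x ∈ l, f x.natAbs = 0 → l.getLastD (-1) = x ∧ 0 ≤ x) :
    IsSPIL0 B (P.image (List.map (relZ f))) := by
  classical
  have hf : ∀ v ∈ A, f v ∈ B := fun v hv => himg ▸ Finset.mem_image_of_mem f hv
  have hmemA : ∀ l ∈ P, ∀ x ∈ l, x.natAbs ∈ A := fun l hl x hx => (hP.1 l hl).2.1 x hx
  have habs : ∀ l : List ℤ, (l.map (relZ f)).map Int.natAbs = (l.map Int.natAbs).map f := by
    intro l; simp [List.map_map, Function.comp_def, natAbs_relZ]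
  refine ⟨?_, ?_, ?_⟩
  · intro l hl
    obtain ⟨l₀, hl₀, rfl⟩ := Finset.mem_image.1 hl
    exact map_list_valid hf hinj (hlast0 l₀ hl₀) (hP.1 l₀ hl₀)
  · intro l hl l' hl' hne
    obtain ⟨l₀, hl₀, rfl⟩ := Finset.mem_image.1 hl
    obtain ⟨l₀', hl₀', rfl⟩ := Finset.mem_image.1 hl'
    have hne₀ : l₀ ≠ l₀' := fun h => hne (by rw [h])
    have hd := hP.2.1 l₀ hl₀ l₀' hl₀' hne₀
    rw [Finset.disjoint_left] at hd ⊢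
    intro a ha ha'
    rw [List.mem_toFinset, habs] at ha ha'
    obtain ⟨u, hu, rfl⟩ := List.mem_map.1 ha
    obtain ⟨u', hu', huu⟩ := List.mem_map.1 ha'
    obtain ⟨xu, hxu, rfl⟩ := List.mem_map.1 hu
    obtain ⟨xu', hxu', rfl⟩ := List.mem_map.1 hu'
    have : xu'.natAbs = xu.natAbs :=
      hinj (hmemA _ hl₀' _ hxu') (hmemA _ hl₀ _ hxu) huu
    exact hd (List.mem_toFinset.2 hu) (List.mem_toFinset.2 (this ▸ hu'))
  · ext v
    simp only [Finset.mem_biUnion, Finset.mem_image, List.mem_toFinset]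
    constructor
    · rintro ⟨l, ⟨l₀, hl₀, rfl⟩, hv⟩
      rw [habs] at hv
      obtain ⟨u, hu, rfl⟩ := List.mem_map.1 hv
      have huA : u ∈ A := by
        obtain ⟨xu, hxu, rfl⟩ := List.mem_map.1 hu
        exact hmemA _ hl₀ _ hxu
      exact himg ▸ Finset.mem_image_of_mem f huA
    · intro hv
      rw [← himg, Finset.mem_image] at hv
      obtain ⟨u, hu, rfl⟩ := hv
      obtain ⟨l₀, hl₀, hul⟩ := exists_block hP hu
      exact ⟨l₀.map (relZ f), ⟨l₀, hl₀, rfl⟩, by rw [habs]; exact List.mem_map_of_mem (f := f) hul⟩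

lemma map_P_comp_id {A : Finset ℕ} {f g : ℕ → ℕ} (hfg : ∀ v ∈ A, g (f v) = v)
    {P : Finset (List ℤ)} (hP : IsSPIL0 A P)
    (hne : ∀ l ∈ P, ∀ x ∈ l, x < 0 → f x.natAbs ≠ 0) :
    (P.image (List.map (relZ f))).image (List.map (relZ g)) = P := by
  classical
  rw [Finset.image_image]
  apply image_eq_self
  intro l hl
  simp only [Function.comp_apply, List.map_map]
  have : ∀ x ∈ l, (List.map (relZ g) ∘ List.map (relZ f)) [x] = [x] → True := fun _ _ _ => trivial
  calc l.map (relZ g ∘ relZ f) = l.map id := by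
        apply List.map_congr_left
        intro x hx
        exact relZ_comp ((hP.1 l hl).2.1 x hx) hfg (hne l hl x hx)
    _ = l := List.map_id l


lemma insB_spec {s : ℕ} {l : List ℤ} (h : s ∈ absL l) (hnd : (absL l).Nodup) (w : ℤ) :
    ∃ l₁ z l₂, l = l₁ ++ z :: l₂ ∧ z.natAbs = s ∧ s ∉ absL l₁ ∧ s ∉ absL l₂ ∧
      insB w s l = l₁ ++ w :: z :: l₂ := by
  obtain ⟨z, hz, hzs⟩ := List.mem_map.1 h
  obtain ⟨l₁, l₂, rfl⟩ := List.append_of_mem hz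
  have habs : absL (l₁ ++ z :: l₂) = absL l₁ ++ z.natAbs :: absL l₂ := by simp [absL]
  rw [habs] at hnd
  have hnm := List.nodup_middle.1 hnd
  rw [List.nodup_cons, List.mem_append] at hnm
  refine ⟨l₁, z, l₂, rfl, hzs, fun hc => hnm.1 (Or.inl (hzs ▸ hc)),
    fun hc => hnm.1 (Or.inr (hzs ▸ hc)), insB_append (fun hc => hnm.1 (Or.inl (hzs ▸ hc))) hzs⟩

lemma nodup_of_dec {l₁ l₂ : List ℤ} {w : ℤ} {t : ℕ} (hw : w.natAbs = t)
    (hnd : (absL (l₁ ++ w :: l₂)).Nodup) :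
    t ∉ absL l₁ ∧ t ∉ absL l₂ ∧ (absL (l₁ ++ l₂)).Nodup := by
  have habs : absL (l₁ ++ w :: l₂) = absL l₁ ++ t :: absL l₂ := by simp [absL, hw]
  rw [habs] at hnd
  have hnm := List.nodup_middle.1 hnd
  rw [List.nodup_cons, List.mem_append] at hnm
  exact ⟨fun hc => hnm.1 (Or.inl hc), fun hc => hnm.1 (Or.inr hc), by
    simpa [absL] using hnm.2⟩

lemma insB_list_valid {A : Finset ℕ} {t s : ℕ} {w : ℤ} {l : List ℤ}
    (hA : IsSignedList0 A l) (hs : s ∈ absL l) (ht : t ∉ A) (hw : w.natAbs = t)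
    (ht0 : t ≠ 0) :
    IsSignedList0 (insert t A) (insB w s l) ∧
      (absL (insB w s l)).toFinset = insert t (absL l).toFinset := by
  obtain ⟨hne, hmem, hnd, hlast, h0⟩ := hA
  obtain ⟨l₁, z, l₂, hdec, hzs, hs1, hs2, hins⟩ := insB_spec hs hnd w
  have hperm : insB w s l ~ w :: l := by
    rw [hins, hdec]; exact List.perm_middle
  have hpabs : absL (insB w s l) ~ t :: absL l := by
    have := hperm.map Int.natAbs
    simpa [absL, hw] using this
  have htl : t ∉ absL l := by
    intro hc
    obtain ⟨x, hx, hxa⟩ := List.mem_map.1 hc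
    exact ht (hxa ▸ hmem x hx)
  have hlasteq : (insB w s l).getLastD (-1) = l.getLastD (-1) := by
    rw [hins, hdec, getLastD_append_cons, getLastD_append_cons, List.getLastD_cons]
  constructor
  · refine ⟨?_, ?_, ?_, ?_, ?_⟩
    · rw [hins]; simp
    · intro x hx
      rcases List.mem_cons.1 (hperm.mem_iff.1 hx) with rfl | hx'
      · rw [hw]; exact Finset.mem_insert_self t A
      · exact Finset.mem_insert_of_mem (hmem x hx')
    · exact (hpabs.nodup_iff).2 (List.nodup_cons.2 ⟨htl, hnd⟩)
    · rw [hlasteq]; exact hlast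
    · intro hz0
      rcases List.mem_cons.1 (hperm.mem_iff.1 hz0) with h | h
      · exfalso; apply ht0; rw [← hw, ← h]; rfl
      · rw [hlasteq]; exact h0 h
  · rw [List.toFinset_eq_of_perm _ _ hpabs, List.toFinset_cons]

lemma rmvA_list_valid {A : Finset ℕ} {t : ℕ} {l l₁ l₂ : List ℤ} {w z : ℤ}
    (hA : IsSignedList0 A l) (hdec : l = l₁ ++ w :: z :: l₂) (hw : w.natAbs = t) :
    IsSignedList0 (A.erase t) (rmvA t l) ∧ rmvA t l = l₁ ++ z :: l₂ ∧
      (absL (rmvA t l)).toFinset = (absL l).toFinset.erase t := by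
  obtain ⟨hne, hmem, hnd, hlast, h0⟩ := hA
  obtain ⟨ht1, ht2, _⟩ := nodup_of_dec hw (by rw [← hdec]; exact hnd)
  have hrm : rmvA t l = l₁ ++ z :: l₂ := by rw [hdec]; exact rmvA_append ht1 hw ht2
  have hsub : rmvA t l <+ l := List.filter_sublist
  have hmemr : ∀ x ∈ rmvA t l, x ∈ l ∧ x.natAbs ≠ t := by
    intro x hx
    have := List.mem_filter.1 hx
    exact ⟨this.1, by simpa using this.2⟩
  have hlasteq : (rmvA t l).getLastD (-1) = l.getLastD (-1) := by
    rw [hrm, hdec, getLastD_append_cons, getLastD_append_cons, List.getLastD_cons]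
  refine ⟨⟨?_, ?_, ?_, ?_, ?_⟩, hrm, ?_⟩
  · rw [hrm]; simp
  · intro x hx
    obtain ⟨hxl, hxt⟩ := hmemr x hx
    exact Finset.mem_erase.2 ⟨hxt, hmem x hxl⟩
  · exact ((hsub.map Int.natAbs).nodup hnd :)
  · rw [hlasteq]; exact hlast
  · intro hz0
    rw [hlasteq]; exact h0 (hmemr 0 hz0).1
  · ext v
    simp only [List.mem_toFinset, Finset.mem_erase]
    constructor
    · intro hv
      obtain ⟨x, hx, rfl⟩ := List.mem_map.1 hv
      obtain ⟨hxl, hxt⟩ := hmemr x hx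
      exact ⟨hxt, List.mem_map_of_mem (f := Int.natAbs) hxl⟩
    · rintro ⟨hvt, hv⟩
      obtain ⟨x, hx, rfl⟩ := List.mem_map.1 hv
      refine List.mem_map_of_mem (f := Int.natAbs) (List.mem_filter.2 ⟨hx, by simpa using hvt⟩)


lemma abs_mem_ground {A : Finset ℕ} {P : Finset (List ℤ)} (hP : IsSPIL0 A P) {l : List ℤ}
    (hl : l ∈ P) {v : ℕ} (hv : v ∈ absL l) : v ∈ A := by
  obtain ⟨x, hx, rfl⟩ := List.mem_map.1 hv
  exact (hP.1 l hl).2.1 x hx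

lemma insB_P_valid {A : Finset ℕ} {t s : ℕ} {w : ℤ} {P : Finset (List ℤ)}
    (hP : IsSPIL0 A P) (hs : s ∈ A) (ht : t ∉ A) (hw : w.natAbs = t) (ht0 : t ≠ 0) :
    IsSPIL0 (insert t A) (P.image (insB w s)) ∧
      ∃ l₁ z l₂, (l₁ ++ w :: z :: l₂) ∈ P.image (insB w s) ∧ z.natAbs = s := by
  classical
  obtain ⟨l₀, hl₀, hsl₀⟩ := exists_block hP hs
  have hvalid₀ := insB_list_valid (hP.1 l₀ hl₀) hsl₀ ht hw ht0
  have huntouched : ∀ l ∈ P, l ≠ l₀ → insB w s l = l := fun l hl hne =>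
    insB_eq_self (fun hc => hne (block_unique hP hl hl₀ hc hsl₀))
  have htnot : ∀ l ∈ P, t ∉ (absL l).toFinset := fun l hl hc =>
    ht (abs_mem_ground hP hl (List.mem_toFinset.1 hc))
  have hform : ∀ l ∈ P, (absL (insB w s l)).toFinset =
      (if l = l₀ then insert t (absL l).toFinset else (absL l).toFinset) := by
    intro l hl
    by_cases hle : l = l₀
    · subst hle; rw [if_pos rfl]; exact hvalid₀.2
    · rw [if_neg hle, huntouched l hl hle]
  constructor
  · refine ⟨?_, ?_, ?_⟩
    · intro l hl
      obtain ⟨l', hl', rfl⟩ := Finset.mem_image.1 hl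
      by_cases hle : l' = l₀
      · subst hle; exact hvalid₀.1
      · rw [huntouched l' hl' hle]
        exact mono_list (Finset.subset_insert t A) (hP.1 l' hl')
    · intro l hl l' hl' hne
      obtain ⟨l₁', hl₁', rfl⟩ := Finset.mem_image.1 hl
      obtain ⟨l₂', hl₂', rfl⟩ := Finset.mem_image.1 hl'
      have hne' : l₁' ≠ l₂' := fun h => hne (by rw [h])
      have hd := hP.2.1 l₁' hl₁' l₂' hl₂' hne'
      rw [hform l₁' hl₁', hform l₂' hl₂']
      by_cases h1 : l₁' = l₀ <;> by_cases h2 : l₂' = l₀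
      · exact absurd (h1.trans h2.symm) hne'
      · rw [if_pos h1, if_neg h2]
        rw [Finset.insert_eq, Finset.disjoint_union_left]
        exact ⟨Finset.disjoint_singleton_left.2 (htnot l₂' hl₂'), hd⟩
      · rw [if_neg h1, if_pos h2]
        rw [Finset.insert_eq, Finset.disjoint_union_right]
        exact ⟨Finset.disjoint_singleton_right.2 (htnot l₁' hl₁'), hd⟩
      · rw [if_neg h1, if_neg h2]; exact hd
    · ext v
      simp only [Finset.mem_biUnion, Finset.mem_insert]
      constructor
      · rintro ⟨l, hl, hv⟩
        obtain ⟨l', hl', rfl⟩ := Finset.mem_image.1 hl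
        rw [hform l' hl'] at hv
        by_cases hle : l' = l₀
        · rw [if_pos hle] at hv
          rcases Finset.mem_insert.1 hv with rfl | hv'
          · exact Or.inl rfl
          · exact Or.inr (hP.2.2 ▸ Finset.mem_biUnion.2 ⟨l', hl', hv'⟩)
        · rw [if_neg hle] at hv
          exact Or.inr (hP.2.2 ▸ Finset.mem_biUnion.2 ⟨l', hl', hv⟩)
      · intro hv
        rcases hv with rfl | hv'
        · refine ⟨insB w s l₀, Finset.mem_image_of_mem _ hl₀, ?_⟩
          rw [hform l₀ hl₀, if_pos rfl]
          exact Finset.mem_insert_self v _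
        · rw [← hP.2.2] at hv'
          obtain ⟨l, hl, hvl⟩ := Finset.mem_biUnion.1 hv'
          refine ⟨insB w s l, Finset.mem_image_of_mem _ hl, ?_⟩
          rw [hform l hl]
          by_cases hle : l = l₀
          · rw [if_pos hle]; exact Finset.mem_insert_of_mem hvl
          · rw [if_neg hle]; exact hvl
  · obtain ⟨l₁, z, l₂, hdec, hzs, hs1, hs2, hins⟩ :=
      insB_spec hsl₀ (hP.1 l₀ hl₀).2.2.1 w
    exact ⟨l₁, z, l₂, hins ▸ Finset.mem_image_of_mem _ hl₀, hzs⟩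

lemma rmvA_P_valid {A : Finset ℕ} {t : ℕ} {P : Finset (List ℤ)} {l₀ l₁ l₂ : List ℤ} {w z : ℤ}
    (hP : IsSPIL0 A P) (hl₀ : l₀ ∈ P) (hdec : l₀ = l₁ ++ w :: z :: l₂) (hw : w.natAbs = t) :
    IsSPIL0 (A.erase t) (P.image (rmvA t)) := by
  classical
  have hwl₀ : w ∈ l₀ := by rw [hdec]; simp
  have htl₀ : t ∈ absL l₀ := hw ▸ List.mem_map_of_mem (f := Int.natAbs) hwl₀
  have hvalid₀ := rmvA_list_valid (hP.1 l₀ hl₀) hdec hw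
  have huntouched : ∀ l ∈ P, l ≠ l₀ → rmvA t l = l := by
    intro l hl hne
    refine rmvA_eq_self (fun hc => hne (block_unique hP hl hl₀ hc htl₀))
  have htnot : ∀ l ∈ P, l ≠ l₀ → t ∉ absL l := fun l hl hne hc =>
    hne (block_unique hP hl hl₀ hc htl₀)
  have hform : ∀ l ∈ P, (absL (rmvA t l)).toFinset =
      (if l = l₀ then (absL l).toFinset.erase t else (absL l).toFinset) := by
    intro l hl
    by_cases hle : l = l₀
    · subst hle; rw [if_pos rfl]; exact hvalid₀.2.2
    · rw [if_neg hle, huntouched l hl hle]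
  refine ⟨?_, ?_, ?_⟩
  · intro l hl
    obtain ⟨l', hl', rfl⟩ := Finset.mem_image.1 hl
    by_cases hle : l' = l₀
    · subst hle; exact hvalid₀.1
    · rw [huntouched l' hl' hle]
      obtain ⟨hne, hmem, hnd, hlast, h0⟩ := hP.1 l' hl'
      refine ⟨hne, ?_, hnd, hlast, h0⟩
      intro x hx
      refine Finset.mem_erase.2 ⟨?_, hmem x hx⟩
      exact fun hc => htnot l' hl' hle (hc ▸ List.mem_map_of_mem (f := Int.natAbs) hx)
  · intro l hl l' hl' hne
    obtain ⟨l₁', hl₁', rfl⟩ := Finset.mem_image.1 hl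
    obtain ⟨l₂', hl₂', rfl⟩ := Finset.mem_image.1 hl'
    have hne' : l₁' ≠ l₂' := fun h => hne (by rw [h])
    have hd := hP.2.1 l₁' hl₁' l₂' hl₂' hne'
    have hsub1 : (absL (rmvA t l₁')).toFinset ⊆ (absL l₁').toFinset := by
      rw [hform l₁' hl₁']
      split_ifs
      · exact Finset.erase_subset t _
      · exact Finset.Subset.refl _
    have hsub2 : (absL (rmvA t l₂')).toFinset ⊆ (absL l₂').toFinset := by
      rw [hform l₂' hl₂']
      split_ifs
      · exact Finset.erase_subset t _
      · exact Finset.Subset.refl _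
    exact Finset.disjoint_of_subset_left hsub1 (Finset.disjoint_of_subset_right hsub2 hd)
  · ext v
    simp only [Finset.mem_biUnion, Finset.mem_erase]
    constructor
    · rintro ⟨l, hl, hv⟩
      obtain ⟨l', hl', rfl⟩ := Finset.mem_image.1 hl
      rw [hform l' hl'] at hv
      by_cases hle : l' = l₀
      · rw [if_pos hle] at hv
        obtain ⟨hvt, hv'⟩ := Finset.mem_erase.1 hv
        exact ⟨hvt, hP.2.2 ▸ Finset.mem_biUnion.2 ⟨l', hl', hv'⟩⟩
      · rw [if_neg hle] at hv
        refine ⟨?_, hP.2.2 ▸ Finset.mem_biUnion.2 ⟨l', hl', hv⟩⟩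
        exact fun hc => htnot l' hl' hle (hc ▸ List.mem_toFinset.1 hv)
    · rintro ⟨hvt, hv⟩
      rw [← hP.2.2] at hv
      obtain ⟨l, hl, hvl⟩ := Finset.mem_biUnion.1 hv
      refine ⟨rmvA t l, Finset.mem_image_of_mem _ hl, ?_⟩
      rw [hform l hl]
      by_cases hle : l = l₀
      · rw [if_pos hle]; exact Finset.mem_erase.2 ⟨hvt, hvl⟩
      · rw [if_neg hle]; exact hvl

lemma ins_rmv_id {A : Finset ℕ} {t s : ℕ} {w : ℤ} {P : Finset (List ℤ)}
    (hP : IsSPIL0 A P) (ht : t ∉ A) (hw : w.natAbs = t) :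
    (P.image (insB w s)).image (rmvA t) = P := by
  classical
  rw [Finset.image_image]
  apply image_eq_self
  intro l hl
  simp only [Function.comp_apply]
  have htl : t ∉ absL l := fun hc => ht (abs_mem_ground hP hl hc)
  by_cases hsl : s ∈ absL l
  · obtain ⟨l₁, z, l₂, hdec, hzs, hs1, hs2, hins⟩ := insB_spec hsl (hP.1 l hl).2.2.1 w
    have habs : absL l = absL l₁ ++ absL (z :: l₂) := by rw [hdec]; simp [absL]
    have ht1 : t ∉ absL l₁ := fun hc => htl (by rw [habs]; exact List.mem_append.2 (Or.inl hc))
    have ht2 : t ∉ absL (z :: l₂) :=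
      fun hc => htl (by rw [habs]; exact List.mem_append.2 (Or.inr hc))
    rw [hins, rmvA_append ht1 hw ht2, ← hdec]
  · rw [insB_eq_self hsl, rmvA_eq_self htl]

lemma rmv_ins_id {A : Finset ℕ} {t s : ℕ} {P : Finset (List ℤ)} {l₀ l₁ l₂ : List ℤ} {w z : ℤ}
    (hP : IsSPIL0 A P) (hl₀ : l₀ ∈ P) (hdec : l₀ = l₁ ++ w :: z :: l₂) (hw : w.natAbs = t)
    (hzs : z.natAbs = s) :
    (P.image (rmvA t)).image (insB w s) = P := by
  classical
  rw [Finset.image_image]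
  apply image_eq_self
  intro l hl
  simp only [Function.comp_apply]
  have hwl₀ : w ∈ l₀ := by rw [hdec]; simp
  have hzl₀ : z ∈ l₀ := by rw [hdec]; simp
  have htl₀ : t ∈ absL l₀ := hw ▸ List.mem_map_of_mem (f := Int.natAbs) hwl₀
  have hsl₀ : s ∈ absL l₀ := hzs ▸ List.mem_map_of_mem (f := Int.natAbs) hzl₀
  have hnd₀ : (absL l₀).Nodup := (hP.1 l₀ hl₀).2.2.1
  by_cases hle : l = l₀
  · subst hle
    obtain ⟨ht1, ht2, hnd'⟩ := nodup_of_dec hw (hdec ▸ hnd₀)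
    have hrm : rmvA t l = l₁ ++ z :: l₂ := by rw [hdec]; exact rmvA_append ht1 hw ht2
    have hs1 : s ∉ absL l₁ := by
      intro hc
      have h2 : absL (l₁ ++ z :: l₂) = absL l₁ ++ s :: absL l₂ := by simp [absL, hzs]
      rw [h2] at hnd'
      have hnm := List.nodup_middle.1 hnd'
      rw [List.nodup_cons, List.mem_append] at hnm
      exact hnm.1 (Or.inl hc)
    rw [hrm, insB_append hs1 hzs, ← hdec]
  · have htl : t ∉ absL l := fun hc => hle (block_unique hP hl hl₀ hc htl₀)
    have hsl : s ∉ absL l := fun hc => hle (block_unique hP hl hl₀ hc hsl₀)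
    rw [rmvA_eq_self htl, insB_eq_self hsl]


lemma hlast0_of_zero {A : Finset ℕ} {f : ℕ → ℕ} {P : Finset (List ℤ)} (hP : IsSPIL0 A P)
    (hzero : ∀ v ∈ A, f v = 0 → v = 0) :
    ∀ l ∈ P, ∀ x ∈ l, f x.natAbs = 0 → l.getLastD (-1) = x ∧ 0 ≤ x := by
  intro l hl x hx h
  have h1 : x.natAbs = 0 := hzero _ ((hP.1 l hl).2.1 x hx) h
  have hx0 : x = 0 := by omega
  subst hx0
  exact ⟨(hP.1 l hl).2.2.2.2 hx, le_rfl⟩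

lemma hne_of_zero {A : Finset ℕ} {f : ℕ → ℕ} {P : Finset (List ℤ)} (hP : IsSPIL0 A P)
    (hzero : ∀ v ∈ A, f v = 0 → v = 0) :
    ∀ l ∈ P, ∀ x ∈ l, x < 0 → f x.natAbs ≠ 0 := by
  intro l hl x hx hneg h
  have h1 : x.natAbs = 0 := hzero _ ((hP.1 l hl).2.1 x hx) h
  omega

lemma exists_last (l : List ℤ) (h : l ≠ []) (d : ℤ) :
    ∃ a x, l = a ++ [x] ∧ l.getLastD d = x := by
  induction l generalizing d with
  | nil => exact absurd rfl h
  | cons y t ih =>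
      cases t with
      | nil => exact ⟨[], y, rfl, rfl⟩
      | cons u t' =>
          obtain ⟨a, x, hax, hgl⟩ := ih (by simp) y
          refine ⟨y :: a, x, by rw [List.cons_append, ← hax], ?_⟩
          rw [List.getLastD_cons, hgl]


def fM (n : ℕ) : ℕ → ℕ := fun v => if v = 0 then n + 1 else v
def fInv (n : ℕ) : ℕ → ℕ := fun v => if v = n + 1 then 0 else v
def sgn2 : Finset ℤ := {1, -1}

lemma gr1 (n : ℕ) : insert (n+1) (Finset.Icc 1 n) = Finset.Icc 1 (n+1) := by
  ext x; simp; omega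

lemma gr2 (n : ℕ) : (Finset.Icc 1 (n+1)).erase (n+1) = Finset.Icc 1 n := by
  ext x; simp <;> omega

lemma grM : ∀ n, (Finset.range (n+1)).image (fM n) = Finset.Icc 1 (n+1) := by
  intro n
  ext x
  simp only [Finset.mem_image, Finset.mem_range, Finset.mem_Icc, fM]
  constructor
  · rintro ⟨a, ha, rfl⟩
    split_ifs <;> omega
  · intro hx
    by_cases h : x = n + 1
    · exact ⟨0, by omega, by simp [h]⟩
    · exact ⟨x, by omega, by rw [if_neg (by omega)]⟩

lemma grInv : ∀ n, (Finset.Icc 1 (n+1)).image (fInv n) = Finset.range (n+1) := by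
  intro n
  ext x
  simp only [Finset.mem_image, Finset.mem_range, Finset.mem_Icc, fInv]
  constructor
  · rintro ⟨a, ha, rfl⟩
    split_ifs <;> omega
  · intro hx
    by_cases h : x = 0
    · exact ⟨n+1, by omega, by simp [h]⟩
    · exact ⟨x, by omega, by rw [if_neg (by omega)]⟩

lemma injM (n : ℕ) : Set.InjOn (fM n) ↑(Finset.range (n+1)) := by
  intro a ha b hb hab
  simp only [Finset.coe_range, Set.mem_Iio] at ha hb
  simp only [fM] at hab
  split_ifs at hab <;> omega

lemma injInv (n : ℕ) : Set.InjOn (fInv n) ↑(Finset.Icc 1 (n+1)) := by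
  intro a ha b hb hab
  simp only [Finset.coe_Icc, Set.mem_Icc] at ha hb
  simp only [fInv] at hab
  split_ifs at hab <;> omega

lemma zeroM (n : ℕ) : ∀ v ∈ Finset.range (n+1), fM n v = 0 → v = 0 := by
  intro v _ h
  simp only [fM] at h
  split_ifs at h <;> omega

lemma fgM (n : ℕ) : ∀ v ∈ Finset.range (n+1), fInv n (fM n v) = v := by
  intro v hv
  simp only [Finset.mem_range] at hv
  simp only [fM, fInv]
  split_ifs <;> omega

lemma gfM (n : ℕ) : ∀ v ∈ Finset.Icc 1 (n+1), fM n (fInv n v) = v := by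
  intro v hv
  simp only [Finset.mem_Icc] at hv
  simp only [fM, fInv]
  split_ifs <;> omega

lemma getLastD_concat (a : List ℤ) (c d : ℤ) : (a ++ [c]).getLastD d = c :=
  getLastD_append_cons a [] c d

lemma ncard_SL (n : ℕ) :
    {P : Finset (List ℤ) | IsSPIL0 (Finset.Icc 1 (n+1)) P ∧
      ∃ l ∈ P, ∃ a : List ℤ, l = a ++ [((n+1 : ℕ) : ℤ)]}.ncard
      = NSP (Finset.range (n+1)) := by
  classical
  apply ncard_of_bijOn (g := fun P => P.image (List.map (relZ (fM n))))
  constructor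
  · -- MapsTo
    intro P hP
    simp only [Set.mem_setOf_eq] at hP ⊢
    constructor
    · exact map_P_valid (grM n) (injM n) hP (hlast0_of_zero hP (zeroM n))
    · have h0g : (0 : ℕ) ∈ Finset.range (n+1) := by simp
      obtain ⟨l₀, hl₀, habs⟩ := exists_block hP h0g
      obtain ⟨x, hx, hxa⟩ := List.mem_map.1 habs
      have hx0 : x = 0 := by omega
      obtain ⟨a, c, hdec, hgl⟩ := exists_last l₀ (hP.1 l₀ hl₀).1 (-1)
      have hc0 : c = 0 := by rw [← hgl]; exact (hP.1 l₀ hl₀).2.2.2.2 (hx0 ▸ hx)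
      refine ⟨l₀.map (relZ (fM n)), Finset.mem_image_of_mem _ hl₀,
        a.map (relZ (fM n)), ?_⟩
      rw [hdec, hc0, List.map_append]
      simp [relZ, fM]
  · constructor
    · -- InjOn
      intro P hP P' hP' heq
      simp only [Set.mem_setOf_eq] at hP hP'
      have h1 := map_P_comp_id (fgM n) hP (hne_of_zero hP (zeroM n))
      have h2 := map_P_comp_id (fgM n) hP' (hne_of_zero hP' (zeroM n))
      rw [← h1, ← h2]
      exact congrArg _ heq
    · -- SurjOn
      intro Q hQ'
      simp only [Set.mem_setOf_eq] at hQ'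
      obtain ⟨hQ, lend, hlend, a, hlenddec⟩ := hQ'
      have hlastend : lend.getLastD (-1) = ((n+1 : ℕ) : ℤ) := by
        rw [hlenddec]; exact getLastD_concat a _ _
      have hmemMend : ((n+1 : ℕ) : ℤ) ∈ lend := by rw [hlenddec]; simp
      have habsMend : (n+1) ∈ absL lend := by
        have := List.mem_map_of_mem (f := Int.natAbs) hmemMend
        rw [Int.natAbs_natCast] at this; exact this
      have key : ∀ l ∈ Q, ∀ x ∈ l, x.natAbs = n+1 →
          x = ((n+1 : ℕ) : ℤ) ∧ l.getLastD (-1) = x := by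
        intro l hl x hx hxabs
        have hlQ : l = lend := block_unique hQ hl hlend
          (hxabs ▸ List.mem_map_of_mem (f := Int.natAbs) hx) habsMend
        subst hlQ
        have hxeq : x = ((n+1 : ℕ) : ℤ) :=
          uniq_entry (hQ.1 l hl).2.2.1 hx hmemMend (by rw [hxabs, Int.natAbs_natCast])
        exact ⟨hxeq, by rw [hlastend, hxeq]⟩
      have hlast0 : ∀ l ∈ Q, ∀ x ∈ l, fInv n x.natAbs = 0 →
          l.getLastD (-1) = x ∧ 0 ≤ x := by
        intro l hl x hx h
        have hxA : x.natAbs ∈ Finset.Icc 1 (n+1) := (hQ.1 l hl).2.1 x hx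
        simp only [Finset.mem_Icc] at hxA
        have : x.natAbs = n+1 := by
          simp only [fInv] at h
          split_ifs at h <;> omega
        obtain ⟨hxeq, hlx⟩ := key l hl x hx this
        exact ⟨hlx, by rw [hxeq]; positivity⟩
      have hne : ∀ l ∈ Q, ∀ x ∈ l, x < 0 → fInv n x.natAbs ≠ 0 := by
        intro l hl x hx hneg h
        have hxA : x.natAbs ∈ Finset.Icc 1 (n+1) := (hQ.1 l hl).2.1 x hx
        simp only [Finset.mem_Icc] at hxA
        have hxM : x.natAbs = n+1 := by
          simp only [fInv] at h
          split_ifs at h <;> omega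
        obtain ⟨hxeq, _⟩ := key l hl x hx hxM
        rw [hxeq] at hneg
        omega
      refine ⟨Q.image (List.map (relZ (fInv n))), ?_, ?_⟩
      · exact map_P_valid (grInv n) (injInv n) hQ hlast0
      · exact map_P_comp_id (gfM n) hQ hne

lemma ncard_SM (n : ℕ) :
    {P : Finset (List ℤ) | IsSPIL0 (Finset.Icc 1 (n+1)) P ∧
      ∃ l ∈ P, ∃ (a : List ℤ) (w z : ℤ) (b : List ℤ),
        l = a ++ w :: z :: b ∧ w.natAbs = n+1}.ncard
      = 2 * n * NSP (Finset.Icc 1 n) := by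
  classical
  have hM1 : (n+1 : ℕ) ∉ Finset.Icc 1 n := by simp
  have key : ∀ ε : ℤ, ε ∈ sgn2 → (ε * ((n+1 : ℕ) : ℤ)).natAbs = n + 1 := by
    intro ε hε
    rw [Int.natAbs_mul]
    rcases (by simpa [sgn2] using hε : ε = 1 ∨ ε = -1) with rfl | rfl <;> simp <;> omega
  have hbij : Set.BijOn
      (fun q : (ℤ × ℕ) × Finset (List ℤ) => q.2.image (insB (q.1.1 * ((n+1 : ℕ) : ℤ)) q.1.2))
      ((↑(sgn2 ×ˢ Finset.Icc 1 n) : Set (ℤ × ℕ)) ×ˢ {P | IsSPIL0 (Finset.Icc 1 n) P})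
      {P : Finset (List ℤ) | IsSPIL0 (Finset.Icc 1 (n+1)) P ∧
        ∃ l ∈ P, ∃ (a : List ℤ) (w z : ℤ) (b : List ℤ),
          l = a ++ w :: z :: b ∧ w.natAbs = n+1} := by
    constructor
    · rintro ⟨⟨ε, s⟩, P⟩ ⟨hq1, hq2⟩
      simp only [Finset.mem_coe, Finset.mem_product] at hq1
      simp only [Set.mem_setOf_eq] at hq2 ⊢
      have hs : s ∈ Finset.Icc 1 n := hq1.2
      have hw := key ε hq1.1
      obtain ⟨hval, l₁, z, l₂, hmem, hzs⟩ :=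
        insB_P_valid hq2 hs hM1 hw (by omega)
      rw [gr1 n] at hval
      exact ⟨hval, _, hmem, l₁, _, z, l₂, rfl, hw⟩
    · constructor
      · rintro ⟨⟨ε, s⟩, P⟩ ⟨hq1, hq2⟩ ⟨⟨ε', s'⟩, P'⟩ ⟨hq1', hq2'⟩ heq
        simp only [Finset.mem_coe, Finset.mem_product] at hq1 hq1'
        simp only [Set.mem_setOf_eq] at hq2 hq2' heq
        have hw := key ε hq1.1
        have hw' := key ε' hq1'.1
        -- the common image Q
        obtain ⟨hvalQ, l₁, z, l₂, hmemQ, hzs⟩ :=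
          insB_P_valid hq2 hq1.2 hM1 hw (by omega)
        obtain ⟨hvalQ', l₁', z', l₂', hmemQ', hzs'⟩ :=
          insB_P_valid hq2' hq1'.2 hM1 hw' (by omega)
        rw [heq] at hmemQ hvalQ
        have hsame : l₁ ++ (ε * ((n+1:ℕ):ℤ)) :: z :: l₂
            = l₁' ++ (ε' * ((n+1:ℕ):ℤ)) :: z' :: l₂' := by
          apply block_unique hvalQ' hmemQ hmemQ' (v := n+1)
          · have hm : (ε * ((n+1:ℕ):ℤ)) ∈ l₁ ++ (ε * ((n+1:ℕ):ℤ)) :: z :: l₂ := by simp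
            have h2 := List.mem_map_of_mem (f := Int.natAbs) hm
            rw [hw] at h2
            exact h2
          · have hm : (ε' * ((n+1:ℕ):ℤ)) ∈ l₁' ++ (ε' * ((n+1:ℕ):ℤ)) :: z' :: l₂' := by simp
            have h2 := List.mem_map_of_mem (f := Int.natAbs) hm
            rw [hw'] at h2
            exact h2
        have hndl : (absL (l₁ ++ (ε * ((n+1:ℕ):ℤ)) :: z :: l₂)).Nodup :=
          (hvalQ'.1 _ hmemQ).2.2.1
        obtain ⟨he1, he2, he3⟩ := uniq_split hndl hsame (by rw [hw, hw'])
        have hεε : ε = ε' := by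
          rcases (by simpa [sgn2] using hq1.1 : ε = 1 ∨ ε = -1) with rfl | rfl <;>
          rcases (by simpa [sgn2] using hq1'.1 : ε' = 1 ∨ ε' = -1) with rfl | rfl <;>
          omega
        have hss : s = s' := by
          rw [← hzs, ← hzs']
          have : z = z' := by simpa using congrArg List.headI he3
          rw [this]
        have hPP : P = P' := by
          have e1 : (P.image (insB (ε * ((n+1:ℕ):ℤ)) s)).image (rmvA (n+1)) = P :=
            ins_rmv_id hq2 hM1 hw
          have e2 : (P'.image (insB (ε' * ((n+1:ℕ):ℤ)) s')).image (rmvA (n+1)) = P' :=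
            ins_rmv_id hq2' hM1 hw'
          rw [← e1, ← e2, heq]
        rw [hεε, hss, hPP]
      · rintro Q ⟨hQ, l, hl, a, w, z, b, hdec, hwabs⟩
        have hndl : (absL l).Nodup := (hQ.1 l hl).2.2.1
        obtain ⟨ht1, ht2, _⟩ := nodup_of_dec hwabs (hdec ▸ hndl)
        have hzabs : z.natAbs ∈ Finset.Icc 1 (n+1) :=
          (hQ.1 l hl).2.1 z (by rw [hdec]; simp)
        have hzM : z.natAbs ≠ n + 1 := by
          intro hc
          exact ht2 (by simp [absL, hc])
        have hzIcc : z.natAbs ∈ Finset.Icc 1 n := by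
          simp only [Finset.mem_Icc] at hzabs ⊢
          omega
        have hεw : w = (if 0 ≤ w then (1:ℤ) else -1) * ((n+1:ℕ):ℤ) := by
          split_ifs with h <;> omega
        refine ⟨⟨(if 0 ≤ w then (1:ℤ) else -1, z.natAbs), Q.image (rmvA (n+1))⟩, ⟨?_, ?_⟩, ?_⟩
        · simp only [Finset.mem_coe, Finset.mem_product]
          constructor
          · simp only [sgn2, Finset.mem_insert, Finset.mem_singleton]
            split_ifs <;> simp
          · exact hzIcc
        · simp only [Set.mem_setOf_eq]
          have := rmvA_P_valid hQ hl hdec hwabs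
          rwa [gr2 n] at this
        · simp only
          rw [← hεw]
          exact rmv_ins_id hQ hl hdec hwabs rfl
  have := ncard_of_bijOn hbij
  rw [this, ncard_prod, Set.ncard_coe_finset, Finset.card_product]
  have hs2 : sgn2.card = 2 := by decide
  rw [hs2, Nat.card_Icc]
  have hn : n + 1 - 1 = n := by omega
  rw [hn]
  rfl


lemma E2 (n : ℕ) :
    NSP (Finset.Icc 1 (n+1)) = 2 * n * NSP (Finset.Icc 1 n) + NSP (Finset.range (n+1)) := by
  classical
  have hunion : {P : Finset (List ℤ) | IsSPIL0 (Finset.Icc 1 (n+1)) P} =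
      {P : Finset (List ℤ) | IsSPIL0 (Finset.Icc 1 (n+1)) P ∧
        ∃ l ∈ P, ∃ (a : List ℤ) (w z : ℤ) (b : List ℤ),
          l = a ++ w :: z :: b ∧ w.natAbs = n+1} ∪
      {P : Finset (List ℤ) | IsSPIL0 (Finset.Icc 1 (n+1)) P ∧
        ∃ l ∈ P, ∃ a : List ℤ, l = a ++ [((n+1 : ℕ) : ℤ)]} := by
    ext P
    simp only [Set.mem_union, Set.mem_setOf_eq]
    constructor
    · intro hP
      have hMg : (n+1) ∈ Finset.Icc 1 (n+1) := by simp
      obtain ⟨l, hl, habs⟩ := exists_block hP hMg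
      obtain ⟨x, hx, hxa⟩ := List.mem_map.1 habs
      obtain ⟨a, b, hdec⟩ := List.append_of_mem hx
      cases b with
      | nil =>
          right
          have hlast : l.getLastD (-1) = x := by rw [hdec]; exact getLastD_concat a x (-1)
          have hge : (0:ℤ) ≤ x := hlast ▸ (hP.1 l hl).2.2.2.1
          have hxx : x = ((n+1 : ℕ) : ℤ) := by omega
          exact ⟨hP, l, hl, a, by rw [hdec, hxx]⟩
      | cons z b' =>
          left
          exact ⟨hP, l, hl, a, x, z, b', hdec, hxa⟩
    · rintro (⟨h, _⟩ | ⟨h, _⟩) <;> exact h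
  have hdisj : Disjoint
      {P : Finset (List ℤ) | IsSPIL0 (Finset.Icc 1 (n+1)) P ∧
        ∃ l ∈ P, ∃ (a : List ℤ) (w z : ℤ) (b : List ℤ),
          l = a ++ w :: z :: b ∧ w.natAbs = n+1}
      {P : Finset (List ℤ) | IsSPIL0 (Finset.Icc 1 (n+1)) P ∧
        ∃ l ∈ P, ∃ a : List ℤ, l = a ++ [((n+1 : ℕ) : ℤ)]} := by
    rw [Set.disjoint_left]
    rintro P ⟨hP, l, hl, a, w, z, b, hdec, hwabs⟩ ⟨_, l', hl', a', hdec'⟩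
    have habsl : (n+1) ∈ absL l := by
      have hm : w ∈ l := by rw [hdec]; simp
      exact hwabs ▸ List.mem_map_of_mem (f := Int.natAbs) hm
    have habsl' : (n+1) ∈ absL l' := by
      have hm : ((n+1 : ℕ) : ℤ) ∈ l' := by rw [hdec']; simp
      have h2 := List.mem_map_of_mem (f := Int.natAbs) hm
      rw [Int.natAbs_natCast] at h2; exact h2
    have hll : l = l' := block_unique hP hl hl' habsl habsl'
    rw [← hll] at hdec'
    have hnd : (absL (a ++ w :: z :: b)).Nodup := hdec ▸ (hP.1 l hl).2.2.1
    have heq2 : a ++ w :: z :: b = a' ++ ((n+1 : ℕ) : ℤ) :: [] := by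
      rw [← hdec, hdec']
    obtain ⟨_, _, h3⟩ := uniq_split hnd heq2 (by rw [hwabs]; simp; omega)
    exact List.cons_ne_nil z b h3
  have hfin1 : {P : Finset (List ℤ) | IsSPIL0 (Finset.Icc 1 (n+1)) P ∧
      ∃ l ∈ P, ∃ (a : List ℤ) (w z : ℤ) (b : List ℤ),
        l = a ++ w :: z :: b ∧ w.natAbs = n+1}.Finite :=
    Set.Finite.subset (finite_spil _) (fun P hp => hp.1)
  have hfin2 : {P : Finset (List ℤ) | IsSPIL0 (Finset.Icc 1 (n+1)) P ∧
      ∃ l ∈ P, ∃ a : List ℤ, l = a ++ [((n+1 : ℕ) : ℤ)]}.Finite :=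
    Set.Finite.subset (finite_spil _) (fun P hp => hp.1)
  have := Set.ncard_union_eq hdisj hfin1 hfin2
  unfold NSP
  rw [hunion, this, ncard_SM n, ncard_SL n]
  rfl


def ush (y : ℕ) : ℕ → ℕ := fun v => if v < y then v else v + 1
def dsh (y : ℕ) : ℕ → ℕ := fun v => if v < y then v else v - 1

section shifts
variable {n y : ℕ}

lemma grU (hy1 : 1 ≤ y) (hyn : y ≤ n) : (Finset.range n).image (ush y) = (Finset.range (n+1)).erase y := by
  ext x
  simp only [Finset.mem_image, Finset.mem_range, Finset.mem_erase, ush]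
  constructor
  · rintro ⟨a, ha, rfl⟩
    split_ifs <;> omega
  · rintro ⟨hxy, hx⟩
    rcases lt_or_ge x y with h | h
    · exact ⟨x, by omega, if_pos h⟩
    · exact ⟨x - 1, by omega, by rw [if_neg (by omega)]; omega⟩

lemma grD (hyn : y ≤ n) : ((Finset.range (n+1)).erase y).image (dsh y) = Finset.range n := by
  ext x
  simp only [Finset.mem_image, Finset.mem_range, Finset.mem_erase, dsh]
  constructor
  · rintro ⟨a, ⟨hay, ha⟩, rfl⟩
    split_ifs <;> omega
  · intro hx
    rcases lt_or_ge x y with h | h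
    · exact ⟨x, ⟨by omega, by omega⟩, if_pos h⟩
    · exact ⟨x + 1, ⟨by omega, by omega⟩, by rw [if_neg (by omega)]; omega⟩

lemma injU : Set.InjOn (ush y) ↑(Finset.range n) := by
  intro a _ b _ hab
  simp only [ush] at hab
  split_ifs at hab <;> omega

lemma injD : Set.InjOn (dsh y) ↑((Finset.range (n+1)).erase y) := by
  intro a ha b hb hab
  simp only [Finset.coe_erase, Set.mem_diff, Finset.mem_coe, Finset.mem_range,
    Set.mem_singleton_iff] at ha hb
  simp only [dsh] at hab
  split_ifs at hab <;> omega

lemma zU : ∀ v ∈ Finset.range n, ush y v = 0 → v = 0 := by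
  intro v _ h
  simp only [ush] at h
  split_ifs at h <;> omega

lemma zD (hy1 : 1 ≤ y) : ∀ v ∈ (Finset.range (n+1)).erase y, dsh y v = 0 → v = 0 := by
  intro v hv h
  simp only [Finset.mem_erase, Finset.mem_range] at hv
  simp only [dsh] at h
  split_ifs at h <;> omega

lemma fgU : ∀ v ∈ Finset.range n, dsh y (ush y v) = v := by
  intro v _
  simp only [ush, dsh]
  split_ifs <;> omega

lemma gfU : ∀ v ∈ (Finset.range (n+1)).erase y, ush y (dsh y v) = v := by
  intro v hv
  simp only [Finset.mem_erase, Finset.mem_range] at hv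
  simp only [ush, dsh]
  split_ifs <;> omega

end shifts

lemma zero_tail {A : Finset ℕ} {l a b : List ℤ} (h : IsSignedList0 A l)
    (hdec : l = a ++ (0:ℤ) :: b) : b = [] := by
  have h0 : (0:ℤ) ∈ l := by rw [hdec]; simp
  have hl0 : l.getLastD (-1) = 0 := h.2.2.2.2 h0
  obtain ⟨c, d, hcd, hgl⟩ := exists_last l h.1 (-1)
  have hd0 : d = 0 := by rw [← hgl, hl0]
  have heq : a ++ (0:ℤ) :: b = c ++ (0:ℤ) :: [] := by rw [← hdec, hcd, hd0]
  have hnd : (absL (a ++ (0:ℤ) :: b)).Nodup := hdec ▸ h.2.2.1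
  exact (uniq_split hnd heq rfl).2.2

lemma key_sgn {y : ℕ} : ∀ ε : ℤ, ε ∈ sgn2 → (ε * (y : ℤ)).natAbs = y := by
  intro ε hε
  rw [Int.natAbs_mul]
  rcases (by simpa [sgn2] using hε : ε = 1 ∨ ε = -1) with rfl | rfl <;> simp


lemma valid_zero_list (n : ℕ) : IsSignedList0 (Finset.range (n+1)) [(0:ℤ)] := by
  refine ⟨by simp, by simp, by simp, ?_, ?_⟩
  · show (0:ℤ) ≤ [(0:ℤ)].getLastD (-1)
    rfl
  · intro _
    rfl

lemma zero_notmem {n : ℕ} {P : Finset (List ℤ)} (hP : IsSPIL0 (Finset.Icc 1 n) P) :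
    [(0:ℤ)] ∉ P := by
  intro hc
  have h0 : (0:ℕ) ∈ Finset.Icc 1 n := abs_mem_ground hP hc (by simp [absL])
  simp at h0

lemma ncard_single (n : ℕ) :
    {P : Finset (List ℤ) | IsSPIL0 (Finset.range (n+1)) P ∧ [(0:ℤ)] ∈ P}.ncard
      = NSP (Finset.Icc 1 n) := by
  classical
  apply ncard_of_bijOn (g := fun P => insert [(0:ℤ)] P)
  have gr0 : insert (0:ℕ) (Finset.Icc 1 n) = Finset.range (n+1) := by
    ext x; simp; omega
  constructor
  · -- MapsTo
    intro P hP
    simp only [Set.mem_setOf_eq] at hP ⊢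
    have hsub : Finset.Icc 1 n ⊆ Finset.range (n+1) := by rw [← gr0]; exact Finset.subset_insert _ _
    refine ⟨⟨?_, ?_, ?_⟩, Finset.mem_insert_self _ _⟩
    · intro l hl
      rcases Finset.mem_insert.1 hl with rfl | hl'
      · exact valid_zero_list n
      · exact mono_list hsub (hP.1 l hl')
    · intro l hl l' hl' hne
      have hz : ∀ m ∈ P, Disjoint (absL [(0:ℤ)]).toFinset (absL m).toFinset := by
        intro m hm
        simp only [absL, List.map_cons, List.map_nil, List.toFinset_cons, List.toFinset_nil]
        rw [Finset.disjoint_left]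
        intro a ha ha'
        simp only [Int.natAbs_zero, insert_empty_eq, Finset.mem_singleton] at ha
        subst ha
        have := abs_mem_ground hP hm (List.mem_toFinset.1 ha')
        simp at this
      rcases Finset.mem_insert.1 hl with rfl | hl₀ <;> rcases Finset.mem_insert.1 hl' with rfl | hl₀'
      · exact absurd rfl hne
      · exact hz l' hl₀'
      · exact (hz l hl₀).symm
      · exact hP.2.1 l hl₀ l' hl₀' hne
    · rw [Finset.biUnion_insert, hP.2.2, ← gr0]
      simp only [absL, List.map_cons, List.map_nil, List.toFinset_cons, List.toFinset_nil, Int.natAbs_zero]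
      rw [Finset.insert_eq, Finset.union_empty, Finset.insert_eq]
  · constructor
    · -- InjOn
      intro P hP P' hP' heq
      simp only [Set.mem_setOf_eq] at hP hP' heq
      have h1 : (insert [(0:ℤ)] P).erase [(0:ℤ)] = P := Finset.erase_insert (zero_notmem hP)
      have h2 : (insert [(0:ℤ)] P').erase [(0:ℤ)] = P' := Finset.erase_insert (zero_notmem hP')
      have heq' : insert [(0:ℤ)] P = insert [(0:ℤ)] P' := heq
      rw [← h1, ← h2, heq']
    · -- SurjOn
      rintro Q ⟨hQ, h0Q⟩
      have habs0 : (0:ℕ) ∈ absL [(0:ℤ)] := by simp [absL]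
      refine ⟨Q.erase [(0:ℤ)], ?_, Finset.insert_erase h0Q⟩
      simp only [Set.mem_setOf_eq]
      refine ⟨?_, ?_, ?_⟩
      · intro l hl
        obtain ⟨hlne, hlQ⟩ := Finset.mem_erase.1 hl
        obtain ⟨hne, hmem, hnd, hlast, hz0⟩ := hQ.1 l hlQ
        refine ⟨hne, ?_, hnd, hlast, hz0⟩
        intro x hx
        have hxr : x.natAbs ∈ Finset.range (n+1) := hmem x hx
        have hxne : x.natAbs ≠ 0 := by
          intro hc
          exact hlne (block_unique hQ hlQ h0Q
            (hc ▸ List.mem_map_of_mem (f := Int.natAbs) hx) habs0)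
        simp only [Finset.mem_range] at hxr
        simp only [Finset.mem_Icc]
        omega
      · intro l hl l' hl' hne
        exact hQ.2.1 l (Finset.mem_erase.1 hl).2 l' (Finset.mem_erase.1 hl').2 hne
      · ext v
        simp only [Finset.mem_biUnion, Finset.mem_Icc, Finset.mem_erase]
        constructor
        · rintro ⟨l, ⟨hlne, hlQ⟩, hv⟩
          have hvr : v ∈ Finset.range (n+1) := by
            rw [← hQ.2.2]
            exact Finset.mem_biUnion.2 ⟨l, hlQ, hv⟩
          have hvne : v ≠ 0 := by
            intro hc
            exact hlne (block_unique hQ hlQ h0Q (hc ▸ List.mem_toFinset.1 hv) habs0)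
          simp only [Finset.mem_range] at hvr
          omega
        · intro hv
          have hvr : v ∈ Finset.range (n+1) := by simp only [Finset.mem_range]; omega
          rw [← hQ.2.2] at hvr
          obtain ⟨l, hl, hvl⟩ := Finset.mem_biUnion.1 hvr
          refine ⟨l, ⟨?_, hl⟩, hvl⟩
          intro hc
          subst hc
          have : v = 0 := by
            have := List.mem_toFinset.1 hvl
            simpa [absL] using this
          omega


lemma ncard_long (n : ℕ) :
    {P : Finset (List ℤ) | IsSPIL0 (Finset.range (n+1)) P ∧
      ∃ l ∈ P, ∃ (a : List ℤ) (w : ℤ), l = a ++ [w, (0:ℤ)]}.ncard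
      = 2 * n * NSP (Finset.range n) := by
  classical
  have hbij : Set.BijOn
      (fun q : (ℤ × ℕ) × Finset (List ℤ) =>
        (q.2.image (List.map (relZ (ush q.1.2)))).image (insB (q.1.1 * (q.1.2 : ℤ)) 0))
      ((↑(sgn2 ×ˢ Finset.Icc 1 n) : Set (ℤ × ℕ)) ×ˢ {P | IsSPIL0 (Finset.range n) P})
      {P : Finset (List ℤ) | IsSPIL0 (Finset.range (n+1)) P ∧
        ∃ l ∈ P, ∃ (a : List ℤ) (w : ℤ), l = a ++ [w, (0:ℤ)]} := by
    constructor
    · rintro ⟨⟨ε, y⟩, P⟩ ⟨hq1, hq2⟩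
      simp only [Finset.mem_coe, Finset.mem_product, Finset.mem_Icc] at hq1
      simp only [Set.mem_setOf_eq] at hq2 ⊢
      have hε := hq1.1
      have hy1 := hq1.2.1
      have hyn := hq1.2.2
      have hw : (ε * (y:ℤ)).natAbs = y := key_sgn ε hε
      have hyR : y ∈ Finset.range (n+1) := by simp; omega
      have h0E : (0:ℕ) ∈ (Finset.range (n+1)).erase y := by
        simp only [Finset.mem_erase, Finset.mem_range]; omega
      have hP1 : IsSPIL0 ((Finset.range (n+1)).erase y) (P.image (List.map (relZ (ush y)))) :=
        map_P_valid (grU hy1 hyn) injU hq2 (hlast0_of_zero hq2 zU)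
      obtain ⟨hQval, l₁, z, l₂, hmemQ, hzs⟩ :=
        insB_P_valid hP1 h0E (Finset.notMem_erase y _) hw (by omega)
      rw [Finset.insert_erase hyR] at hQval
      have hz0 : z = 0 := by omega
      have hl₂ : l₂ = [] := by
        apply zero_tail (hQval.1 _ hmemQ) (a := l₁ ++ [ε * (y:ℤ)])
        rw [hz0] at *
        simp
      refine ⟨hQval, _, hmemQ, l₁, ε * (y:ℤ), by rw [hz0, hl₂]⟩
    · constructor
      · rintro ⟨⟨ε, y⟩, P⟩ ⟨hq1, hq2⟩ ⟨⟨ε', y'⟩, P'⟩ ⟨hq1', hq2'⟩ heq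
        simp only [Finset.mem_coe, Finset.mem_product, Finset.mem_Icc] at hq1 hq1'
        simp only [Set.mem_setOf_eq] at hq2 hq2' heq
        have hε := hq1.1
        have hy1 := hq1.2.1
        have hyn := hq1.2.2
        have hε' := hq1'.1
        have hy1' := hq1'.2.1
        have hyn' := hq1'.2.2
        have hw : (ε * (y:ℤ)).natAbs = y := key_sgn ε hε
        have hw' : (ε' * (y':ℤ)).natAbs = y' := key_sgn ε' hε'
        have hyR : y ∈ Finset.range (n+1) := by simp; omega
        have hyR' : y' ∈ Finset.range (n+1) := by simp; omega
        have h0E : (0:ℕ) ∈ (Finset.range (n+1)).erase y := by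
          simp only [Finset.mem_erase, Finset.mem_range]; omega
        have h0E' : (0:ℕ) ∈ (Finset.range (n+1)).erase y' := by
          simp only [Finset.mem_erase, Finset.mem_range]; omega
        have hP1 : IsSPIL0 ((Finset.range (n+1)).erase y)
            (P.image (List.map (relZ (ush y)))) :=
          map_P_valid (grU hy1 hyn) injU hq2 (hlast0_of_zero hq2 zU)
        have hP1' : IsSPIL0 ((Finset.range (n+1)).erase y')
            (P'.image (List.map (relZ (ush y')))) :=
          map_P_valid (grU hy1' hyn') injU hq2' (hlast0_of_zero hq2' zU)
        obtain ⟨hQval, l₁, z, l₂, hmemQ, hzs⟩ :=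
          insB_P_valid hP1 h0E (Finset.notMem_erase y _) hw (by omega)
        obtain ⟨hQval', l₁', z', l₂', hmemQ', hzs'⟩ :=
          insB_P_valid hP1' h0E' (Finset.notMem_erase y' _) hw' (by omega)
        rw [Finset.insert_erase hyR] at hQval
        rw [Finset.insert_erase hyR'] at hQval'
        have hz0 : z = 0 := by omega
        have hz0' : z' = 0 := by omega
        rw [heq] at hmemQ hQval
        subst hz0
        subst hz0'
        have hl₂ : l₂ = [] := by
          apply zero_tail (hQval'.1 _ hmemQ) (a := l₁ ++ [ε * (y:ℤ)])
          simp
        have hl₂' : l₂' = [] := by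
          apply zero_tail (hQval'.1 _ hmemQ') (a := l₁' ++ [ε' * (y':ℤ)])
          simp
        subst hl₂
        subst hl₂'
        have hsame : l₁ ++ (ε * (y:ℤ)) :: (0:ℤ) :: [] = l₁' ++ (ε' * (y':ℤ)) :: (0:ℤ) :: [] := by
          apply block_unique hQval' hmemQ hmemQ' (v := 0)
          · simp [absL]
          · simp [absL]
        have hsame2 : (l₁ ++ [ε * (y:ℤ)]) ++ (0:ℤ) :: [] =
            (l₁' ++ [ε' * (y':ℤ)]) ++ (0:ℤ) :: [] := by
          simpa using hsame
        have hnd : (absL ((l₁ ++ [ε * (y:ℤ)]) ++ (0:ℤ) :: [])).Nodup := by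
          have := (hQval'.1 _ hmemQ).2.2.1
          simpa using this
        obtain ⟨hpre, _, _⟩ := uniq_split hnd hsame2 rfl
        have hlw : ε * (y:ℤ) = ε' * (y':ℤ) := by
          have h1 := getLastD_concat l₁ (ε * (y:ℤ)) 0
          have h2 := getLastD_concat l₁' (ε' * (y':ℤ)) 0
          rw [← h1, ← h2, hpre]
        have hyy : y = y' := by rw [← hw, ← hw', hlw]
        have hεε : ε = ε' := by
          rcases (by simpa [sgn2] using hε : ε = 1 ∨ ε = -1) with rfl | rfl <;>
          rcases (by simpa [sgn2] using hε' : ε' = 1 ∨ ε' = -1) with rfl | rfl <;>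
          omega
        subst hyy
        subst hεε
        have e1 : ((P.image (List.map (relZ (ush y)))).image (insB (ε * (y:ℤ)) 0)).image
            (rmvA y) = P.image (List.map (relZ (ush y))) :=
          ins_rmv_id hP1 (Finset.notMem_erase y _) hw
        have e1' : ((P'.image (List.map (relZ (ush y)))).image (insB (ε * (y:ℤ)) 0)).image
            (rmvA y) = P'.image (List.map (relZ (ush y))) :=
          ins_rmv_id hP1' (Finset.notMem_erase y _) hw
        have e2 : (P.image (List.map (relZ (ush y)))).image (List.map (relZ (dsh y))) = P :=
          map_P_comp_id fgU hq2 (hne_of_zero hq2 zU)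
        have e2' : (P'.image (List.map (relZ (ush y)))).image (List.map (relZ (dsh y))) = P' :=
          map_P_comp_id fgU hq2' (hne_of_zero hq2' zU)
        have hPP : P = P' := by
          rw [← e2, ← e2', ← e1, ← e1', heq]
        rw [hPP]
      · rintro Q ⟨hQ, l, hl, a, w, hdec⟩
        have hdec' : l = a ++ w :: (0:ℤ) :: [] := hdec
        have hnd : (absL l).Nodup := (hQ.1 l hl).2.2.1
        obtain ⟨ht1, ht2, _⟩ := nodup_of_dec (rfl : w.natAbs = w.natAbs) (hdec' ▸ hnd)
        have hy0 : w.natAbs ≠ 0 := by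
          intro hc
          exact ht2 (by simp [absL, hc])
        have hyR : w.natAbs ∈ Finset.range (n+1) :=
          (hQ.1 l hl).2.1 w (by rw [hdec']; simp)
        have hyn : w.natAbs ≤ n := by
          simp only [Finset.mem_range] at hyR
          omega
        have hy1 : 1 ≤ w.natAbs := by omega
        have hεw : w = (if 0 ≤ w then (1:ℤ) else -1) * (w.natAbs : ℤ) := by
          split_ifs with h <;> omega
        have hP1 : IsSPIL0 ((Finset.range (n+1)).erase w.natAbs) (Q.image (rmvA w.natAbs)) :=
          rmvA_P_valid hQ hl hdec' rfl
        have hP : IsSPIL0 (Finset.range n)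
            ((Q.image (rmvA w.natAbs)).image (List.map (relZ (dsh w.natAbs)))) :=
          map_P_valid (grD hyn) injD hP1 (hlast0_of_zero hP1 (zD hy1))
        refine ⟨⟨(if 0 ≤ w then (1:ℤ) else -1, w.natAbs),
          (Q.image (rmvA w.natAbs)).image (List.map (relZ (dsh w.natAbs)))⟩, ⟨?_, hP⟩, ?_⟩
        · simp only [Finset.mem_coe, Finset.mem_product, Finset.mem_Icc]
          refine ⟨?_, hy1, hyn⟩
          simp only [sgn2, Finset.mem_insert, Finset.mem_singleton]
          split_ifs <;> simp
        · simp only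
          have step1 : (((Q.image (rmvA w.natAbs)).image (List.map (relZ (dsh w.natAbs)))).image
              (List.map (relZ (ush w.natAbs)))) = Q.image (rmvA w.natAbs) :=
            map_P_comp_id gfU hP1 (hne_of_zero hP1 (zD hy1))
          have step2 : (Q.image (rmvA w.natAbs)).image (insB w 0) = Q :=
            rmv_ins_id hQ hl hdec' rfl rfl
          rw [step1, ← hεw, step2]
  have := ncard_of_bijOn hbij
  rw [this, ncard_prod, Set.ncard_coe_finset, Finset.card_product]
  have hs2 : sgn2.card = 2 := by decide
  rw [hs2, Nat.card_Icc]
  have hnn : n + 1 - 1 = n := by omega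
  rw [hnn]
  rfl


lemma E1 (n : ℕ) :
    NSP (Finset.range (n+1)) = NSP (Finset.Icc 1 n) + 2 * n * NSP (Finset.range n) := by
  classical
  have hunion : {P : Finset (List ℤ) | IsSPIL0 (Finset.range (n+1)) P} =
      {P : Finset (List ℤ) | IsSPIL0 (Finset.range (n+1)) P ∧ [(0:ℤ)] ∈ P} ∪
      {P : Finset (List ℤ) | IsSPIL0 (Finset.range (n+1)) P ∧
        ∃ l ∈ P, ∃ (a : List ℤ) (w : ℤ), l = a ++ [w, (0:ℤ)]} := by
    ext P
    simp only [Set.mem_union, Set.mem_setOf_eq]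
    constructor
    · intro hP
      have h0g : (0:ℕ) ∈ Finset.range (n+1) := by simp
      obtain ⟨l, hl, habs⟩ := exists_block hP h0g
      obtain ⟨x, hx, hxa⟩ := List.mem_map.1 habs
      have hx0 : x = 0 := by omega
      subst hx0
      have hlast : l.getLastD (-1) = 0 := (hP.1 l hl).2.2.2.2 hx
      obtain ⟨c, d, hcd, hgl⟩ := exists_last l (hP.1 l hl).1 (-1)
      have hd0 : d = 0 := by rw [← hgl, hlast]
      subst hd0
      rcases List.eq_nil_or_concat c with rfl | ⟨c', w, hc'⟩
      · left
        refine ⟨hP, ?_⟩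
        have : l = [(0:ℤ)] := by simpa using hcd
        rwa [this] at hl
      · right
        refine ⟨hP, l, hl, c', w, ?_⟩
        rw [hcd, hc']
        simp
    · rintro (⟨h, _⟩ | ⟨h, _⟩) <;> exact h
  have hdisj : Disjoint
      {P : Finset (List ℤ) | IsSPIL0 (Finset.range (n+1)) P ∧ [(0:ℤ)] ∈ P}
      {P : Finset (List ℤ) | IsSPIL0 (Finset.range (n+1)) P ∧
        ∃ l ∈ P, ∃ (a : List ℤ) (w : ℤ), l = a ++ [w, (0:ℤ)]} := by
    rw [Set.disjoint_left]
    rintro P ⟨hP, h0P⟩ ⟨_, l, hl, a, w, hdec⟩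
    have h1 : (0:ℕ) ∈ absL [(0:ℤ)] := by simp [absL]
    have h2 : (0:ℕ) ∈ absL l := by
      rw [hdec]
      have : (0:ℤ) ∈ a ++ [w, (0:ℤ)] := by simp
      simpa using List.mem_map_of_mem (f := Int.natAbs) this
    have := block_unique hP h0P hl h1 h2
    have hlen := congrArg List.length this
    rw [hdec] at hlen
    simp at hlen
  have hfin1 : {P : Finset (List ℤ) | IsSPIL0 (Finset.range (n+1)) P ∧ [(0:ℤ)] ∈ P}.Finite :=
    Set.Finite.subset (finite_spil _) (fun P hp => hp.1)
  have hfin2 : {P : Finset (List ℤ) | IsSPIL0 (Finset.range (n+1)) P ∧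
      ∃ l ∈ P, ∃ (a : List ℤ) (w : ℤ), l = a ++ [w, (0:ℤ)]}.Finite :=
    Set.Finite.subset (finite_spil _) (fun P hp => hp.1)
  have hcard := Set.ncard_union_eq hdisj hfin1 hfin2
  unfold NSP
  rw [hunion, hcard, ncard_single n, ncard_long n]
  rfl

end SPIL

/-- For `n ≥ 1`, `b(n+1) + 4n² b(n-1) = (3 + 4n) b(n)`. -/
theorem statement12 (n : ℕ) (hn : 1 ≤ n) :
    bSPIL0 (n + 1) + 4 * n ^ 2 * bSPIL0 (n - 1) = (3 + 4 * n) * bSPIL0 n := by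
  obtain ⟨m, rfl⟩ : ∃ m, n = m + 1 := ⟨n - 1, by omega⟩
  have e1b := SPIL.E1 (m+1)
  have e1c := SPIL.E1 (m+2)
  have e2 := SPIL.E2 (m+1)
  simp only [show m+1+1 = m+2 from rfl, show m+2+1 = m+3 from rfl] at e1b e1c e2
  show SPIL.NSP (Finset.range (m+3)) + 4 * (m+1)^2 * SPIL.NSP (Finset.range (m+1))
      = (3 + 4*(m+1)) * SPIL.NSP (Finset.range (m+2))
  rw [e1c, e2, e1b]
  ring

end
end

section
/- For every n ≥ 1, there is a bijection between PIL(n) and the set of complete flags in ℂⁿ that are in standard form; in particular, the number of complete flags in ℂⁿ in standard form equals |PIL(n)|. -/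
open scoped BigOperators

noncomputable section

/-- Membership in the subgroup `B_{n-1}` of `GL(n, ℂ)`: invertible upper triangular matrices
`g` with `g ₙₙ = 1` and `g ᵢₙ = 0` for `i < n` (indices `0, …, n-1`; the last index plays
the role of `n`). -/
def memB (n : ℕ) (g : Matrix (Fin n) (Fin n) ℂ) : Prop :=
  IsUnit g ∧
  (∀ i j : Fin n, (j : ℕ) < (i : ℕ) → g i j = 0) ∧
  (∀ i : Fin n, (i : ℕ) + 1 = n → g i i = 1) ∧
  (∀ i j : Fin n, (j : ℕ) + 1 = n → (i : ℕ) + 1 ≠ n → g i j = 0)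

/-- A complete flag `V₁ ⊂ V₂ ⊂ ⋯ ⊂ Vₙ = ℂⁿ` in `ℂⁿ` (so `V i` has dimension `i + 1`
for the 0-indexed `i : Fin n`). -/
structure CompleteFlag (n : ℕ) where
  V : Fin n → Submodule ℂ (Fin n → ℂ)
  mono : ∀ i j : Fin n, i ≤ j → V i ≤ V j
  dimV : ∀ i : Fin n, Module.finrank ℂ (V i) = (i : ℕ) + 1

/-- Two complete flags lie in the same `B_{n-1}`-orbit:
`F = g · F'` for some `g ∈ B_{n-1}`. -/
def flagRel (n : ℕ) (F F' : CompleteFlag n) : Prop :=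
  ∃ g : Matrix (Fin n) (Fin n) ℂ, memB n g ∧
    ∀ i, (F'.V i).map (Matrix.toLin' g) = F.V i

/-- The standard basis vector `e_{j+1}` of `ℂⁿ` (for the 0-indexed `j : Fin n`). -/
def stdVec (n : ℕ) (j : Fin n) : Fin n → ℂ := Pi.single j 1

/-- The hat vector `ê_{j+1} = e_{j+1} + e_n` of `ℂⁿ` (for the 0-indexed `j : Fin n`,
meaningful when `j + 1 < n`). -/
def hatVec (n : ℕ) (j : Fin n) : Fin n → ℂ :=
  Pi.single j 1 + Pi.single (⟨n - 1, by have := j.isLt; omega⟩ : Fin n) 1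

/-- A complete flag in `ℂⁿ` is in standard form. -/
def IsStdFlag (n : ℕ) (F : CompleteFlag n) : Prop :=
  ∃ (v : Fin n → (Fin n → ℂ)) (j : Fin n → Fin n) (ishat : Fin n → Bool),
    (∀ i : Fin n, F.V i = Submodule.span ℂ {w | ∃ k : Fin n, k ≤ i ∧ w = v k}) ∧
    (∀ i : Fin n,
      (ishat i = true → ((j i : ℕ) + 1 < n ∧ v i = hatVec n (j i))) ∧
      (ishat i = false → v i = stdVec n (j i))) ∧
    (∃ i : Fin n, ishat i = false ∧ (j i : ℕ) + 1 = n) ∧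
    (∀ i k : Fin n, ishat i = false → (j i : ℕ) + 1 = n → i < k → ishat k = false) ∧
    (∀ i k : Fin n, i < k → ishat i = true → ishat k = true → j k < j i)

namespace St14

/-- Mark each element: last element of a non-final list gets `true`. -/
def mark : List (List ℕ) → List (ℕ × Bool)
  | [] => []
  | [l] => l.map (fun x => (x, false))
  | l :: l' :: ls =>
      (l.dropLast.map (fun x => (x, false)) ++ [(l.getLastD 0, true)]) ++ mark (l' :: ls)

/-- Cut a marked word into lists, cutting after each `true`. -/
def cut : List (ℕ × Bool) → List (List ℕ)
  | [] => []
  | (x, true) :: rest => [x] :: cut rest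
  | (x, false) :: rest =>
    match cut rest with
    | [] => [[x]]
    | l :: ls => (x :: l) :: ls

lemma mark_cons {l : List ℕ} {ls : List (List ℕ)} (h : ls ≠ []) :
    mark (l :: ls) =
      (l.dropLast.map (fun x => (x, false)) ++ [(l.getLastD 0, true)]) ++ mark ls := by
  cases ls with
  | nil => exact absurd rfl h
  | cons a as => rfl

lemma dropLast_append_getLastD {l : List ℕ} (h : l ≠ []) :
    l.dropLast ++ [l.getLastD 0] = l := by
  rw [List.getLastD_eq_getLast?, List.getLast?_eq_getLast h]
  exact List.dropLast_append_getLast h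

lemma getLastD_mem {l : List ℕ} (h : l ≠ []) : l.getLastD 0 ∈ l := by
  rw [List.getLastD_eq_getLast?, List.getLast?_eq_getLast h]
  exact List.getLast_mem h

lemma map_fst_mark {L : List (List ℕ)} (h : ∀ l ∈ L, l ≠ []) :
    (mark L).map Prod.fst = L.flatten := by
  induction L with
  | nil => rfl
  | cons l ls ih =>
    cases ls with
    | nil =>
      simp only [mark, List.map_map, List.flatten]
      have h2 : (Prod.fst ∘ fun x : ℕ => (x, false)) = id := rfl
      simp [h2]
    | cons a as =>
      rw [mark_cons (by simp)]
      have hl : l ≠ [] := h l (by simp)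
      simp only [List.map_append, List.flatten_cons]
      rw [ih (fun x hx => h x (by simp [hx]))]
      congr 1
      simp only [List.map_map, List.map_cons, List.map_nil]
      have h2 : (Prod.fst ∘ fun x : ℕ => (x, false)) = id := rfl
      rw [h2, List.map_id]
      exact dropLast_append_getLastD hl

lemma length_mark {L : List (List ℕ)} (h : ∀ l ∈ L, l ≠ []) :
    (mark L).length = L.flatten.length := by
  rw [← map_fst_mark h, List.length_map]


/-- relation: if a's value is n, everything after is unmarked. -/
def R4 (n : ℕ) (a b : ℕ × Bool) : Prop := a.1 = n → b.2 = false

/-- relation: marked values strictly decrease. -/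
def R5 (a b : ℕ × Bool) : Prop := a.2 = true → b.2 = true → b.1 < a.1

/-- Validity of a marked word. -/
def ValidMark (n : ℕ) (m : List (ℕ × Bool)) : Prop :=
  (m.map Prod.fst).Nodup ∧ (m.map Prod.fst).toFinset = Finset.Icc 1 n ∧
  (∀ p ∈ m, p.2 = true → p.1 < n) ∧
  m.Pairwise (R4 n) ∧ m.Pairwise R5

lemma mem_mark_lastD {L : List (List ℕ)} (h : ∀ l ∈ L, l ≠ []) {l : List ℕ}
    (hl : l ∈ L.dropLast) : (l.getLastD 0, true) ∈ mark L := by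
  induction L with
  | nil => simp at hl
  | cons a as ih =>
    cases as with
    | nil => simp at hl
    | cons b bs =>
      rw [mark_cons (by simp)]
      rw [List.dropLast_cons₂] at hl
      rcases List.mem_cons.1 hl with rfl | hl
      · exact List.mem_append_left _ (List.mem_append_right _ (by simp))
      · exact List.mem_append_right _ (ih (fun x hx => h x (by simp [hx])) hl)

lemma mem_flatten_of_mem_mark {L : List (List ℕ)} (h : ∀ l ∈ L, l ≠ []) {p : ℕ × Bool}
    (hp : p ∈ mark L) : p.1 ∈ L.flatten := by
  have : p.1 ∈ (mark L).map Prod.fst := List.mem_map_of_mem hp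
  rwa [map_fst_mark h] at this

lemma mark_true_elim {L : List (List ℕ)} (h : ∀ l ∈ L, l ≠ []) {x : ℕ}
    (hp : (x, true) ∈ mark L) : ∃ l ∈ L.dropLast, x = l.getLastD 0 := by
  induction L with
  | nil => simp [mark] at hp
  | cons a as ih =>
    cases as with
    | nil => simp [mark] at hp
    | cons b bs =>
      rw [mark_cons (by simp)] at hp
      rcases List.mem_append.1 hp with hp | hp
      · rcases List.mem_append.1 hp with hp | hp
        · rcases List.mem_map.1 hp with ⟨y, _, hy⟩; simp at hy
        · simp only [List.mem_singleton, Prod.mk.injEq] at hp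
          exact ⟨a, by simp [List.dropLast_cons₂], hp.1⟩
      · obtain ⟨l, hl, hx⟩ := ih (fun x hx => h x (by simp [hx])) hp
        exact ⟨l, by simp [List.dropLast_cons₂, hl], hx⟩

lemma mem_mark_of_mem {L : List (List ℕ)} {l : List ℕ} (hl : l ∈ L) {x : ℕ}
    (hx : x ∈ l) : ∃ b, (x, b) ∈ mark L := by
  induction L with
  | nil => simp at hl
  | cons a as ih =>
    cases as with
    | nil =>
      simp only [List.mem_singleton] at hl; subst hl
      exact ⟨false, by simp only [mark]; exact List.mem_map.2 ⟨x, hx, rfl⟩⟩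
    | cons b bs =>
      rw [mark_cons (by simp)]
      rcases List.mem_cons.1 hl with rfl | hl
      · -- x ∈ l : either in dropLast or is the last
        have hne : l ≠ [] := by rintro rfl; simp at hx
        rw [← dropLast_append_getLastD hne] at hx
        rcases List.mem_append.1 hx with hx | hx
        · exact ⟨false, List.mem_append_left _ (List.mem_append_left _
            (List.mem_map.2 ⟨x, hx, rfl⟩))⟩
        · simp only [List.mem_singleton] at hx
          exact ⟨true, List.mem_append_left _ (List.mem_append_right _ (by rw [hx]; simp))⟩
      · obtain ⟨c, hc⟩ := ih hl
        exact ⟨c, List.mem_append_right _ hc⟩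


lemma getLastD_of_ne_nil {l : List ℕ} (h : l ≠ []) (d : ℕ) : l.getLastD d = l.getLast h := by
  rw [List.getLastD_eq_getLast?, List.getLast?_eq_getLast h]; rfl

lemma n_not_mem_dropLast {n : ℕ} {L : List (List ℕ)} (hne : ∀ l ∈ L, l ≠ [])
    (htrue : ∀ p ∈ mark L, p.2 = true → p.1 < n) (h4 : (mark L).Pairwise (R4 n)) :
    ∀ l ∈ L.dropLast, n ∉ l := by
  induction L with
  | nil => simp
  | cons a as ih =>
    cases as with
    | nil => simp
    | cons b bs =>
      rw [mark_cons (by simp)] at htrue h4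
      intro l hl hnl
      rw [List.dropLast_cons₂] at hl
      rcases List.mem_cons.1 hl with heq | hl
      · -- n ∈ a, a is non-final
        rw [heq] at hnl
        have ha : a ≠ [] := hne a (by simp)
        rw [← dropLast_append_getLastD ha] at hnl
        rcases List.mem_append.1 hnl with hnl | hnl
        · -- (n, false) in the map part, followed by the true mark
          have hmem : ((n : ℕ), false) ∈ a.dropLast.map (fun x => (x, false)) :=
            List.mem_map.2 ⟨n, hnl, rfl⟩
          have hpw := (List.pairwise_append.1 h4).1
          have hcross := (List.pairwise_append.1 hpw).2.2 _ hmem ((a.getLastD 0, true))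
            (by simp)
          exact absurd (hcross rfl) (by simp)
        · -- n is the marked last of a
          simp only [List.mem_singleton] at hnl
          have hmem : ((n : ℕ), true) ∈
              (a.dropLast.map (fun x => (x, false)) ++ [(a.getLastD 0, true)]) := by
            rw [hnl]; simp
          have := htrue _ (List.mem_append_left _ hmem) rfl
          omega
      · exact ih (fun x hx => hne x (by simp [hx]))
          (fun p hp => htrue p (List.mem_append_right _ hp))
          (List.pairwise_append.1 h4).2.1 l hl hnl

/-- sort key for lists: the list containing `n` gets key 0, others their last element. -/
def key (n : ℕ) (l : List ℕ) : ℕ := if n ∈ l then 0 else l.getLastD 0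

lemma mem_dropLast_or_getLast {α : Type*} {l : List α} (h : l ≠ []) {x : α} (hx : x ∈ l) :
    x ∈ l.dropLast ∨ x = l.getLast h := by
  conv at hx => rw [← List.dropLast_append_getLast h]
  rcases List.mem_append.1 hx with hx | hx
  · exact Or.inl hx
  · simp only [List.mem_singleton] at hx; exact Or.inr hx

lemma pairwise_keylt {n : ℕ} {L : List (List ℕ)} (hne : ∀ l ∈ L, l ≠ [])
    (hval : ∀ x ∈ L.flatten, 1 ≤ x) (hn : n ∈ L.flatten)
    (htrue : ∀ p ∈ mark L, p.2 = true → p.1 < n)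
    (h4 : (mark L).Pairwise (R4 n)) (h5 : (mark L).Pairwise R5) :
    L.Pairwise (fun l l' => key n l' < key n l) := by
  induction L with
  | nil => simp
  | cons a as ih =>
    cases as with
    | nil => simp
    | cons b bs =>
      set ls := b :: bs with hls
      have hlsne : ls ≠ [] := by simp [hls]
      have hmc : mark (a :: ls) =
          (a.dropLast.map (fun x => (x, false)) ++ [(a.getLastD 0, true)]) ++ mark ls :=
        mark_cons hlsne
      have hna : n ∉ a := n_not_mem_dropLast hne htrue h4 a
        (by rw [List.dropLast_cons₂]; simp)
      have hnls : n ∈ ls.flatten := by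
        rcases List.mem_flatten.1 hn with ⟨l, hl, hnl⟩
        rcases List.mem_cons.1 hl with rfl | hl
        · exact absurd hnl hna
        · exact List.mem_flatten.2 ⟨l, hl, hnl⟩
      have hane : a ≠ [] := hne a (by simp)
      have hrest4 : (mark ls).Pairwise (R4 n) := by
        rw [hmc] at h4; exact (List.pairwise_append.1 h4).2.1
      have hrest5 : (mark ls).Pairwise R5 := by
        rw [hmc] at h5; exact (List.pairwise_append.1 h5).2.1
      have hresttrue : ∀ p ∈ mark ls, p.2 = true → p.1 < n := by
        intro p hp; exact htrue p (by rw [hmc]; exact List.mem_append_right _ hp)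
      have hrestval : ∀ x ∈ ls.flatten, 1 ≤ x := by
        intro x hx; exact hval x (by simp [hx])
      refine List.pairwise_cons.2 ⟨?_, ih (fun l hl => hne l (by simp [hl]))
        hrestval hnls hresttrue hrest4 hrest5⟩
      intro l' hl'
      have hkeya : key n a = a.getLastD 0 := if_neg hna
      have hkeyapos : 1 ≤ a.getLastD 0 := hval _ (by
        simp only [List.flatten_cons, List.mem_append]
        exact Or.inl (getLastD_mem hane))
      rcases mem_dropLast_or_getLast hlsne hl' with hl'' | rfl
      · -- l' non-final: compare marked last values
        have hnl' : n ∉ l' := n_not_mem_dropLast hne htrue h4 l'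
          (by rw [List.dropLast_cons₂]; exact List.mem_cons_of_mem _ hl'')
        have hkeyl' : key n l' = l'.getLastD 0 := if_neg hnl'
        have hmema : (a.getLastD 0, true) ∈
            (a.dropLast.map (fun x => (x, false)) ++ [(a.getLastD 0, true)]) := by simp
        have hmemb : (l'.getLastD 0, true) ∈ mark ls :=
          mem_mark_lastD (fun l hl => hne l (by simp [hl])) hl''
        rw [hmc] at h5
        have := (List.pairwise_append.1 h5).2.2 _ hmema _ hmemb rfl rfl
        rw [hkeya, hkeyl']
        exact this
      · -- l' is the final list, must contain n
        by_cases hnl' : n ∈ ls.getLast hlsne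
        · rw [hkeya, key, if_pos hnl']
          omega
        · exfalso
          rcases List.mem_flatten.1 hnls with ⟨l'', hl'', hnl''⟩
          rcases mem_dropLast_or_getLast hlsne hl'' with h | rfl
          · exact n_not_mem_dropLast hne htrue h4 l''
              (by rw [List.dropLast_cons₂]; exact List.mem_cons_of_mem _ h) hnl''
          · exact hnl' hnl''

lemma cut_eq_nil_iff {m : List (ℕ × Bool)} : cut m = [] ↔ m = [] := by
  constructor
  · intro h
    cases m with
    | nil => rfl
    | cons p rest =>
      obtain ⟨x, b⟩ := p
      cases b <;> simp only [cut] at h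
      · rcases h' : cut rest with _ | _
        · rw [h'] at h; simp at h
        · rw [h'] at h; simp at h
      · simp at h
  · rintro rfl; rfl

lemma mem_cut_ne_nil {m : List (ℕ × Bool)} : ∀ l ∈ cut m, l ≠ [] := by
  induction m with
  | nil => simp [cut]
  | cons p rest ih =>
    obtain ⟨x, b⟩ := p
    cases b
    · simp only [cut]
      rcases h' : cut rest with _ | ⟨l, ls⟩
      · simp
      · intro l' hl'
        rcases List.mem_cons.1 hl' with rfl | hl'
        · simp
        · exact ih l' (by rw [h']; exact List.mem_cons_of_mem _ hl')
    · simp only [cut]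
      intro l' hl'
      rcases List.mem_cons.1 hl' with rfl | hl'
      · simp
      · exact ih l' hl'

lemma mark_cut {m : List (ℕ × Bool)}
    (hlast : ∀ h : m ≠ [], (m.getLast h).2 = false) : mark (cut m) = m := by
  induction m with
  | nil => rfl
  | cons p rest ih =>
    obtain ⟨x, b⟩ := p
    cases b
    · -- false head
      rcases hrest : rest with _ | ⟨q, rest'⟩
      · simp [cut, mark]
      · rw [← hrest]
        have hrestne : rest ≠ [] := by rw [hrest]; simp
        have hlast' : ∀ h : rest ≠ [], (rest.getLast h).2 = false := by
          intro h
          have := hlast (by simp)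
          rwa [List.getLast_cons h] at this
        have ihh := ih hlast'
        simp only [cut]
        rcases hc : cut rest with _ | ⟨l, ls⟩
        · exact absurd (cut_eq_nil_iff.1 hc) hrestne
        · have hlne : l ≠ [] := mem_cut_ne_nil l (by rw [hc]; simp)
          rw [hc] at ihh
          cases ls with
          | nil =>
            simp only [mark] at ihh ⊢
            cases l with
            | nil => exact absurd rfl hlne
            | cons y t =>
              simp only [List.map_cons] at ihh ⊢
              rw [ihh]
          | cons l2 ls2 =>
            rw [mark_cons (by simp)] at ihh ⊢
            obtain ⟨y, t, rfl⟩ : ∃ y t, l = y :: t := by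
              cases l with
              | nil => exact absurd rfl hlne
              | cons y t => exact ⟨y, t, rfl⟩
            cases t with
            | nil =>
              simp only [List.dropLast_singleton, List.map_nil, List.nil_append] at ihh ⊢
              simp only [List.dropLast_cons₂, List.map_cons, List.dropLast_singleton,
                List.map_nil] at *
              rw [List.cons_append, ← ihh]
              rfl
            | cons z t2 =>
              rw [List.dropLast_cons₂] at *
              simp only [List.map_cons] at *
              rw [List.cons_append, List.cons_append, ← ihh]
              rfl
    · -- true head: rest nonempty
      have hrestne : rest ≠ [] := by
        rintro rfl
        have := hlast (by simp)
        simp at this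
      have hlast' : ∀ h : rest ≠ [], (rest.getLast h).2 = false := by
        intro h
        have := hlast (by simp)
        rwa [List.getLast_cons h] at this
      have ihh := ih hlast'
      simp only [cut]
      rcases hc : cut rest with _ | ⟨l, ls⟩
      · exact absurd (cut_eq_nil_iff.1 hc) hrestne
      · rw [hc] at ihh
        rw [mark_cons (by simp)]
        simp only [List.dropLast_singleton, List.map_nil, List.nil_append,
          List.getLastD_eq_getLast?]
        rw [ihh]
        rfl

lemma cut_map_false {l : List ℕ} (h : l ≠ []) :
    cut (l.map (fun x => (x, false))) = [l] := by
  induction l with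
  | nil => exact absurd rfl h
  | cons x t ih =>
    cases t with
    | nil => rfl
    | cons y t2 =>
      simp only [List.map_cons, cut] at *
      rw [ih (by simp)]

lemma cut_false_append {l : List ℕ} {y : ℕ} {rest : List (ℕ × Bool)} :
    cut (l.map (fun x => (x, false)) ++ ((y, true) :: rest)) = (l ++ [y]) :: cut rest := by
  induction l with
  | nil => rfl
  | cons x t ih =>
    simp only [List.map_cons, List.cons_append, cut, List.append_eq]
    rw [ih]

lemma cut_mark {L : List (List ℕ)} (hne : ∀ l ∈ L, l ≠ []) : cut (mark L) = L := by
  induction L with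
  | nil => rfl
  | cons a as ih =>
    cases as with
    | nil => exact cut_map_false (hne a (by simp))
    | cons b bs =>
      rw [mark_cons (by simp), List.append_assoc, List.singleton_append, cut_false_append,
        ih (fun l hl => hne l (by simp [hl])), dropLast_append_getLastD (hne a (by simp))]


lemma toFinset_flatten (L : List (List ℕ)) :
    L.flatten.toFinset = L.toFinset.biUnion (fun l => l.toFinset) := by
  induction L with
  | nil => simp
  | cons a as ih => simp [ih]

lemma fst_mem_of_mem_block {a : List ℕ} (ha : a ≠ []) {p : ℕ × Bool}
    (hp : p ∈ a.dropLast.map (fun x => (x, false)) ++ [(a.getLastD 0, true)]) : p.1 ∈ a := by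
  rcases List.mem_append.1 hp with hp | hp
  · rcases List.mem_map.1 hp with ⟨y, hy, rfl⟩
    exact List.dropLast_subset a hy
  · simp only [List.mem_singleton] at hp
    rw [hp]
    exact getLastD_mem ha

lemma pairwise_R4_mark {n : ℕ} {L : List (List ℕ)} (hne : ∀ l ∈ L, l ≠ [])
    (hdl : ∀ l ∈ L.dropLast, n ∉ l) : (mark L).Pairwise (R4 n) := by
  induction L with
  | nil => simp [mark]
  | cons a as ih =>
    cases as with
    | nil =>
      simp only [mark]
      refine List.pairwise_of_forall_mem_list ?_
      intro p hp q hq _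
      rcases List.mem_map.1 hq with ⟨y, _, rfl⟩
      rfl
    | cons b bs =>
      rw [mark_cons (by simp)]
      have ha : a ≠ [] := hne a (by simp)
      have hna : n ∉ a := hdl a (by rw [List.dropLast_cons₂]; simp)
      refine List.pairwise_append.2 ⟨?_, ?_, ?_⟩
      · refine List.pairwise_of_forall_mem_list ?_
        intro p hp q hq hpn
        exact absurd (hpn ▸ fst_mem_of_mem_block ha hp) hna
      · exact ih (fun l hl => hne l (by simp [hl]))
          (fun l hl => hdl l (by rw [List.dropLast_cons₂]; exact List.mem_cons_of_mem _ hl))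
      · intro p hp q hq hpn
        exact absurd (hpn ▸ fst_mem_of_mem_block ha hp) hna

lemma pairwise_R5_mark {n : ℕ} {L : List (List ℕ)} (hne : ∀ l ∈ L, l ≠ [])
    (hkey : L.Pairwise (fun l l' => key n l' < key n l))
    (hdl : ∀ l ∈ L.dropLast, n ∉ l) : (mark L).Pairwise R5 := by
  induction L with
  | nil => simp [mark]
  | cons a as ih =>
    cases as with
    | nil =>
      simp only [mark]
      refine List.pairwise_of_forall_mem_list ?_
      intro p hp q hq hpt
      rcases List.mem_map.1 hp with ⟨y, _, rfl⟩
      simp at hpt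
    | cons b bs =>
      rw [mark_cons (by simp)]
      have ha : a ≠ [] := hne a (by simp)
      have hna : n ∉ a := hdl a (by rw [List.dropLast_cons₂]; simp)
      have hne' : ∀ l ∈ b :: bs, l ≠ [] := fun l hl => hne l (by simp [hl])
      have hdl' : ∀ l ∈ (b :: bs).dropLast, n ∉ l := fun l hl =>
        hdl l (by rw [List.dropLast_cons₂]; exact List.mem_cons_of_mem _ hl)
      refine List.pairwise_append.2 ⟨?_, ?_, ?_⟩
      · refine List.pairwise_append.2 ⟨?_, ?_, ?_⟩
        · refine List.pairwise_of_forall_mem_list ?_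
          intro p hp q hq hpt
          rcases List.mem_map.1 hp with ⟨y, _, rfl⟩
          simp at hpt
        · simp
        · intro p hp q hq hpt
          rcases List.mem_map.1 hp with ⟨y, _, rfl⟩
          simp at hpt
      · exact ih hne' (List.pairwise_cons.1 hkey).2 hdl'
      · intro p hp q hq hpt hqt
        obtain ⟨q1, q2⟩ := q
        simp only at hqt
        subst hqt
        have hp' : p = (a.getLastD 0, true) := by
          rcases List.mem_append.1 hp with hp | hp
          · rcases List.mem_map.1 hp with ⟨y, _, rfl⟩; simp at hpt
          · simpa using hp
        obtain ⟨l'', hl'', hq1⟩ := mark_true_elim hne' hq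
        have hnl'' : n ∉ l'' := hdl' l'' hl''
        have hkl : key n l'' < key n a := (List.pairwise_cons.1 hkey).1 l''
          (List.dropLast_subset (b :: bs) hl'')
        have e1 : key n l'' = l''.getLastD 0 := if_neg hnl''
        have e2 : key n a = a.getLastD 0 := if_neg hna
        rw [e1, e2] at hkl
        rw [hp', hq1]
        exact hkl

/-- main derivation: a sorted disjoint list-of-lists has a valid marked word. -/
lemma validMark_of_sorted {n : ℕ} {L : List (List ℕ)} (hne : ∀ l ∈ L, l ≠ [])
    (hnodupL : L.Nodup) (hnodupl : ∀ l ∈ L, l.Nodup)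
    (hdisj : ∀ l ∈ L, ∀ l' ∈ L, l ≠ l' → Disjoint l.toFinset l'.toFinset)
    (hunion : L.flatten.toFinset = Finset.Icc 1 n)
    (hsorted : L.Pairwise (fun l l' => key n l' ≤ key n l)) :
    ValidMark n (mark L) := by
  have hpdisj : L.Pairwise List.Disjoint :=
    hnodupL.pairwise_of_forall_ne (fun l hl l' hl' hll' =>
      List.disjoint_toFinset_iff_disjoint.1 (hdisj l hl l' hl' hll'))
  have hflat : L.flatten.Nodup := List.nodup_flatten.2 ⟨hnodupl, hpdisj⟩
  have hval : ∀ x ∈ L.flatten, 1 ≤ x := by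
    intro x hx
    have : x ∈ Finset.Icc 1 n := hunion ▸ List.mem_toFinset.2 hx
    exact (Finset.mem_Icc.1 this).1
  have hvaln : ∀ x ∈ L.flatten, x ≤ n := by
    intro x hx
    have : x ∈ Finset.Icc 1 n := hunion ▸ List.mem_toFinset.2 hx
    exact (Finset.mem_Icc.1 this).2
  -- strict key pairwise
  have hkey : L.Pairwise (fun l l' => key n l' < key n l) := by
    refine List.Pairwise.imp_of_mem ?_ (hsorted.and hnodupL)
    rintro l l' hl hl' ⟨hle, hlne⟩
    rcases Nat.lt_or_ge (key n l') (key n l) with h | h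
    · exact h
    · exfalso
      have hkeq : key n l = key n l' := le_antisymm h hle
      have hl0 : l ≠ [] := hne l hl
      have hl'0 : l' ≠ [] := hne l' hl'
      have hdj := hdisj l hl l' hl' hlne
      by_cases h1 : n ∈ l <;> by_cases h2 : n ∈ l'
      · exact (Finset.disjoint_left.1 hdj (List.mem_toFinset.2 h1)) (List.mem_toFinset.2 h2)
      · rw [key, if_pos h1, key, if_neg h2] at hkeq
        have := hval (l'.getLastD 0) (List.mem_flatten.2 ⟨l', hl', getLastD_mem hl'0⟩)
        omega
      · rw [key, if_neg h1, key, if_pos h2] at hkeq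
        have := hval (l.getLastD 0) (List.mem_flatten.2 ⟨l, hl, getLastD_mem hl0⟩)
        omega
      · rw [key, if_neg h1, key, if_neg h2] at hkeq
        have hm1 : l.getLastD 0 ∈ l := getLastD_mem hl0
        have hm2 : l.getLastD 0 ∈ l' := hkeq ▸ getLastD_mem hl'0
        exact (Finset.disjoint_left.1 hdj (List.mem_toFinset.2 hm1)) (List.mem_toFinset.2 hm2)
  -- n not in nonfinal lists
  have hdl : ∀ l ∈ L.dropLast, n ∉ l := by
    intro l hl hnl
    have hLne : L ≠ [] := by rintro rfl; simp at hl
    have hcross : ∀ a ∈ L.dropLast, key n (L.getLast hLne) < key n a := by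
      have h := hkey
      conv at h => rw [← List.dropLast_append_getLast hLne]
      intro a ha
      exact (List.pairwise_append.1 h).2.2 a ha _ (by simp)
    have h0 := hcross l hl
    have hkl0 : key n l = 0 := if_pos hnl
    omega
  refine ⟨?_, ?_, ?_, ?_, ?_⟩
  · rw [map_fst_mark hne]; exact hflat
  · rw [map_fst_mark hne]; exact hunion
  · intro p hp hpt
    obtain ⟨p1, p2⟩ := p
    simp only at hpt
    subst hpt
    obtain ⟨l, hl, hp1⟩ := mark_true_elim hne hp
    have hlL : l ∈ L := List.dropLast_subset _ hl
    have hlne : l ≠ [] := hne l hlL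
    have hmem : p1 ∈ L.flatten := List.mem_flatten.2 ⟨l, hlL, hp1 ▸ getLastD_mem hlne⟩
    have h1 := hvaln _ hmem
    have h2 : p1 ≠ n := fun h => hdl l hl (by rw [← h, hp1]; exact getLastD_mem hlne)
    simp only
    omega
  · exact pairwise_R4_mark hne hdl
  · exact pairwise_R5_mark hne hkey hdl

/-- conversely: validity of the marked word gives strict sortedness of the lists. -/
lemma pairwise_keylt_of_valid {n : ℕ} (hn : 1 ≤ n) {L : List (List ℕ)}
    (hne : ∀ l ∈ L, l ≠ []) (hv : ValidMark n (mark L)) :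
    L.Pairwise (fun l l' => key n l' < key n l) := by
  obtain ⟨h1, h2, h3, h4, h5⟩ := hv
  have hval : ∀ x ∈ L.flatten, 1 ≤ x := by
    intro x hx
    have : x ∈ Finset.Icc 1 n := by
      rw [← h2, ← map_fst_mark hne] at *
      exact List.mem_toFinset.2 hx
    exact (Finset.mem_Icc.1 this).1
  have hmemn : n ∈ L.flatten := by
    rw [← map_fst_mark hne]
    have : n ∈ Finset.Icc 1 n := Finset.mem_Icc.2 ⟨hn, le_refl n⟩
    rw [← h2] at this
    exact List.mem_toFinset.1 this
  exact pairwise_keylt hne hval hmemn h3 h4 h5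


def OPcond (n : ℕ) (L : List (List ℕ)) : Prop :=
  (∀ l ∈ L, l ≠ []) ∧ ValidMark n (mark L)

lemma last_false_of_valid {n : ℕ} (hn : 1 ≤ n) {m : List (ℕ × Bool)}
    (hv : ValidMark n m) : ∀ h : m ≠ [], (m.getLast h).2 = false := by
  obtain ⟨h1, h2, h3, h4, _⟩ := hv
  intro h
  by_contra hbt
  have hpt : (m.getLast h).2 = true := by
    cases hb : (m.getLast h).2
    · exact absurd hb hbt
    · rfl
  have hlt := h3 _ (List.getLast_mem h) hpt
  -- the entry with value n
  have hnmem : (n : ℕ) ∈ m.map Prod.fst := by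
    rw [← List.mem_toFinset, h2]
    exact Finset.mem_Icc.2 ⟨hn, le_refl n⟩
  obtain ⟨q, hq, hq1⟩ := List.mem_map.1 hnmem
  rcases mem_dropLast_or_getLast h hq with hq' | rfl
  · -- R4 cross
    have h4' := h4
    conv at h4' => rw [← List.dropLast_append_getLast h]
    have := (List.pairwise_append.1 h4').2.2 q hq' (m.getLast h)
      (List.mem_singleton.2 rfl) hq1
    rw [this] at hpt
    simp at hpt
  · omega

variable {n : ℕ}

/-- `OP → PIL` function. -/
lemma isPIL_of_OP {L : List (List ℕ)} (hL : OPcond n L) :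
    IsPIL (Finset.Icc 1 n) L.toFinset := by
  obtain ⟨hne, h1, h2, _, _, _⟩ := hL
  rw [map_fst_mark hne] at h1 h2
  have hpd : List.Pairwise List.Disjoint L := (List.nodup_flatten.1 h1).2
  have hnodupl : ∀ l ∈ L, l.Nodup := (List.nodup_flatten.1 h1).1
  refine ⟨?_, ?_, ?_⟩
  · intro l hl
    rw [List.mem_toFinset] at hl
    exact ⟨hnodupl l hl, hne l hl⟩
  · intro l hl l' hl' hll'
    rw [List.mem_toFinset] at hl hl'
    rw [List.disjoint_toFinset_iff_disjoint]
    haveI : Std.Symm (List.Disjoint (α := ℕ)) := ⟨fun _ _ h => h.symm⟩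
    exact hpd.forall hl hl' hll'
  · rw [← toFinset_flatten]
    exact h2

lemma nodup_of_OP (hn : 1 ≤ n) {L : List (List ℕ)} (hL : OPcond n L) : L.Nodup := by
  have hkey := pairwise_keylt_of_valid hn hL.1 hL.2
  exact hkey.imp (fun h => by rintro rfl; omega)

/-- the equivalence between PILs and ordered PILs. -/
noncomputable def equivPILOP (hn : 1 ≤ n) :
    {L : List (List ℕ) // OPcond n L} ≃ {P : Finset (List ℕ) // IsPIL (Finset.Icc 1 n) P} := by
  refine Equiv.ofBijective (fun L => ⟨L.1.toFinset, isPIL_of_OP L.2⟩) ⟨?_, ?_⟩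
  · rintro ⟨L, hL⟩ ⟨L', hL'⟩ h
    simp only [Subtype.mk.injEq] at h ⊢
    have hperm : L.Perm L' :=
      List.perm_of_nodup_nodup_toFinset_eq (nodup_of_OP hn hL) (nodup_of_OP hn hL') h
    haveI : IsAntisymm (List ℕ) (fun l l' => key n l' < key n l) :=
      ⟨fun a b h1 h2 => (Nat.lt_asymm h1 h2).elim⟩
    exact List.Perm.eq_of_pairwise (fun a b _ _ h1 h2 => (Nat.lt_asymm h1 h2).elim)
      (pairwise_keylt_of_valid hn hL.1 hL.2) (pairwise_keylt_of_valid hn hL'.1 hL'.2) hperm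
  · rintro ⟨P, hP⟩
    classical
    have hdec : DecidableRel (fun l l' : List ℕ => key n l' ≤ key n l) :=
      fun a b => Nat.decLe _ _
    haveI : IsTotal (List ℕ) (fun l l' : List ℕ => key n l' ≤ key n l) :=
      ⟨fun a b => Nat.le_total _ _⟩
    haveI : IsTrans (List ℕ) (fun l l' : List ℕ => key n l' ≤ key n l) :=
      ⟨fun a b c h1 h2 => le_trans h2 h1⟩
    set L := List.insertionSort (fun l l' : List ℕ => key n l' ≤ key n l) P.toList with hLdef
    have hperm : L.Perm P.toList := List.perm_insertionSort _ P.toList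
    have hmem : ∀ l, l ∈ L ↔ l ∈ P := by
      intro l
      rw [hperm.mem_iff, Finset.mem_toList]
    have htf : L.toFinset = P := by
      ext l
      rw [List.mem_toFinset, hmem]
    have hne : ∀ l ∈ L, l ≠ [] := fun l hl => (hP.1 l ((hmem l).1 hl)).2
    have hnodupL : L.Nodup := hperm.symm.nodup P.nodup_toList
    have hflatten : L.flatten.toFinset = Finset.Icc 1 n := by
      rw [toFinset_flatten, htf]
      exact hP.2.2
    have hvm : ValidMark n (mark L) :=
      validMark_of_sorted hne hnodupL (fun l hl => (hP.1 l ((hmem l).1 hl)).1)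
        (fun l hl l' hl' h => hP.2.1 l ((hmem l).1 hl) l' ((hmem l').1 hl') h)
        hflatten (List.pairwise_insertionSort _ P.toList)
    exact ⟨⟨L, hne, hvm⟩, Subtype.ext htf⟩

/-- the equivalence between ordered PILs and valid marked words. -/
def equivOPMark (hn : 1 ≤ n) :
    {L : List (List ℕ) // OPcond n L} ≃ {m : List (ℕ × Bool) // ValidMark n m} where
  toFun L := ⟨mark L.1, L.2.2⟩
  invFun m := ⟨cut m.1, mem_cut_ne_nil,
    by rw [mark_cut (last_false_of_valid hn m.2)]; exact m.2⟩
  left_inv L := Subtype.ext (cut_mark L.2.1)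
  right_inv m := Subtype.ext (mark_cut (last_false_of_valid hn m.2))


/-! ### From marked words to flags -/

/-- entry of a marked word. -/
def ment (m : List (ℕ × Bool)) (i : ℕ) : ℕ × Bool := m.getD i (0, false)

def mval (m : List (ℕ × Bool)) (i : ℕ) : ℕ := (ment m i).1

def mhat (m : List (ℕ × Bool)) (i : ℕ) : Bool := (ment m i).2

/-- position `i` of the word, as an element of `Fin n` (0-indexed value). -/
def msig (n : ℕ) (m : List (ℕ × Bool)) (i : Fin n) : Fin n :=
  if h : mval m i - 1 < n then ⟨mval m i - 1, h⟩ else i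

/-- the `i`-th vector of the flag associated to a marked word. -/
def mvec (n : ℕ) (m : List (ℕ × Bool)) (i : Fin n) : Fin n → ℂ :=
  if mhat m i then hatVec n (msig n m i) else stdVec n (msig n m i)

/-- the flag subspaces associated to a marked word. -/
def mflagV (n : ℕ) (m : List (ℕ × Bool)) (i : Fin n) : Submodule ℂ (Fin n → ℂ) :=
  Submodule.span ℂ {w | ∃ k : Fin n, k ≤ i ∧ w = mvec n m k}

/-- the last index as an element of Fin n -/
def lastIdx {n : ℕ} (hn : 1 ≤ n) : Fin n := ⟨n - 1, by omega⟩

lemma hatVec_eq {n : ℕ} (hn : 1 ≤ n) (j : Fin n) :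
    hatVec n j = Pi.single j 1 + (Pi.single (lastIdx hn) 1 : Fin n → ℂ) := rfl

section valid
variable {n : ℕ} (hn : 1 ≤ n) {m : List (ℕ × Bool)} (hv : ValidMark n m)
include hv

lemma length_of_valid : m.length = n := by
  have h1 := hv.1
  have h2 := hv.2.1
  have h3 := List.toFinset_card_of_nodup h1
  rw [h2, Nat.card_Icc] at h3
  have h4 : (List.map Prod.fst m).length = m.length := List.length_map Prod.fst
  omega

lemma ment_mem (i : Fin n) : ment m i ∈ m := by
  have hl : (i : ℕ) < m.length := by rw [length_of_valid hv]; exact i.isLt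
  rw [ment, List.getD_eq_getElem m _ hl]
  exact List.getElem_mem hl

lemma mval_mem_Icc (i : Fin n) : mval m i ∈ Finset.Icc 1 n := by
  rw [← hv.2.1, List.mem_toFinset]
  exact List.mem_map.2 ⟨ment m i, ment_mem hv i, rfl⟩

lemma mval_pos (i : Fin n) : 1 ≤ mval m i := (Finset.mem_Icc.1 (mval_mem_Icc hv i)).1

lemma mval_le (i : Fin n) : mval m i ≤ n := (Finset.mem_Icc.1 (mval_mem_Icc hv i)).2

lemma msig_coe (i : Fin n) : (msig n m i : ℕ) = mval m i - 1 := by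
  have h1 := mval_pos hv i
  have h2 := mval_le hv i
  rw [msig, dif_pos (by omega)]

lemma msig_succ (i : Fin n) : (msig n m i : ℕ) + 1 = mval m i := by
  have h1 := mval_pos hv i
  rw [msig_coe hv]
  omega

lemma mval_injective : ∀ i i' : Fin n, mval m i = mval m i' → i = i' := by
  intro i i' h
  have hinj := List.nodup_iff_injective_get.1 hv.1
  have hl : ∀ k : Fin n, (k : ℕ) < (m.map Prod.fst).length := by
    intro k
    rw [List.length_map, length_of_valid hv]
    exact k.isLt
  have e : ∀ k : Fin n, (m.map Prod.fst).get ⟨k, hl k⟩ = mval m k := by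
    intro k
    have hk : (k : ℕ) < m.length := by rw [length_of_valid hv]; exact k.isLt
    simp only [List.get_eq_getElem, List.getElem_map]
    rw [mval, ment, List.getD_eq_getElem m _ hk]
  have heq : (⟨(i : ℕ), hl i⟩ : Fin (m.map Prod.fst).length) = ⟨(i' : ℕ), hl i'⟩ := by
    apply hinj
    rw [e i, e i', h]
  have hval : (i : ℕ) = (i' : ℕ) := by
    have h2 := congrArg Fin.val heq
    simpa using h2
  exact Fin.ext hval

lemma msig_injective : Function.Injective (msig n m) := by
  intro i i' h
  have h1 := msig_succ hv i
  have h2 := msig_succ hv i'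
  apply mval_injective hv
  have := congrArg Fin.val h
  omega

lemma mhat_of_mem {x : ℕ} {b : Bool} (hmem : (x, b) ∈ m) (i : Fin n)
    (hx : mval m i = x) : mhat m i = b := by
  obtain ⟨k, hk⟩ := List.mem_iff_get.1 hmem
  have hkn : (k : ℕ) < n := by rw [← length_of_valid hv]; exact k.isLt
  set ii : Fin n := ⟨(k : ℕ), hkn⟩ with hii
  have e : ment m (ii : ℕ) = (x, b) := by
    rw [ment, List.getD_eq_getElem m _ (by rw [length_of_valid hv]; exact hkn)]
    rw [← hk]
    rfl
  have hvv : mval m (ii : ℕ) = x := by rw [mval, e]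
  have hik : i = ii := mval_injective hv _ _ (by rw [hx, hvv])
  rw [hik, mhat, e]

lemma mem_of_hat (i : Fin n) : (mval m i, mhat m i) ∈ m := by
  have := ment_mem hv i
  rwa [show ment m i = (mval m i, mhat m i) from rfl] at this

lemma hat_lt (i : Fin n) (h : mhat m i = true) : mval m i < n := by
  have := hv.2.2.1 _ (mem_of_hat hv i)
  rw [h] at this
  exact this rfl

lemma msig_ne_lastIdx (i : Fin n) (h : mhat m i = true) : msig n m i ≠ lastIdx hn := by
  have h1 := hat_lt hv i h
  have h2 := msig_succ hv i
  intro he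
  have := congrArg Fin.val he
  rw [msig_coe hv] at this
  simp only [lastIdx] at this
  omega
end valid


noncomputable def Nmap (n : ℕ) (hn : 1 ≤ n) (m : List (ℕ × Bool)) :
    (Fin n → ℂ) →ₗ[ℂ] (Fin n → ℂ) where
  toFun x := (∑ a : Fin n, (if ((a : ℕ) + 1, true) ∈ m then (1 : ℂ) else 0) * x a) •
      (Pi.single (lastIdx hn) 1 : Fin n → ℂ)
  map_add' x y := by
    simp only [Pi.add_apply, mul_add, Finset.sum_add_distrib, add_smul]
  map_smul' r x := by
    simp only [Pi.smul_apply, smul_eq_mul, RingHom.id_apply]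
    rw [smul_smul]
    congr 1
    rw [Finset.mul_sum]
    exact Finset.sum_congr rfl (fun a _ => by ring)

lemma Nmap_apply {n : ℕ} (hn : 1 ≤ n) (m : List (ℕ × Bool)) (x : Fin n → ℂ) :
    Nmap n hn m x = (∑ a : Fin n, (if ((a : ℕ) + 1, true) ∈ m then (1 : ℂ) else 0) * x a) •
      (Pi.single (lastIdx hn) 1 : Fin n → ℂ) := rfl

lemma Nmap_single {n : ℕ} (hn : 1 ≤ n) (m : List (ℕ × Bool)) (j : Fin n) :
    Nmap n hn m (Pi.single j 1) =
      (if ((j : ℕ) + 1, true) ∈ m then (1 : ℂ) else 0) • (Pi.single (lastIdx hn) 1 : Fin n → ℂ) := by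
  rw [Nmap_apply]
  congr 1
  rw [Finset.sum_eq_single j]
  · simp
  · intro b _ hbj
    simp [Pi.single_apply, hbj]
  · intro h
    simp at h

lemma Nmap_nil {n : ℕ} (hn : 1 ≤ n) {m : List (ℕ × Bool)} (hv : ValidMark n m)
    (x : Fin n → ℂ) : Nmap n hn m (Nmap n hn m x) = 0 := by
  have hnm : ((lastIdx hn : Fin n) : ℕ) + 1 = n := by
    simp only [lastIdx]; omega
  have hmem : (((lastIdx hn : Fin n) : ℕ) + 1, true) ∉ m := by
    rw [hnm]
    intro hmem
    exact absurd (hv.2.2.1 _ hmem rfl) (lt_irrefl n)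
  have h0 : ∀ a : Fin n, (if ((a : ℕ) + 1, true) ∈ m then (1 : ℂ) else 0) *
      (Nmap n hn m x) a = 0 := by
    intro a
    have ha : (Nmap n hn m x) a = (∑ b : Fin n, (if ((b : ℕ) + 1, true) ∈ m
        then (1 : ℂ) else 0) * x b) * (if a = lastIdx hn then 1 else 0) := by
      rw [Nmap_apply]
      simp [Pi.single_apply]
    rw [ha]
    by_cases h : a = lastIdx hn
    · rw [h, if_neg hmem]
      simp
    · simp [h]
  conv_lhs => rw [Nmap_apply]
  rw [Finset.sum_congr rfl (fun a _ => h0 a)]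
  simp

/-- the unipotent linear equivalence sending the standard basis to the flag's vectors. -/
noncomputable def Emap {n : ℕ} (hn : 1 ≤ n) {m : List (ℕ × Bool)} (hv : ValidMark n m) :
    (Fin n → ℂ) ≃ₗ[ℂ] (Fin n → ℂ) :=
  LinearEquiv.ofLinear (LinearMap.id + Nmap n hn m) (LinearMap.id - Nmap n hn m)
    (LinearMap.ext (fun x => by
      simp only [LinearMap.comp_apply, LinearMap.add_apply, LinearMap.sub_apply,
        LinearMap.id_apply, map_sub, map_add]
      rw [Nmap_nil hn hv]
      abel))
    (LinearMap.ext (fun x => by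
      simp only [LinearMap.comp_apply, LinearMap.add_apply, LinearMap.sub_apply,
        LinearMap.id_apply, map_sub, map_add]
      rw [Nmap_nil hn hv]
      abel))

lemma mvec_eq_E {n : ℕ} (hn : 1 ≤ n) {m : List (ℕ × Bool)} (hv : ValidMark n m) (i : Fin n) :
    mvec n m i = Emap hn hv (Pi.single (msig n m i) 1) := by
  have happ : Emap hn hv (Pi.single (msig n m i) 1) =
      Pi.single (msig n m i) 1 + Nmap n hn m (Pi.single (msig n m i) 1) := by
    simp [Emap, LinearEquiv.ofLinear_apply, LinearMap.add_apply]
  rw [happ, Nmap_single]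
  have hs := msig_succ hv i
  cases hhat : mhat m i
  · have hmem : ((msig n m i : ℕ) + 1, true) ∉ m := by
      rw [hs]
      intro hmem
      have := mhat_of_mem hv hmem i rfl
      rw [hhat] at this
      exact Bool.false_ne_true this
    rw [if_neg hmem]
    simp [mvec, hhat, stdVec]
  · have hmem : ((msig n m i : ℕ) + 1, true) ∈ m := by
      rw [hs]
      have := mem_of_hat hv i
      rwa [hhat] at this
    rw [if_pos hmem]
    simp [mvec, hhat, hatVec_eq hn]

lemma linIndep_mvec {n : ℕ} (hn : 1 ≤ n) {m : List (ℕ × Bool)} (hv : ValidMark n m) :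
    LinearIndependent ℂ (mvec n m) := by
  have hb := (Pi.basisFun ℂ (Fin n)).linearIndependent
  have h0 := hb.comp (msig n m) (msig_injective hv)
  have he : (⇑(Pi.basisFun ℂ (Fin n)) ∘ msig n m) =
      fun i => Pi.single (msig n m i) (1 : ℂ) := by
    funext i
    simp [Pi.basisFun_apply]
  rw [he] at h0
  have h1 := h0.map' (Emap hn hv).toLinearMap
    (LinearMap.ker_eq_bot_of_injective (Emap hn hv).injective)
  have he2 : (⇑(Emap hn hv).toLinearMap ∘ fun i => Pi.single (msig n m i) (1 : ℂ)) =
      mvec n m := by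
    funext i
    simp only [Function.comp_apply, LinearEquiv.coe_toLinearMap]
    exact (mvec_eq_E hn hv i).symm
  rwa [he2] at h1

lemma mflag_dim {n : ℕ} (hn : 1 ≤ n) {m : List (ℕ × Bool)} (hv : ValidMark n m) (i : Fin n) :
    Module.finrank ℂ (mflagV n m i) = (i : ℕ) + 1 := by
  have hle : (i : ℕ) + 1 ≤ n := i.isLt
  have hset : {w | ∃ k : Fin n, k ≤ i ∧ w = mvec n m k} =
      Set.range (mvec n m ∘ (Fin.castLE hle : Fin ((i : ℕ) + 1) → Fin n)) := by
    ext w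
    constructor
    · rintro ⟨k, hk, rfl⟩
      have hk' : (k : ℕ) < (i : ℕ) + 1 := by
        have := Fin.le_def.1 hk
        omega
      exact ⟨⟨(k : ℕ), hk'⟩, rfl⟩
    · rintro ⟨k, rfl⟩
      refine ⟨Fin.castLE hle k, ?_, rfl⟩
      rw [Fin.le_def]
      simp only [Fin.coe_castLE]
      exact Nat.lt_succ_iff.1 k.isLt
  rw [mflagV, hset, finrank_span_eq_card
    ((linIndep_mvec hn hv).comp (Fin.castLE hle) (Fin.castLE_injective hle))]
  simp

lemma mflag_mono {n : ℕ} {m : List (ℕ × Bool)} (i j : Fin n) (hij : i ≤ j) :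
    mflagV n m i ≤ mflagV n m j := by
  apply Submodule.span_mono
  rintro w ⟨k, hk, rfl⟩
  exact ⟨k, le_trans hk hij, rfl⟩

/-- the complete flag associated to a valid marked word. -/
noncomputable def mflag {n : ℕ} (hn : 1 ≤ n) {m : List (ℕ × Bool)} (hv : ValidMark n m) :
    CompleteFlag n where
  V := mflagV n m
  mono := mflag_mono
  dimV := mflag_dim hn hv

lemma exists_idx {n : ℕ} {m : List (ℕ × Bool)} (hv : ValidMark n m) {x : ℕ} {b : Bool}
    (hmem : (x, b) ∈ m) : ∃ i : Fin n, mval m i = x ∧ mhat m i = b := by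
  obtain ⟨k, hk⟩ := List.mem_iff_get.1 hmem
  have hkn : (k : ℕ) < n := by rw [← length_of_valid hv]; exact k.isLt
  have hk' : m.getD (k : ℕ) (0, false) = (x, b) := by
    rw [List.getD_eq_getElem m _ k.isLt, ← hk]
    rfl
  exact ⟨⟨(k : ℕ), hkn⟩, by simp only [mval, ment, hk'], by simp only [mhat, ment, hk']⟩

lemma pairwise_ment {n : ℕ} {m : List (ℕ × Bool)} (hv : ValidMark n m)
    {R : ℕ × Bool → ℕ × Bool → Prop} (hR : m.Pairwise R) {i k : Fin n}
    (h : i < k) : R (ment m i) (ment m k) := by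
  have hi : (i : ℕ) < m.length := by rw [length_of_valid hv]; exact i.isLt
  have hk : (k : ℕ) < m.length := by rw [length_of_valid hv]; exact k.isLt
  have hp := List.pairwise_iff_get.1 hR ⟨i, hi⟩ ⟨k, hk⟩ h
  have e1 : ment m i = m.get ⟨i, hi⟩ := by
    rw [ment, List.getD_eq_getElem m _ hi]; rfl
  have e2 : ment m k = m.get ⟨k, hk⟩ := by
    rw [ment, List.getD_eq_getElem m _ hk]; rfl
  rw [e1, e2]
  exact hp

lemma mflag_std {n : ℕ} (hn : 1 ≤ n) {m : List (ℕ × Bool)} (hv : ValidMark n m) :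
    IsStdFlag n (mflag hn hv) := by
  refine ⟨mvec n m, msig n m, fun i => mhat m i, fun i => rfl, ?_, ?_, ?_, ?_⟩
  · intro i
    constructor
    · intro h
      refine ⟨?_, ?_⟩
      · rw [msig_succ hv]
        exact hat_lt hv i h
      · simp [mvec, h]
    · intro h
      simp [mvec, h]
  · -- existence of the e_n position
    have hnmem : (n : ℕ) ∈ m.map Prod.fst := by
      rw [← List.mem_toFinset, hv.2.1]
      exact Finset.mem_Icc.2 ⟨hn, le_refl n⟩
    obtain ⟨q, hq, hq1⟩ := List.mem_map.1 hnmem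
    obtain ⟨x, b⟩ := q
    simp only at hq1
    rw [hq1] at hq
    have hb : b = false := by
      cases hbb : b
      · rfl
      · rw [hbb] at hq
        exact absurd (hv.2.2.1 _ hq rfl) (lt_irrefl n)
    subst hb
    obtain ⟨i, hi1, hi2⟩ := exists_idx hv hq
    exact ⟨i, hi2, by rw [msig_succ hv, hi1]⟩
  · intro i k hhat hsig hik
    have hval : mval m i = n := by rw [← msig_succ hv i, hsig]
    have := pairwise_ment hv hv.2.2.2.1 hik
    exact this hval
  · intro i k hik h1 h2
    have hlt := pairwise_ment hv hv.2.2.2.2 hik h1 h2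
    have e1 := msig_coe hv i
    have e2 := msig_coe hv k
    have p1 := mval_pos hv i
    have p2 := mval_pos hv k
    have q1 : (ment m (i : ℕ)).1 = mval m i := rfl
    have q2 : (ment m (k : ℕ)).1 = mval m k := rfl
    rw [Fin.lt_def]
    omega


lemma mvec_apply_ne {n : ℕ} (hn : 1 ≤ n) {m : List (ℕ × Bool)} (k : Fin n) (a : Fin n)
    (h1 : a ≠ msig n m k) (h2 : a ≠ lastIdx hn) : mvec n m k a = 0 := by
  rw [mvec]
  cases mhat m (k : ℕ)
  · simp [stdVec, Pi.single_apply, h1]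
  · simp [hatVec_eq hn, Pi.single_apply, h1, h2]

lemma mvec_self {n : ℕ} (hn : 1 ≤ n) {m : List (ℕ × Bool)} (hv : ValidMark n m) (k : Fin n) :
    mvec n m k (msig n m k) = 1 := by
  rw [mvec]
  cases hh : mhat m (k : ℕ)
  · simp [stdVec, Pi.single_apply]
  · have := msig_ne_lastIdx hn hv k hh
    simp [hatVec_eq hn, Pi.single_apply, this]

lemma span_support {n : ℕ} (hn : 1 ≤ n) {m : List (ℕ × Bool)} (i : Fin n) {x : Fin n → ℂ}
    (hx : x ∈ mflagV n m i) (c : Fin n) (hc : ∀ k : Fin n, k ≤ i → msig n m k ≠ c)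
    (hcl : c ≠ lastIdx hn) : x c = 0 := by
  refine Submodule.span_induction ?_ ?_ ?_ ?_ hx
  · rintro w ⟨k, hk, rfl⟩
    exact mvec_apply_ne hn k c (fun h => hc k hk h.symm) hcl
  · rfl
  · intro y z _ _ hy hz
    simp [Pi.add_apply, hy, hz]
  · intro r y _ hy
    simp [Pi.smul_apply, hy]

lemma mflagV_eq_range {n : ℕ} {m : List (ℕ × Bool)} (i : Fin n) :
    mflagV n m i = Submodule.span ℂ
      (Set.range (mvec n m ∘ (Fin.castLE (i.isLt : (i : ℕ) + 1 ≤ n) : Fin ((i : ℕ) + 1) → Fin n))) := by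
  rw [mflagV]
  congr 1
  ext w
  constructor
  · rintro ⟨k, hk, rfl⟩
    have hk' : (k : ℕ) < (i : ℕ) + 1 := by
      have := Fin.le_def.1 hk
      omega
    exact ⟨⟨(k : ℕ), hk'⟩, rfl⟩
  · rintro ⟨k, rfl⟩
    refine ⟨Fin.castLE i.isLt k, ?_, rfl⟩
    rw [Fin.le_def]
    simp only [Fin.coe_castLE]
    exact Nat.lt_succ_iff.1 k.isLt

lemma lastvec_mem {n : ℕ} (hn : 1 ≤ n) {m : List (ℕ × Bool)} (hv : ValidMark n m) (i : Fin n)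
    (hmem : (Pi.single (lastIdx hn) 1 : Fin n → ℂ) ∈ mflagV n m i) :
    ∃ k : Fin n, k ≤ i ∧ msig n m k = lastIdx hn := by
  by_contra hcon
  push_neg at hcon
  rw [mflagV_eq_range] at hmem
  obtain ⟨c, hc⟩ := (Submodule.mem_span_range_iff_exists_fun ℂ).1 hmem
  have hle : ∀ k : Fin ((i : ℕ) + 1), Fin.castLE i.isLt k ≤ i := by
    intro k
    rw [Fin.le_def]
    simp only [Fin.coe_castLE]
    exact Nat.lt_succ_iff.1 k.isLt
  have hczero : ∀ k : Fin ((i : ℕ) + 1), c k = 0 := by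
    intro k0
    have ha0 : msig n m (Fin.castLE i.isLt k0) ≠ lastIdx hn := hcon _ (hle k0)
    have := congrFun hc (msig n m (Fin.castLE i.isLt k0))
    rw [Finset.sum_apply] at this
    rw [Finset.sum_eq_single k0] at this
    · simp only [Pi.smul_apply, Function.comp_apply, smul_eq_mul] at this
      rw [mvec_self hn hv] at this
      rw [Pi.single_apply, if_neg (fun hh => ha0 (by
        exact hh ▸ rfl))] at this
      simpa using this
    · intro b _ hbk
      simp only [Pi.smul_apply, Function.comp_apply, smul_eq_mul]
      rw [mvec_apply_ne hn _ _ (fun hh => hbk (by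
          have := msig_injective hv hh.symm
          exact Fin.castLE_injective _ this)) ha0]
      simp
    · intro hk0
      simp at hk0
  rw [Finset.sum_congr rfl (fun k _ => by rw [hczero k, zero_smul])] at hc
  have := congrFun hc (lastIdx hn)
  simp [Pi.single_apply] at this

lemma ment_pair {m : List (ℕ × Bool)} (i : ℕ) : ment m i = (mval m i, mhat m i) := rfl

lemma mvec_congr {n : ℕ} {m m' : List (ℕ × Bool)} (k : Fin n)
    (e : ment m (k : ℕ) = ment m' (k : ℕ)) :
    mvec n m k = mvec n m' k ∧ msig n m k = msig n m' k := by
  unfold mvec msig mhat mval ment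
  unfold ment at e
  rw [e]
  exact ⟨rfl, rfl⟩

lemma hat_contra {n : ℕ} (hn : 1 ≤ n) {m m' : List (ℕ × Bool)}
    (hv : ValidMark n m) (hv' : ValidMark n m')
    (h : ∀ j : Fin n, mflagV n m j = mflagV n m' j) (i : Fin n)
    (IH : ∀ k : Fin n, k < i → ment m (k : ℕ) = ment m' (k : ℕ))
    (ha : msig n m i = msig n m' i)
    (h1 : mhat m (i : ℕ) = false) (h2 : mhat m' (i : ℕ) = true) : False := by
  have hσ'l : msig n m' i ≠ lastIdx hn := msig_ne_lastIdx hn hv' i h2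
  have hvi : mvec n m i = Pi.single (msig n m i) 1 := by
    rw [mvec, h1]
    rfl
  have hvi' : mvec n m' i = Pi.single (msig n m' i) 1 + Pi.single (lastIdx hn) 1 := by
    rw [mvec, h2]
    exact hatVec_eq hn _
  have hmem1 : mvec n m i ∈ mflagV n m i := Submodule.subset_span ⟨i, le_refl i, rfl⟩
  have hmem2 : mvec n m' i ∈ mflagV n m i := by
    rw [h i]
    exact Submodule.subset_span ⟨i, le_refl i, rfl⟩
  have hmemu : (Pi.single (lastIdx hn) 1 : Fin n → ℂ) ∈ mflagV n m i := by
    have := Submodule.sub_mem _ hmem2 hmem1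
    rwa [hvi, hvi', ha, add_sub_cancel_left] at this
  obtain ⟨k, hk, hkl⟩ := lastvec_mem hn hv i hmemu
  have hki : k ≠ i := by
    intro hh
    rw [hh] at hkl
    exact (ha ▸ hσ'l) hkl
  have hklt : k < i := lt_of_le_of_ne hk hki
  -- entry k is (n, false)
  have hvalk : mval m (k : ℕ) = n := by
    have := msig_succ hv k
    rw [hkl] at this
    simp only [lastIdx] at this
    omega
  have hhatk : mhat m (k : ℕ) = false := by
    cases hh : mhat m (k : ℕ)
    · rfl
    · have := hat_lt hv k hh
      omega
  have hment' : ment m' (k : ℕ) = ((n : ℕ), false) := by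
    rw [← IH k hklt, ment_pair, hvalk, hhatk]
  have hR4 := pairwise_ment hv' hv'.2.2.2.1 hklt
  rw [hment'] at hR4
  have := hR4 rfl
  rw [ment_pair] at this
  simp only at this
  rw [h2] at this
  simp at this

lemma mflag_word_inj {n : ℕ} (hn : 1 ≤ n) {m m' : List (ℕ × Bool)}
    (hv : ValidMark n m) (hv' : ValidMark n m')
    (h : ∀ j : Fin n, mflagV n m j = mflagV n m' j) : m = m' := by
  have hment : ∀ j : ℕ, ∀ hj : j < n, ment m j = ment m' j := by
    intro j
    induction j using Nat.strong_induction_on with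
    | _ j IHj =>
      intro hj
      set i : Fin n := ⟨j, hj⟩ with hidef
      have IH : ∀ k : Fin n, k < i → ment m (k : ℕ) = ment m' (k : ℕ) := by
        intro k hk
        exact IHj (k : ℕ) (Fin.lt_def.1 hk) k.isLt
      -- the claims about σ
      have claim : ∀ (m₁ m₂ : List (ℕ × Bool)) (hv₁ : ValidMark n m₁) (hv₂ : ValidMark n m₂),
          (∀ j : Fin n, mflagV n m₁ j = mflagV n m₂ j) →
          (∀ k : Fin n, k < i → msig n m₁ k = msig n m₂ k) →
          msig n m₂ i = lastIdx hn ∨ msig n m₂ i = msig n m₁ i := by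
        intro m₁ m₂ hv₁ hv₂ heq hs
        by_cases hlast : msig n m₂ i = lastIdx hn
        · exact Or.inl hlast
        by_cases hsame : msig n m₂ i = msig n m₁ i
        · exact Or.inr hsame
        exfalso
        have hmem : mvec n m₂ i ∈ mflagV n m₁ i := by
          rw [heq i]
          exact Submodule.subset_span ⟨i, le_refl i, rfl⟩
        have hzero : mvec n m₂ i (msig n m₂ i) = 0 := by
          refine span_support hn i hmem _ ?_ hlast
          intro k hk hkk
          rcases eq_or_lt_of_le hk with rfl | hklt
          · exact hsame (hkk.symm)
          · rw [hs k hklt] at hkk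
            have := msig_injective hv₂ hkk
            rw [this] at hklt
            exact lt_irrefl _ hklt
        rw [mvec_self hn hv₂] at hzero
        exact one_ne_zero hzero
      have hsIH : ∀ k : Fin n, k < i → msig n m k = msig n m' k :=
        fun k hk => (mvec_congr k (IH k hk)).2
      have c1 := claim m m' hv hv' h hsIH
      have c2 := claim m' m hv' hv (fun j => (h j).symm) (fun k hk => (hsIH k hk).symm)
      have hσ : msig n m i = msig n m' i := by
        rcases c1 with c1 | c1
        · rcases c2 with c2 | c2
          · rw [c1, c2]
          · exact c2
        · exact c1.symm
      -- now compare hats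
      have hval : mval m (i : ℕ) = mval m' (i : ℕ) := by
        have e1 := msig_succ hv i
        have e2 := msig_succ hv' i
        have := congrArg Fin.val hσ
        omega
      cases hh1 : mhat m (i : ℕ) <;> cases hh2 : mhat m' (i : ℕ)
      · rw [ment_pair, ment_pair, hval, hh1, hh2]
      · exact absurd (hat_contra hn hv hv' h i IH hσ hh1 hh2) not_false
      · exact absurd (hat_contra hn hv' hv (fun j => (h j).symm) i
          (fun k hk => (IH k hk).symm) hσ.symm hh2 hh1) not_false
      · rw [ment_pair, ment_pair, hval, hh1, hh2]
  have hl : m.length = m'.length := by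
    rw [length_of_valid hv, length_of_valid hv']
  refine List.ext_get hl ?_
  intro j h1 h2
  have hjn : j < n := by rw [← length_of_valid hv]; exact h1
  have e1 : m.get ⟨j, h1⟩ = ment m j := by
    rw [ment, List.getD_eq_getElem m _ h1]
    rfl
  have e2 : m'.get ⟨j, h2⟩ = ment m' j := by
    rw [ment, List.getD_eq_getElem m' _ h2]
    rfl
  rw [e1, e2, hment j hjn]


lemma flag_ext {n : ℕ} {F G : CompleteFlag n} (h : ∀ i, F.V i = G.V i) : F = G := by
  cases F
  cases G
  simp only [CompleteFlag.mk.injEq]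
  exact funext h

section surj
variable {n : ℕ} (hn : 1 ≤ n) (F : CompleteFlag n)
  (v : Fin n → (Fin n → ℂ)) (j : Fin n → Fin n) (ishat : Fin n → Bool)
  (hspan : ∀ i : Fin n, F.V i = Submodule.span ℂ {w | ∃ k : Fin n, k ≤ i ∧ w = v k})
  (hvec : ∀ i : Fin n,
      (ishat i = true → ((j i : ℕ) + 1 < n ∧ v i = hatVec n (j i))) ∧
      (ishat i = false → v i = stdVec n (j i)))
  (hex : ∃ i : Fin n, ishat i = false ∧ (j i : ℕ) + 1 = n)
  (hafter : ∀ i k : Fin n, ishat i = false → (j i : ℕ) + 1 = n → i < k → ishat k = false)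
  (hdec : ∀ i k : Fin n, i < k → ishat i = true → ishat k = true → j k < j i)

omit hvec in
include hn hspan in
lemma linIndep_wit : LinearIndependent ℂ v := by
  have hlset : {w | ∃ k : Fin n, k ≤ (lastIdx hn : Fin n) ∧ w = v k} = Set.range v := by
    ext w
    constructor
    · rintro ⟨k, _, rfl⟩
      exact ⟨k, rfl⟩
    · rintro ⟨k, rfl⟩
      refine ⟨k, ?_, rfl⟩
      rw [Fin.le_def]
      simp only [lastIdx]
      have := k.isLt
      omega
  have hdim := F.dimV (lastIdx hn)
  rw [hspan (lastIdx hn), hlset] at hdim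
  have hcard : Fintype.card (Fin n) = Set.finrank ℂ (Set.range v) := by
    rw [Fintype.card_fin, Set.finrank, hdim]
    simp only [lastIdx]
    omega
  exact linearIndependent_iff_card_eq_finrank_span.2 hcard

include hn hspan hvec hex in
lemma j_inj : Function.Injective j := by
  have hli := linIndep_wit hn F v hspan
  have key : ∀ i i' : Fin n, j i = j i' → ishat i = true → ishat i' = false → False := by
    intro i i' hjj h1 h2
    obtain ⟨i₀, hi₀f, hi₀n⟩ := hex
    have hvi : v i = hatVec n (j i) := ((hvec i).1 h1).2
    have hlt : (j i : ℕ) + 1 < n := ((hvec i).1 h1).1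
    have hvi' : v i' = stdVec n (j i') := (hvec i').2 h2
    have hvi₀ : v i₀ = stdVec n (j i₀) := (hvec i₀).2 hi₀f
    have hj₀ : j i₀ = lastIdx hn := by
      apply Fin.ext
      simp only [lastIdx]
      omega
    have hii₀ : i ≠ i₀ := by
      intro hh
      rw [hh, hi₀f] at h1
      exact Bool.false_ne_true h1
    have hii' : i ≠ i' := by
      intro hh
      rw [hh, h2] at h1
      exact Bool.false_ne_true h1
    have hi'i₀ : i' ≠ i₀ := by
      intro hh
      rw [hh] at hjj
      rw [hjj] at hlt
      omega
    have hrel : v i - v i' - v i₀ = 0 := by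
      rw [hvi, hvi', hvi₀, hatVec_eq hn, hjj, hj₀]
      show Pi.single (j i') 1 + Pi.single (lastIdx hn) 1 -
        Pi.single (j i') 1 - Pi.single (lastIdx hn) 1 = 0
      abel
    set g : Fin n → ℂ := fun k =>
      (if k = i then 1 else 0) - (if k = i' then 1 else 0) - (if k = i₀ then 1 else 0)
      with hg
    have hsum : ∑ k : Fin n, g k • v k = 0 := by
      simp only [hg, sub_smul, Finset.sum_sub_distrib, ite_smul, one_smul, zero_smul,
        Finset.sum_ite_eq', Finset.mem_univ, if_true]
      exact hrel
    have := Fintype.linearIndependent_iff.1 hli g hsum i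
    rw [hg] at this
    simp only [if_pos rfl, if_neg hii', if_neg hii₀] at this
    norm_num at this
  intro i i' hjj
  by_contra hne
  cases h1 : ishat i <;> cases h2 : ishat i'
  · have : v i = v i' := by
      rw [(hvec i).2 h1, (hvec i').2 h2, hjj]
    exact hne (hli.injective this)
  · exact key i' i hjj.symm h2 h1
  · exact key i i' hjj h1 h2
  · have : v i = v i' := by
      rw [((hvec i).1 h1).2, ((hvec i').1 h2).2, hjj]
    exact hne (hli.injective this)

/-- the marked word associated to standard-form data. -/
def witWord (j : Fin n → Fin n) (ishat : Fin n → Bool) : List (ℕ × Bool) :=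
  List.ofFn (fun i : Fin n => ((j i : ℕ) + 1, ishat i))

lemma ment_witWord (i : Fin n) : ment (witWord j ishat) (i : ℕ) = ((j i : ℕ) + 1, ishat i) := by
  rw [ment, witWord, List.getD_eq_getElem _ _ (by simp), List.getElem_ofFn]

include hn hspan hvec hex hafter hdec in
lemma valid_witWord : ValidMark n (witWord j ishat) := by
  have hjinj := j_inj hn F v j ishat hspan hvec hex
  have hfinj : Function.Injective (fun i : Fin n => (j i : ℕ) + 1) := by
    intro a b hab
    simp only at hab
    exact hjinj (Fin.ext (by omega))
  refine ⟨?_, ?_, ?_, ?_, ?_⟩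
  · rw [witWord, List.map_ofFn]
    exact List.nodup_ofFn.2 hfinj
  · rw [witWord, List.map_ofFn]
    ext x
    rw [List.mem_toFinset, List.mem_ofFn]
    simp only [Function.comp_apply, Set.mem_range, Finset.mem_Icc]
    constructor
    · rintro ⟨i, rfl⟩
      have := (j i).isLt
      omega
    · rintro ⟨h1, h2⟩
      have hsurj : Function.Surjective j := Finite.surjective_of_injective hjinj
      obtain ⟨i, hi⟩ := hsurj ⟨x - 1, by omega⟩
      exact ⟨i, by rw [hi]; simp; omega⟩
  · intro p hp hpt
    rw [witWord, List.mem_ofFn] at hp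
    obtain ⟨i, hi⟩ := hp
    rw [← hi] at hpt ⊢
    simp only at hpt ⊢
    exact ((hvec i).1 hpt).1
  · rw [witWord, List.pairwise_ofFn]
    intro a b hab h1
    simp only at h1 ⊢
    have hha : ishat a = false := by
      cases hh : ishat a
      · rfl
      · have := ((hvec a).1 hh).1
        omega
    exact hafter a b hha (by omega) hab
  · rw [witWord, List.pairwise_ofFn]
    intro a b hab h1 h2
    simp only at h1 h2 ⊢
    have := hdec a b hab h1 h2
    rw [Fin.lt_def] at this
    omega

include hspan hvec hex hafter hdec in
lemma mflag_witWord : mflag hn (valid_witWord hn F v j ishat hspan hvec hex hafter hdec) = F := by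
  set hv' := valid_witWord hn F v j ishat hspan hvec hex hafter hdec
  apply flag_ext
  intro i
  show mflagV n (witWord j ishat) i = F.V i
  have hmv : ∀ k : Fin n, mvec n (witWord j ishat) k = v k := by
    intro k
    have e1 : mval (witWord j ishat) (k : ℕ) = (j k : ℕ) + 1 := by
      rw [mval, ment_witWord]
    have e2 : mhat (witWord j ishat) (k : ℕ) = ishat k := by
      rw [mhat, ment_witWord]
    have e3 : msig n (witWord j ishat) k = j k := by
      apply Fin.ext
      rw [msig_coe hv' k, e1]
      omega
    rw [mvec, e2, e3]
    cases hh : ishat k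
    · exact ((hvec k).2 hh).symm
    · exact (((hvec k).1 hh).2).symm
  rw [mflagV, hspan i]
  congr 1
  ext w
  constructor
  · rintro ⟨k, hk, rfl⟩
    exact ⟨k, hk, hmv k⟩
  · rintro ⟨k, hk, rfl⟩
    exact ⟨k, hk, (hmv k).symm⟩
end surj

/-- the equivalence between valid marked words and standard flags. -/
noncomputable def equivMarkFlag {n : ℕ} (hn : 1 ≤ n) :
    {m : List (ℕ × Bool) // ValidMark n m} ≃ {F : CompleteFlag n // IsStdFlag n F} := by
  refine Equiv.ofBijective (fun m => ⟨mflag hn m.2, mflag_std hn m.2⟩) ⟨?_, ?_⟩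
  · rintro ⟨m, hm⟩ ⟨m', hm'⟩ h
    simp only [Subtype.mk.injEq] at h ⊢
    have hV : ∀ i, mflagV n m i = mflagV n m' i := by
      intro i
      exact congrFun (congrArg CompleteFlag.V h) i
    exact mflag_word_inj hn hm hm' hV
  · rintro ⟨F, hF⟩
    obtain ⟨v, j, ishat, hspan, hvec, hex, hafter, hdec⟩ := hF
    refine ⟨⟨witWord j ishat, valid_witWord hn F v j ishat hspan hvec hex hafter hdec⟩, ?_⟩
    simp only [Subtype.mk.injEq]
    exact Subtype.ext (mflag_witWord hn F v j ishat hspan hvec hex hafter hdec)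

end St14

/-- There is a bijection between `PIL(n)` and the set of complete flags
in `ℂⁿ` in standard form. -/
theorem statement14 (n : ℕ) (hn : 1 ≤ n) :
    Nonempty ({P : Finset (List ℕ) // IsPIL (Finset.Icc 1 n) P} ≃
      {F : CompleteFlag n // IsStdFlag n F}) :=
  ⟨((St14.equivPILOP hn).symm.trans (St14.equivOPMark hn)).trans (St14.equivMarkFlag hn)⟩

end
end
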